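/- arXiv:1911.01726 — 7 statements merged into one kernel-verified Lean document; each statement's English description precedes it below -/
import Mathlib

section
/- Let k ≥ 2 and n ≥ k be integers and let S^k be the unit sphere in ℝ^{k+1}. Then the generalized configuration space W_{k,n}(S^k) is path-connected and is not compact. -/
noncomputable section

/-- The generalized configuration space `W_{k,n}(M)` of `n`-tuples of elements of `M`
such that any `k` of the entries are linearly independent, as a subset of `V^n`
(with the subspace topology). -/
def genConfig {V : Type*} [AddCommGroup V] [Module ℝ V] (k n : ℕ) (M : Set V) :
    Set (Fin n → V) :=
  {p | (∀ i, p i ∈ M) ∧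
    ∀ s : Finset (Fin n), s.card = k → LinearIndependent ℝ (fun i : s => p i.val)}


open Finset Submodule Polynomial Function Set

variable {k : ℕ}

/-- moment curve in ℝ^{k+1} -/
def mc (k : ℕ) (t : ℝ) : EuclideanSpace ℝ (Fin (k+1)) := WithLp.toLp 2 (fun j => t ^ (j : ℕ))

lemma mc_ne_zero (t : ℝ) : mc k t ≠ 0 := by
  intro h
  have := congrArg (fun x : EuclideanSpace ℝ (Fin (k+1)) => x 0) h
  simp [mc] at this

lemma mc_mem_finite (W : Submodule ℝ (EuclideanSpace ℝ (Fin (k+1)))) (hW : W ≠ ⊤) :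
    {t : ℝ | mc k t ∈ W}.Finite := by
  have hbot : Wᗮ ≠ ⊥ := by
    simpa [Submodule.orthogonal_eq_bot_iff] using hW
  obtain ⟨v, hvW, hv0⟩ := Submodule.exists_mem_ne_zero_of_ne_bot hbot
  set Q : Polynomial ℝ := ∑ j : Fin (k+1), Polynomial.C (v j) * Polynomial.X ^ (j:ℕ) with hQdef
  have hcoeff : ∀ j : Fin (k+1), Q.coeff (j:ℕ) = v j := by
    intro j
    rw [hQdef, Polynomial.finset_sum_coeff]
    simp only [Polynomial.coeff_C_mul, Polynomial.coeff_X_pow]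
    rw [Finset.sum_eq_single j] <;> simp +contextual [Fin.val_eq_val, eq_comm]
  have hQ0 : Q ≠ 0 := by
    intro h
    apply hv0
    ext j
    have := hcoeff j
    rw [h] at this
    simpa using this.symm
  apply (Polynomial.finite_setOf_isRoot hQ0).subset
  intro t ht
  have hin : (inner ℝ (mc k t) v : ℝ) = 0 := (Submodule.mem_orthogonal W v).1 hvW _ ht
  have : Q.eval t = 0 := by
    rw [hQdef]
    rw [Polynomial.eval_finset_sum]
    simp only [Polynomial.eval_mul, Polynomial.eval_C, Polynomial.eval_pow, Polynomial.eval_X]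
    rw [← hin, PiLp.inner_apply]
    simp [mc, mul_comm]
  exact this

lemma mc_linearIndependent {ι : Type*} [Fintype ι] (t : ι → ℝ) (ht : Function.Injective t)
    (hcard : Fintype.card ι ≤ k + 1) : LinearIndependent ℝ (fun i => mc k (t i)) := by
  rw [Fintype.linearIndependent_iff]
  intro g hg i
  classical
  set P : Polynomial ℝ := ∏ j ∈ Finset.univ.erase i, (Polynomial.X - Polynomial.C (t j)) with hP
  have hdeg : P.natDegree < k + 1 := by
    have h1 : P.natDegree ≤ ∑ j ∈ Finset.univ.erase i, (Polynomial.X - Polynomial.C (t j)).natDegree :=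
      Polynomial.natDegree_prod_le _ _
    have h2 : ∑ j ∈ Finset.univ.erase i, (Polynomial.X - Polynomial.C (t j)).natDegree
        = (Finset.univ.erase i).card := by
      simp [Polynomial.natDegree_X_sub_C]
    have h3 : (Finset.univ.erase i).card < Fintype.card ι := by
      rw [Finset.card_erase_of_mem (Finset.mem_univ i)]
      simpa using Fintype.card_pos_iff.2 ⟨i⟩
    omega
  have hc : ∀ j : Fin (k+1), ∑ i', g i' * t i' ^ (j:ℕ) = 0 := by
    intro j
    have h := congrArg (EuclideanSpace.proj (𝕜 := ℝ) j) hg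
    rw [map_sum] at h
    simpa [mc] using h
  have key : ∀ x : ℝ, P.eval x = ∑ j : Fin (k+1), P.coeff (j:ℕ) * x ^ (j:ℕ) := by
    intro x
    rw [Polynomial.eval_eq_sum_range' hdeg x, ← Fin.sum_univ_eq_sum_range]
  have h0 : ∑ i', g i' * P.eval (t i') = 0 := by
    simp_rw [key, Finset.mul_sum]
    rw [Finset.sum_comm]
    refine Finset.sum_eq_zero fun j _ => ?_
    have : ∑ i', g i' * (P.coeff (j:ℕ) * t i' ^ (j:ℕ))
        = P.coeff (j:ℕ) * ∑ i', g i' * t i' ^ (j:ℕ) := by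
      rw [Finset.mul_sum]; exact Finset.sum_congr rfl fun _ _ => by ring
    rw [this, hc j, mul_zero]
  have hsingle : ∑ i', g i' * P.eval (t i') = g i * P.eval (t i) := by
    refine Finset.sum_eq_single i (fun i' _ hne => ?_) (by simp)
    have : P.eval (t i') = 0 := by
      rw [hP, Polynomial.eval_prod]
      exact Finset.prod_eq_zero (Finset.mem_erase.2 ⟨hne, Finset.mem_univ _⟩) (by simp)
    rw [this, mul_zero]
  have hPti : P.eval (t i) ≠ 0 := by
    rw [hP, Polynomial.eval_prod]
    refine Finset.prod_ne_zero_iff.2 fun j hj => ?_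
    have : t i ≠ t j := fun h => (Finset.mem_erase.1 hj).1 (ht h).symm
    simpa [sub_ne_zero] using this
  have := h0 ▸ hsingle
  exact (mul_eq_zero.1 this.symm).resolve_right hPti


def nmc (k : ℕ) (t : ℝ) : EuclideanSpace ℝ (Fin (k+1)) := ‖mc k t‖⁻¹ • mc k t

lemma norm_mc_ne_zero (t : ℝ) : ‖mc k t‖ ≠ 0 := norm_ne_zero_iff.2 (mc_ne_zero t)

lemma nmc_mem_sphere (t : ℝ) : nmc k t ∈ Metric.sphere (0 : EuclideanSpace ℝ (Fin (k+1))) 1 := by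
  rw [mem_sphere_zero_iff_norm, nmc, norm_smul]
  simp [norm_mc_ne_zero t, inv_mul_cancel₀]

lemma nmc_mem_iff (t : ℝ) (W : Submodule ℝ (EuclideanSpace ℝ (Fin (k+1)))) :
    nmc k t ∈ W ↔ mc k t ∈ W :=
  W.smul_mem_iff (inv_ne_zero (norm_mc_ne_zero t))

lemma nmc_linearIndependent {ι : Type*} [Fintype ι] (t : ι → ℝ) (ht : Function.Injective t)
    (hcard : Fintype.card ι ≤ k + 1) : LinearIndependent ℝ (fun i => nmc k (t i)) := by
  have h := mc_linearIndependent t ht hcard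
  have := h.units_smul (fun i => Units.mk0 (‖mc k (t i)‖⁻¹) (inv_ne_zero (norm_mc_ne_zero _)))
  convert this using 1; funext i; simp [nmc, Units.smul_def]

variable {ι V : Type*} [DecidableEq ι] [AddCommGroup V] [Module ℝ V]

omit [DecidableEq ι] in
lemma finset_indep_iff_set {f : ι → V} {s : Finset ι} :
    LinearIndependent ℝ (fun x : s => f x.val) ↔
      LinearIndependent ℝ (fun x : (↑s : Set ι) => f x.val) := Iff.rfl

omit [DecidableEq ι] in
lemma finset_indep_mono {f : ι → V} {s S : Finset ι} (hSs : S ⊆ s)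
    (h : LinearIndependent ℝ (fun x : s => f x.val)) :
    LinearIndependent ℝ (fun x : S => f x.val) := by
  rw [finset_indep_iff_set] at h ⊢
  exact h.comp (Set.inclusion (by exact_mod_cast hSs)) (Set.inclusion_injective _)

lemma finset_indep_insert {f : ι → V} {s : Finset ι} {i : ι} (h : i ∉ s) :
    LinearIndependent ℝ (fun x : (insert i s : Finset ι) => f x.val) ↔
      (LinearIndependent ℝ (fun x : s => f x.val)) ∧ f i ∉ span ℝ (f '' ↑s) := by
  rw [finset_indep_iff_set, Finset.coe_insert]
  exact linearIndepOn_insert (by simpa using h)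

variable {k n : ℕ} {M : Set V}

lemma genConfig_indep_le {p : Fin n → V} (hp : p ∈ genConfig k n M) (hkn : k ≤ n)
    {S : Finset (Fin n)} (hS : S.card ≤ k) :
    LinearIndependent ℝ fun x : S => p x.val := by
  obtain ⟨s, hSs, hsc⟩ := Finset.exists_superset_card_eq hS (by simpa using hkn)
  exact finset_indep_mono hSs (hp.2 s hsc)

lemma notMem_span_of_genConfig {p : Fin n → V} (hk1 : 1 ≤ k)
    (hp : p ∈ genConfig k n M) {i : Fin n} {S : Finset (Fin n)}
    (hS : S.card = k - 1) (hiS : i ∉ S) : p i ∉ span ℝ (p '' ↑S) := by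
  classical
  have hins : (insert i S).card = k := by
    rw [Finset.card_insert_of_notMem hiS]; omega
  exact ((finset_indep_insert hiS).1 (hp.2 _ hins)).2

lemma indep_update_mem {p : Fin n → V} (hp : p ∈ genConfig k n M) {s : Finset (Fin n)}
    (hs : s.card = k) {i : Fin n} (his : i ∈ s) (x : V)
    (hx : x ∉ span ℝ (p '' ↑(s.erase i))) :
    LinearIndependent ℝ fun j : s => (Function.update p i x) j.val := by
  classical
  have hiS : i ∉ s.erase i := Finset.notMem_erase i s
  rw [show s = insert i (s.erase i) from (Finset.insert_erase his).symm]
  refine (finset_indep_insert hiS).2 ⟨?_, ?_⟩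
  · have heq : (fun j : (s.erase i : Finset (Fin n)) => Function.update p i x j.val)
        = fun j : (s.erase i : Finset (Fin n)) => p j.val :=
      funext fun j => Function.update_of_ne (Finset.ne_of_mem_erase j.2) _ _
    rw [heq]
    exact finset_indep_mono (Finset.erase_subset _ _) (hp.2 s hs)
  · rw [Function.update_self]
    have himg : Function.update p i x '' ↑(s.erase i) = p '' ↑(s.erase i) :=
      Set.image_congr fun j hj => Function.update_of_ne (Finset.ne_of_mem_erase hj) _ _
    rw [himg]
    exact hx

lemma indep_update_not_mem {p : Fin n → V} (hp : p ∈ genConfig k n M) {s : Finset (Fin n)}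
    (hs : s.card = k) {i : Fin n} (his : i ∉ s) (x : V) :
    LinearIndependent ℝ fun j : s => (Function.update p i x) j.val := by
  have heq : (fun j : s => Function.update p i x j.val) = fun j : s => p j.val :=
    funext fun j => Function.update_of_ne (by rintro rfl; exact his j.2) _ _
  rw [heq]
  exact hp.2 s hs
variable {k n : ℕ}

lemma span_ne_top_of_card_le (T : Finset (EuclideanSpace ℝ (Fin (k+1)))) (hT : T.card ≤ k) :
    span ℝ (↑T : Set (EuclideanSpace ℝ (Fin (k+1)))) ≠ ⊤ := by
  intro h
  have h1 : Set.finrank ℝ (↑T : Set (EuclideanSpace ℝ (Fin (k+1)))) ≤ T.card :=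
    finrank_span_finset_le_card T
  rw [Set.finrank, h, finrank_top] at h1
  rw [finrank_euclideanSpace_fin] at h1
  omega

lemma span_insert_ne_top (hk1 : 1 ≤ k) (a : EuclideanSpace ℝ (Fin (k+1)))
    (p : Fin n → EuclideanSpace ℝ (Fin (k+1))) (S : Finset (Fin n)) (hS : S.card ≤ k - 1) :
    span ℝ (insert a (p '' ↑S)) ≠ ⊤ := by
  classical
  have hins : insert a (p '' ↑S) = (↑(insert a (S.image p)) : Set _) := by simp
  rw [hins]
  apply span_ne_top_of_card_le
  have := Finset.card_insert_le a (S.image p)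
  have := Finset.card_image_le (f := p) (s := S)
  omega

lemma span_pair_ne_top (hk2 : 2 ≤ k) (a b : EuclideanSpace ℝ (Fin (k+1))) :
    span ℝ ({a, b} : Set (EuclideanSpace ℝ (Fin (k+1)))) ≠ ⊤ := by
  classical
  have hins : ({a, b} : Set (EuclideanSpace ℝ (Fin (k+1)))) = (↑({a, b} : Finset _) : Set _) := by
    simp
  rw [hins]
  apply span_ne_top_of_card_le
  have := Finset.card_insert_le a ({b} : Finset (EuclideanSpace ℝ (Fin (k+1))))
  simp at this ⊢
  omega

lemma joinedIn_of_segment {F : Set (EuclideanSpace ℝ (Fin (k+1)))}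
    {a b : EuclideanSpace ℝ (Fin (k+1))}
    (h : ∀ t : ℝ, t ∈ Set.Icc (0:ℝ) 1 → (1-t) • a + t • b ∈ F) : JoinedIn F a b := by
  refine ⟨⟨⟨fun t => (1 - (t:ℝ)) • a + (t:ℝ) • b, by continuity⟩, by simp, by simp⟩,
    fun t => h t ⟨t.2.1, t.2.2⟩⟩
lemma joinedIn_update (hk2 : 2 ≤ k) (hkn : k ≤ n)
    (p : Fin n → EuclideanSpace ℝ (Fin (k+1)))
    (hp : p ∈ genConfig k n (Metric.sphere (0 : EuclideanSpace ℝ (Fin (k+1))) 1)) (i : Fin n)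
    (y : EuclideanSpace ℝ (Fin (k+1)))
    (hq : Function.update p i y ∈ genConfig k n (Metric.sphere (0 : EuclideanSpace ℝ (Fin (k+1))) 1)) :
    JoinedIn (genConfig k n (Metric.sphere (0 : EuclideanSpace ℝ (Fin (k+1))) 1))
      p (Function.update p i y) := by
  classical
  have hk1 : 1 ≤ k := by omega
  have hpiS : ∀ S : Finset (Fin n), S.card = k - 1 → i ∉ S → p i ∉ span ℝ (p '' ↑S) :=
    fun S hS hiS => notMem_span_of_genConfig hk1 hp hS hiS
  have himgS : ∀ S : Finset (Fin n), i ∉ S → Function.update p i y '' ↑S = p '' ↑S := by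
    intro S hiS
    exact Set.image_congr fun j hj => Function.update_of_ne (by rintro rfl; exact hiS hj) _ _
  have hyS : ∀ S : Finset (Fin n), S.card = k - 1 → i ∉ S → y ∉ span ℝ (p '' ↑S) := by
    intro S hS hiS
    have h1 := notMem_span_of_genConfig hk1 hq hS hiS
    rw [Function.update_self, himgS S hiS] at h1
    exact h1
  have hpi_n : ‖p i‖ = 1 := by
    have := hp.1 i; rwa [mem_sphere_zero_iff_norm] at this
  have hy_n : ‖y‖ = 1 := by
    have := hq.1 i; rw [Function.update_self] at this; rwa [mem_sphere_zero_iff_norm] at this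
  -- choose the generic auxiliary point z on the moment curve
  have hBad : ((⋃ S ∈ {S : Finset (Fin n) | S.card = k-1 ∧ i ∉ S},
      ({t : ℝ | mc k t ∈ span ℝ (insert (p i) (p '' ↑S))} ∪
        {t : ℝ | mc k t ∈ span ℝ (insert y (p '' ↑S))}))
      ∪ {t : ℝ | mc k t ∈ span ℝ ({p i, y} : Set _)}).Finite := by
    apply Set.Finite.union
    · refine Set.Finite.biUnion (Set.toFinite _) fun S hS => ?_
      obtain ⟨hS1, hS2⟩ := hS
      exact (mc_mem_finite _ (span_insert_ne_top hk1 _ p S (le_of_eq hS1))).union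
        (mc_mem_finite _ (span_insert_ne_top hk1 _ p S (le_of_eq hS1)))
    · exact mc_mem_finite _ (span_pair_ne_top hk2 _ _)
  obtain ⟨t₀, ht₀⟩ := hBad.infinite_compl.nonempty
  rw [Set.mem_compl_iff, Set.mem_union, not_or] at ht₀
  obtain ⟨ht₀1, hz3⟩ := ht₀
  rw [Set.mem_setOf_eq] at hz3
  have hz12 : ∀ S : Finset (Fin n), S.card = k - 1 → i ∉ S →
      mc k t₀ ∉ span ℝ (insert (p i) (p '' ↑S)) ∧
      mc k t₀ ∉ span ℝ (insert y (p '' ↑S)) := by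
    intro S hS hiS
    have : t₀ ∉ ({t : ℝ | mc k t ∈ span ℝ (insert (p i) (p '' ↑S))} ∪
        {t : ℝ | mc k t ∈ span ℝ (insert y (p '' ↑S))}) := by
      intro hmem
      exact ht₀1 (Set.mem_biUnion (show S ∈ {S : Finset (Fin n) | S.card = k-1 ∧ i ∉ S} from ⟨hS, hiS⟩) hmem)
    rw [Set.mem_union, not_or] at this
    exact this
  set z := mc k t₀ with hzdef
  clear_value z
  set U : Set (EuclideanSpace ℝ (Fin (k+1))) :=
    {x | x ≠ 0 ∧ ∀ S : Finset (Fin n), S.card = k-1 → i ∉ S → x ∉ span ℝ (p '' ↑S)} with hUdef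
  -- first segment : p i to z
  have J1 : JoinedIn U (p i) z := by
    apply joinedIn_of_segment
    intro t ht
    constructor
    · intro h0
      rcases eq_or_ne t 0 with rfl | htne
      · simp only [sub_zero, one_smul, zero_smul, add_zero] at h0
        rw [h0] at hpi_n; simp at hpi_n
      · apply hz3
        have hzz : z = (-(t⁻¹ * (1-t))) • p i := by
          have h2 : t⁻¹ • ((1 - t) • p i + t • z) = t⁻¹ • (0 : EuclideanSpace ℝ (Fin (k+1))) := by
            rw [h0]
          rw [smul_add, smul_smul, smul_smul, inv_mul_cancel₀ htne, one_smul, smul_zero] at h2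
          rw [neg_smul]
          have h3 : z + (t⁻¹ * (1 - t)) • p i = 0 := (add_comm _ _).trans h2
          exact eq_neg_of_add_eq_zero_left h3
        rw [hzz]
        exact smul_mem _ _ (subset_span (by simp))
    · intro S hS hiS hmem
      rcases eq_or_ne t 0 with rfl | htne
      · apply hpiS S hS hiS
        simpa using hmem
      · apply (hz12 S hS hiS).1
        have hz_eq : z = t⁻¹ • ((1-t) • p i + t • z) - (t⁻¹ * (1-t)) • p i := by
          rw [smul_add, smul_smul, smul_smul, inv_mul_cancel₀ htne, one_smul]
          module
        rw [hz_eq]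
        refine sub_mem (smul_mem _ _ (span_mono (Set.subset_insert _ _) hmem))
          (smul_mem _ _ (subset_span (Set.mem_insert _ _)))
  -- second segment : z to y
  have J2 : JoinedIn U z y := by
    apply joinedIn_of_segment
    intro t ht
    constructor
    · intro h0
      rcases eq_or_ne t 1 with rfl | htne
      · simp only [sub_self, zero_smul, one_smul, zero_add] at h0
        rw [h0] at hy_n; simp at hy_n
      · apply hz3
        have h1t : (1 - t) ≠ 0 := sub_ne_zero.2 (Ne.symm htne)
        have hzz : z = (-((1-t)⁻¹ * t)) • y := by
          have h2 : (1-t)⁻¹ • ((1 - t) • z + t • y) = (1-t)⁻¹ • (0 : EuclideanSpace ℝ (Fin (k+1))) := by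
            rw [h0]
          rw [smul_add, smul_smul, smul_smul, inv_mul_cancel₀ h1t, one_smul, smul_zero] at h2
          rw [neg_smul]
          exact eq_neg_of_add_eq_zero_left h2
        rw [hzz]
        exact smul_mem _ _ (subset_span (by simp))
    · intro S hS hiS hmem
      rcases eq_or_ne t 1 with rfl | htne
      · apply hyS S hS hiS
        simpa using hmem
      · have h1t : (1 - t) ≠ 0 := sub_ne_zero.2 (Ne.symm htne)
        apply (hz12 S hS hiS).2
        have hz_eq : z = (1-t)⁻¹ • ((1-t) • z + t • y) - ((1-t)⁻¹ * t) • y := by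
          rw [smul_add, smul_smul, smul_smul, inv_mul_cancel₀ h1t, one_smul]
          module
        rw [hz_eq]
        refine sub_mem (smul_mem _ _ (span_mono (Set.subset_insert _ _) hmem))
          (smul_mem _ _ (subset_span (Set.mem_insert _ _)))
  obtain ⟨γ, hγ⟩ := J1.trans J2
  -- normalize
  set φ : EuclideanSpace ℝ (Fin (k+1)) → EuclideanSpace ℝ (Fin (k+1)) :=
    fun x => ‖x‖⁻¹ • x with hφdef
  have hφcont : ContinuousOn φ {x : EuclideanSpace ℝ (Fin (k+1)) | x ≠ 0} := by
    apply ContinuousOn.smul (f := fun x => ‖x‖⁻¹) (g := fun x => x)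
    · exact (continuous_norm.continuousOn).inv₀ fun x hx => norm_ne_zero_iff.2 hx
    · exact continuousOn_id
  have hφγ : Continuous fun t => φ (γ t) :=
    hφcont.comp_continuous γ.continuous fun t => (hγ t).1
  have hφfix : ∀ x : EuclideanSpace ℝ (Fin (k+1)), ‖x‖ = 1 → φ x = x := by
    intro x hx; rw [hφdef]; simp [hx]
  refine ⟨⟨⟨fun t => Function.update p i (φ (γ t)), ?_⟩, ?_, ?_⟩, ?_⟩
  · apply continuous_pi
    intro j
    rcases eq_or_ne j i with rfl | hji
    · simpa only [Function.update_self] using hφγ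
    · simp only [Function.update_of_ne hji]
      exact continuous_const
  · show Function.update p i (φ (γ 0)) = p
    rw [γ.source, hφfix _ hpi_n, Function.update_eq_self]
  · show Function.update p i (φ (γ 1)) = Function.update p i y
    rw [γ.target, hφfix _ hy_n]
  · intro t
    show Function.update p i (φ (γ t)) ∈ genConfig k n (Metric.sphere 0 1)
    obtain ⟨hv0, hvS⟩ := hγ t
    have hnorm : ‖φ (γ t)‖ = 1 := by
      rw [hφdef]
      simp only [norm_smul, norm_inv, norm_norm]
      exact inv_mul_cancel₀ (norm_ne_zero_iff.2 hv0)
    constructor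
    · intro j
      rcases eq_or_ne j i with rfl | hji
      · rw [Function.update_self, mem_sphere_zero_iff_norm]
        exact hnorm
      · rw [Function.update_of_ne hji]
        exact hp.1 j
    · intro s hs
      by_cases his : i ∈ s
      · refine indep_update_mem hp hs his _ ?_
        have hcard : (s.erase i).card = k - 1 := by
          rw [Finset.card_erase_of_mem his, hs]
        have hmem := hvS _ hcard (Finset.notMem_erase i s)
        intro hcon
        apply hmem
        have hne : (‖γ t‖⁻¹ : ℝ) ≠ 0 := inv_ne_zero (norm_ne_zero_iff.2 hv0)
        exact (Submodule.smul_mem_iff _ hne).1 hcon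
      · exact indep_update_not_mem hp hs his _
lemma moment_mem_genConfig (hkn : k ≤ n) (v : Fin n → ℝ) (hv : Function.Injective v) :
    (fun j => nmc k (v j)) ∈ genConfig k n (Metric.sphere (0 : EuclideanSpace ℝ (Fin (k+1))) 1) := by
  refine ⟨fun j => nmc_mem_sphere _, fun s hs => ?_⟩
  apply nmc_linearIndependent (fun x : s => v x.val)
  · intro a b hab
    exact Subtype.ext (hv hab)
  · rw [Fintype.card_coe, hs]
    omega

lemma joined_to_moment (hk2 : 2 ≤ k) (hkn : k ≤ n) (F : Set ℝ) (hF : F.Finite)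
    (y : Fin n → EuclideanSpace ℝ (Fin (k+1)))
    (hy : y ∈ genConfig k n (Metric.sphere (0 : EuclideanSpace ℝ (Fin (k+1))) 1)) :
    ∃ v : Fin n → ℝ, Function.Injective v ∧ (∀ j, v j ∉ F) ∧
      JoinedIn (genConfig k n (Metric.sphere (0 : EuclideanSpace ℝ (Fin (k+1))) 1))
        y (fun j => nmc k (v j)) := by
  classical
  have aux : ∀ m : ℕ, m ≤ n → ∃ v : Fin n → ℝ,
      Set.InjOn v {j : Fin n | (j:ℕ) < m} ∧ (∀ j : Fin n, (j:ℕ) < m → v j ∉ F) ∧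
      (fun j : Fin n => if (j:ℕ) < m then nmc k (v j) else y j) ∈
        genConfig k n (Metric.sphere (0 : EuclideanSpace ℝ (Fin (k+1))) 1) ∧
      JoinedIn (genConfig k n (Metric.sphere (0 : EuclideanSpace ℝ (Fin (k+1))) 1))
        y (fun j : Fin n => if (j:ℕ) < m then nmc k (v j) else y j) := by
    intro m
    induction m with
    | zero =>
      intro _
      refine ⟨fun _ => 0, ?_, ?_, ?_, ?_⟩
      · intro a ha; simp at ha
      · intro j hj; omega
      · simpa using hy
      · have h0 : (fun j : Fin n => if (j:ℕ) < 0 then nmc k 0 else y j) = y := by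
          funext j; simp
        rw [h0]; exact JoinedIn.refl hy
    | succ m ih =>
      intro hm1
      obtain ⟨v, hvinj, hvF, hz, hjoin⟩ := ih (by omega)
      set z : Fin n → EuclideanSpace ℝ (Fin (k+1)) :=
        fun j => if (j:ℕ) < m then nmc k (v j) else y j with hzd
      have hmn : m < n := hm1
      set i : Fin n := ⟨m, hmn⟩ with hid
      have hBad : (F ∪ (v '' {j : Fin n | (j:ℕ) < m}) ∪
          ⋃ S ∈ {S : Finset (Fin n) | S.card = k - 1 ∧ i ∉ S},
            {t : ℝ | mc k t ∈ span ℝ (z '' ↑S)}).Finite := by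
        refine (hF.union ((Set.toFinite _).image v)).union ?_
        refine Set.Finite.biUnion (Set.toFinite _) fun S hS => ?_
        apply mc_mem_finite
        have himg : z '' ↑S = ↑(S.image z) := (Finset.coe_image).symm
        rw [himg]
        apply span_ne_top_of_card_le
        have h1 : (S.image z).card ≤ S.card := Finset.card_image_le
        have h2 := hS.1
        omega
      obtain ⟨t₀, ht₀⟩ := hBad.infinite_compl.nonempty
      rw [Set.mem_compl_iff, Set.mem_union, Set.mem_union, not_or, not_or] at ht₀
      obtain ⟨⟨htF, htimg⟩, htspan⟩ := ht₀
      have hspan : ∀ S : Finset (Fin n), S.card = k - 1 → i ∉ S →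
          nmc k t₀ ∉ span ℝ (z '' ↑S) := by
        intro S hS hiS hcon
        apply htspan
        refine Set.mem_biUnion (show S ∈ {S : Finset (Fin n) | S.card = k - 1 ∧ i ∉ S}
          from ⟨hS, hiS⟩) ?_
        rw [Set.mem_setOf_eq, ← nmc_mem_iff]
        exact hcon
      have hz' : Function.update z i (nmc k t₀) ∈
          genConfig k n (Metric.sphere (0 : EuclideanSpace ℝ (Fin (k+1))) 1) := by
        constructor
        · intro j
          rcases eq_or_ne j i with rfl | hji
          · rw [Function.update_self]; exact nmc_mem_sphere _
          · rw [Function.update_of_ne hji]; exact hz.1 j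
        · intro s hs
          by_cases his : i ∈ s
          · refine indep_update_mem hz hs his _ (hspan _ ?_ (Finset.notMem_erase i s))
            rw [Finset.card_erase_of_mem his, hs]
          · exact indep_update_not_mem hz hs his _
      have hmove := joinedIn_update hk2 hkn z hz i (nmc k t₀) hz'
      have hji_ne : ∀ j : Fin n, j ≠ i → (j:ℕ) ≠ m := by
        intro j hji h
        exact hji (Fin.ext h)
      have hupdate : Function.update z i (nmc k t₀) =
          fun j : Fin n => if (j:ℕ) < m + 1 then nmc k (Function.update v i t₀ j) else y j := by
        funext j
        rcases eq_or_ne j i with rfl | hji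
        · rw [Function.update_self, Function.update_self]
          simp [hid]
        · rw [Function.update_of_ne hji, Function.update_of_ne hji, hzd]
          have hne := hji_ne j hji
          by_cases hjm : (j:ℕ) < m
          · simp only [hjm, if_pos (by omega : (j:ℕ) < m + 1), if_pos]
          · simp only [if_neg hjm, if_neg (by omega : ¬ (j:ℕ) < m + 1)]
      refine ⟨Function.update v i t₀, ?_, ?_, ?_, ?_⟩
      · intro a ha b hb hab
        simp only [Set.mem_setOf_eq] at ha hb
        rcases eq_or_ne a i with rfl | hai <;> rcases eq_or_ne b i with rfl | hbi
        · rfl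
        · exfalso
          rw [Function.update_self, Function.update_of_ne hbi] at hab
          exact htimg ⟨b, by have := hji_ne b hbi; simp only [Set.mem_setOf_eq]; omega, hab.symm⟩
        · exfalso
          rw [Function.update_self, Function.update_of_ne hai] at hab
          exact htimg ⟨a, by have := hji_ne a hai; simp only [Set.mem_setOf_eq]; omega, hab⟩
        · rw [Function.update_of_ne hai, Function.update_of_ne hbi] at hab
          exact hvinj (by simp only [Set.mem_setOf_eq]; have := hji_ne a hai; omega)
            (by simp only [Set.mem_setOf_eq]; have := hji_ne b hbi; omega) hab
      · intro j hj
        rcases eq_or_ne j i with rfl | hji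
        · rw [Function.update_self]; exact htF
        · rw [Function.update_of_ne hji]
          exact hvF j (by have := hji_ne j hji; omega)
      · rw [← hupdate]; exact hz'
      · rw [← hupdate]; exact hjoin.trans hmove
  obtain ⟨v, hvinj, hvF, hmem, hjoin⟩ := aux n le_rfl
  have hall : (fun j : Fin n => if (j:ℕ) < n then nmc k (v j) else y j) = fun j => nmc k (v j) := by
    funext j; simp [j.isLt]
  refine ⟨v, ?_, fun j => hvF j j.isLt, by rw [← hall]; exact hjoin⟩
  intro a b hab
  exact hvinj (by simp [a.isLt]) (by simp [b.isLt]) hab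

lemma moment_joined_moment (hk2 : 2 ≤ k) (hkn : k ≤ n) (v w : Fin n → ℝ)
    (hv : Function.Injective v) (hw : Function.Injective w)
    (hdisj : ∀ a b, v a ≠ w b) :
    JoinedIn (genConfig k n (Metric.sphere (0 : EuclideanSpace ℝ (Fin (k+1))) 1))
      (fun j => nmc k (v j)) (fun j => nmc k (w j)) := by
  classical
  set hyb : ℕ → Fin n → ℝ := fun m j => if (j:ℕ) < m then w j else v j with hybd
  have hybinj : ∀ m, Function.Injective (hyb m) := by
    intro m a b hab
    by_cases ha : (a:ℕ) < m <;> by_cases hb : (b:ℕ) < m <;>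
      simp only [hybd, if_pos, if_neg, ha, hb, if_true, if_false] at hab
    · exact hw hab
    · exact absurd hab.symm (hdisj b a)
    · exact absurd hab (hdisj a b)
    · exact hv hab
  have aux : ∀ m : ℕ, m ≤ n →
      JoinedIn (genConfig k n (Metric.sphere (0 : EuclideanSpace ℝ (Fin (k+1))) 1))
        (fun j => nmc k (v j)) (fun j => nmc k (hyb m j)) := by
    intro m
    induction m with
    | zero =>
      intro _
      have h0 : (fun j => nmc k (hyb 0 j)) = fun j => nmc k (v j) := by
        funext j; simp [hybd]
      rw [h0]
      exact JoinedIn.refl (moment_mem_genConfig hkn v hv)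
    | succ m ih =>
      intro hm
      have hmn : m < n := hm
      set i : Fin n := ⟨m, hmn⟩ with hid
      have h1 := ih (by omega)
      have hupdate : (fun j => nmc k (hyb (m+1) j)) =
          Function.update (fun j => nmc k (hyb m j)) i (nmc k (w i)) := by
        funext j
        rcases eq_or_ne j i with rfl | hji
        · rw [Function.update_self]
          simp [hybd, hid]
        · rw [Function.update_of_ne hji]
          have hne : (j:ℕ) ≠ m := fun h => hji (Fin.ext h)
          by_cases hjm : (j:ℕ) < m
          · simp only [hybd, if_pos (by omega : (j:ℕ) < m + 1), if_pos hjm]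
          · simp only [hybd, if_neg hjm, if_neg (by omega : ¬ (j:ℕ) < m + 1)]
      have hmem : (fun j => nmc k (hyb m j)) ∈
          genConfig k n (Metric.sphere (0 : EuclideanSpace ℝ (Fin (k+1))) 1) :=
        moment_mem_genConfig hkn _ (hybinj m)
      have hmem' : Function.update (fun j => nmc k (hyb m j)) i (nmc k (w i)) ∈
          genConfig k n (Metric.sphere (0 : EuclideanSpace ℝ (Fin (k+1))) 1) := by
        rw [← hupdate]; exact moment_mem_genConfig hkn _ (hybinj (m+1))
      have hmove := joinedIn_update hk2 hkn _ hmem i (nmc k (w i)) hmem'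
      rw [hupdate]
      exact h1.trans hmove
  have h2 := aux n le_rfl
  have h3 : (fun j => nmc k (hyb n j)) = fun j => nmc k (w j) := by
    funext j; simp [hybd, j.isLt]
  rwa [h3] at h2
/-- for `2 ≤ k ≤ n`, the generalized configuration space `W_{k,n}(S^k)` of the
unit sphere `S^k ⊆ ℝ^(k+1)` is path-connected and not compact. -/
theorem genConfig_sphere_isPathConnected_and_not_isCompact (k n : ℕ) (hk : 2 ≤ k) (hn : k ≤ n) :
    IsPathConnected (genConfig k n (Metric.sphere (0 : EuclideanSpace ℝ (Fin (k + 1))) 1)) ∧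
    ¬ IsCompact (genConfig k n (Metric.sphere (0 : EuclideanSpace ℝ (Fin (k + 1))) 1)) := by
  classical
  have hn2 : 2 ≤ n := le_trans hk hn
  set v0 : Fin n → ℝ := fun j => ((j:ℕ):ℝ) with hv0
  have hv0inj : Function.Injective v0 := fun a b hab => Fin.ext (Nat.cast_injective hab)
  set b : Fin n → EuclideanSpace ℝ (Fin (k+1)) := fun j => nmc k (v0 j) with hb
  have hbG : b ∈ genConfig k n (Metric.sphere (0 : EuclideanSpace ℝ (Fin (k + 1))) 1) :=
    moment_mem_genConfig hn v0 hv0inj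
  constructor
  · refine ⟨b, hbG, ?_⟩
    intro y hy
    obtain ⟨v, hvinj, hvF, hjoin⟩ :=
      joined_to_moment hk hn (Set.range v0) (Set.finite_range v0) y hy
    have hdisj : ∀ a c, v0 a ≠ v c := fun a c h => hvF c ⟨a, h⟩
    exact (moment_joined_moment hk hn v0 v hv0inj hvinj hdisj).trans hjoin.symm
  · intro hcomp
    have hclosed : IsClosed (genConfig k n (Metric.sphere (0 : EuclideanSpace ℝ (Fin (k + 1))) 1)) :=
      hcomp.isClosed
    set i0 : Fin n := ⟨0, by omega⟩ with hi0
    set i1 : Fin n := ⟨1, by omega⟩ with hi1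
    have h01 : i0 ≠ i1 := by
      rw [hi0, hi1]
      intro h
      simpa using congrArg Fin.val h
    set t : ℕ → ℝ := fun m => 1 + ((m:ℝ)+2)⁻¹ with htdef
    have htb : ∀ m, 1 < t m ∧ t m < 2 := by
      intro m
      have hm0 : (0:ℝ) ≤ (m:ℝ) := Nat.cast_nonneg m
      have h1 : (0:ℝ) < ((m:ℝ)+2)⁻¹ := by positivity
      have hmul : ((m:ℝ)+2)⁻¹ * ((m:ℝ)+2) = 1 := inv_mul_cancel₀ (by positivity)
      constructor
      · rw [htdef]; linarith
      · rw [htdef]; nlinarith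
    have htne : ∀ m, ∀ c : ℕ, ((c:ℝ)) ≠ t m := by
      intro m c h
      obtain ⟨h1, h2⟩ := htb m
      rcases le_or_gt c 1 with hc | hc
      · have hcr : (c:ℝ) ≤ 1 := by exact_mod_cast hc
        rw [h] at hcr; linarith
      · have hcr : (2:ℝ) ≤ (c:ℝ) := by exact_mod_cast hc
        rw [h] at hcr; linarith
    set q : ℕ → (Fin n → EuclideanSpace ℝ (Fin (k+1))) :=
      fun m => Function.update b i0 (nmc k (t m)) with hqdef
    have hqG : ∀ m, q m ∈ genConfig k n (Metric.sphere (0 : EuclideanSpace ℝ (Fin (k + 1))) 1) := by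
      intro m
      set vm : Fin n → ℝ := Function.update v0 i0 (t m) with hvm
      have heq : q m = fun j => nmc k (vm j) := by
        funext j
        show Function.update b i0 (nmc k (t m)) j = nmc k (Function.update v0 i0 (t m) j)
        rcases eq_or_ne j i0 with rfl | hji
        · rw [Function.update_self, Function.update_self]
        · rw [Function.update_of_ne hji, Function.update_of_ne hji]
      have hvminj : Function.Injective vm := by
        intro a c hac
        rw [hvm] at hac
        rcases eq_or_ne a i0 with rfl | ha <;> rcases eq_or_ne c i0 with rfl | hc
        · rfl
        · exfalso
          rw [Function.update_self, Function.update_of_ne hc] at hac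
          exact htne m _ hac.symm
        · exfalso
          rw [Function.update_of_ne ha, Function.update_self] at hac
          exact htne m _ hac
        · rw [Function.update_of_ne ha, Function.update_of_ne hc] at hac
          exact hv0inj hac
      rw [heq]
      exact moment_mem_genConfig hn vm hvminj
    have hmc_cont : Continuous (mc k) := by
      have h1 : Continuous fun s : ℝ => (fun j : Fin (k+1) => s ^ (j:ℕ)) := by
        apply continuous_pi; intro j; exact continuous_pow _
      exact (PiLp.continuous_toLp 2 fun _ : Fin (k+1) => ℝ).comp h1
    have hnmc_cont : Continuous (nmc k) := by
      apply Continuous.smul (f := fun s => ‖mc k s‖⁻¹) (g := mc k)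
      · exact (hmc_cont.norm).inv₀ fun s => norm_mc_ne_zero s
      · exact hmc_cont
    have ht_lim : Filter.Tendsto t Filter.atTop (nhds (1:ℝ)) := by
      have h1 : Filter.Tendsto (fun m : ℕ => ((m:ℝ)+2)) Filter.atTop Filter.atTop :=
        Filter.tendsto_atTop_add_const_right _ 2 tendsto_natCast_atTop_atTop
      have h2 := tendsto_inv_atTop_zero.comp h1
      have h3 := Filter.Tendsto.const_add (1:ℝ) h2
      simpa [htdef, Function.comp] using h3
    set L : Fin n → EuclideanSpace ℝ (Fin (k+1)) := Function.update b i0 (nmc k 1) with hLdef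
    have hq_lim : Filter.Tendsto q Filter.atTop (nhds L) := by
      rw [tendsto_pi_nhds]
      intro j
      rcases eq_or_ne j i0 with rfl | hji
      · simp only [hqdef, hLdef, Function.update_self]
        exact (hnmc_cont.tendsto 1).comp ht_lim
      · simp only [hqdef, hLdef, Function.update_of_ne hji]
        exact tendsto_const_nhds
    have hLG : L ∈ genConfig k n (Metric.sphere (0 : EuclideanSpace ℝ (Fin (k + 1))) 1) :=
      hclosed.mem_of_tendsto hq_lim (Filter.Eventually.of_forall hqG)
    have hpair : ({i0, i1} : Finset (Fin n)).card ≤ k := by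
      have : ({i0, i1} : Finset (Fin n)).card = 2 := by
        rw [Finset.card_insert_of_notMem (by simp [h01]), Finset.card_singleton]
      omega
    obtain ⟨s, hsub, hcard⟩ := Finset.exists_superset_card_eq hpair (by simpa using hn)
    have hind := hLG.2 s hcard
    have hI := hind.injective
    have hi0s : i0 ∈ s := hsub (by simp)
    have hi1s : i1 ∈ s := hsub (by simp)
    have hval : L i0 = L i1 := by
      rw [hLdef, Function.update_self, Function.update_of_ne (Ne.symm h01)]
      have hb1 : b i1 = nmc k 1 := by
        show nmc k (v0 i1) = nmc k 1
        have hv1 : v0 i1 = 1 := by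
          show ((i1 : ℕ) : ℝ) = 1
          rw [hi1]
          norm_num
        rw [hv1]
      rw [hb1]
    have heq := hI (a₁ := ⟨i0, hi0s⟩) (a₂ := ⟨i1, hi1s⟩) hval
    exact h01 (congrArg Subtype.val heq)
end
end

section
/- Let V and W be real topological vector spaces, M ⊆ V and N ⊆ W subspaces, and P : M → N a covering map. Let k ≤ n be positive integers. Suppose (i) for every (x_1,...,x_n) ∈ W_{k,n}(M) one has (P(x_1),...,P(x_n)) ∈ W_{k,n}(N), and (ii) for every (y_1,...,y_n) ∈ W_{k,n}(N) and every choice of points x_1,...,x_n ∈ M with P(x_i) = y_i for each i, one has (x_1,...,x_n) ∈ W_{k,n}(M). Then the map P̃ : W_{k,n}(M) → W_{k,n}(N) defined by P̃(x_1,...,x_n) = (P(x_1),...,P(x_n)) is a covering map. -/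
noncomputable section

/-- if `P : M → N` is a covering map between subsets of real topological vector
spaces such that (i) tuples in `W_{k,n}(M)` are mapped into `W_{k,n}(N)` and (ii) any
componentwise lift of a tuple of `W_{k,n}(N)` lies in `W_{k,n}(M)`, then the induced map
`P̃ : W_{k,n}(M) → W_{k,n}(N)`, `P̃(x_1,...,x_n) = (P(x_1),...,P(x_n))`, is a covering map. -/
theorem isCoveringMap_genConfig_map {V W : Type*}
    [AddCommGroup V] [Module ℝ V] [TopologicalSpace V] [IsTopologicalAddGroup V]
    [ContinuousSMul ℝ V]
    [AddCommGroup W] [Module ℝ W] [TopologicalSpace W] [IsTopologicalAddGroup W]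
    [ContinuousSMul ℝ W]
    (M : Set V) (N : Set W) (P : M → N) (hP : IsCoveringMap P)
    (k n : ℕ) (hk : 1 ≤ k) (hkn : k ≤ n)
    (h1 : ∀ (x : Fin n → V) (hx : x ∈ genConfig k n M),
      (fun i => (P ⟨x i, hx.1 i⟩ : W)) ∈ genConfig k n N)
    (h2 : ∀ y ∈ genConfig k n N, ∀ x : Fin n → M,
      (∀ i, (P (x i) : W) = y i) → (fun i => (x i : V)) ∈ genConfig k n M) :
    IsCoveringMap (fun x : genConfig k n M =>
      (⟨fun i => (P ⟨x.val i, x.prop.1 i⟩ : W), h1 x.val x.prop⟩ : genConfig k n N)) := by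
  classical
  have hPc : Continuous P := hP.continuous
  set Q : genConfig k n M → genConfig k n N := fun x =>
    (⟨fun i => (P ⟨x.val i, x.prop.1 i⟩ : W), h1 x.val x.prop⟩ : genConfig k n N) with hQdef
  have hQc : Continuous Q := by
    refine Continuous.subtype_mk (continuous_pi fun i => ?_) _
    exact continuous_subtype_val.comp (hPc.comp
      (Continuous.subtype_mk ((continuous_apply i).comp continuous_subtype_val) _))
  intro ytil
  obtain ⟨y, hy⟩ := ytil
  set pt : Fin n → N := fun i => (⟨y i, hy.1 i⟩ : N) with hpt
  by_cases hne : ∀ i, Nonempty ↥(P ⁻¹' {pt i})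
  swap
  · obtain ⟨i, hi⟩ := not_forall.1 hne
    rw [not_nonempty_iff] at hi
    obtain ⟨-, U0, hxU0, hU0, -, H0, -⟩ := hP (pt i)
    haveI : IsEmpty ↥(Q ⁻¹' {⟨y, hy⟩}) := ⟨fun x => hi.elim ⟨⟨x.1.1 i, x.1.2.1 i⟩,
      Subtype.ext (congrArg (fun z : genConfig k n N => z.1 i)
        (Set.mem_singleton_iff.1 (Set.mem_preimage.1 x.2)))⟩⟩
    refine IsEvenlyCovered.of_preimage_eq_empty (f := Q) (I := ↥(Q ⁻¹' {(⟨y, hy⟩ : genConfig k n N)}))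
      (U := (fun z : genConfig k n N => (⟨z.1 i, z.2.1 i⟩ : N)) ⁻¹' U0) ?_ ?_
    · exact (IsOpen.preimage (Continuous.subtype_mk
        ((continuous_apply i).comp continuous_subtype_val) _) hU0).mem_nhds hxU0
    · exact Set.eq_empty_of_forall_notMem fun x hx => hi.elim (H0 ⟨⟨x.1 i, x.2.1 i⟩, hx⟩).2
  haveI := hne
  set t : ∀ i : Fin n, Bundle.Trivialization (P ⁻¹' {pt i}) P :=
    fun i => (hP (pt i)).toTrivialization with htdef
  have ht : ∀ i, pt i ∈ (t i).baseSet := fun i => (hP (pt i)).mem_toTrivialization_baseSet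
  haveI hdisc : ∀ i, DiscreteTopology ↥(P ⁻¹' {pt i}) := fun i => (hP (pt i)).1
  haveI hdiscF : DiscreteTopology (∀ i, ↥(P ⁻¹' {pt i})) := Pi.discreteTopology
  suffices hex : ∃ tt : Bundle.Trivialization (∀ i, ↥(P ⁻¹' {pt i})) Q,
      (⟨y, hy⟩ : genConfig k n N) ∈ tt.baseSet by
    obtain ⟨tt, htt⟩ := hex
    exact IsEvenlyCovered.to_isEvenlyCovered_preimage (IsEvenlyCovered.of_trivialization htt)
  set U : Set (genConfig k n N) := {z | ∀ i, (⟨z.1 i, z.2.1 i⟩ : N) ∈ (t i).baseSet} with hU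
  have hgc : ∀ i, Continuous (fun z : genConfig k n N => (⟨z.1 i, z.2.1 i⟩ : N)) := fun i =>
    Continuous.subtype_mk ((continuous_apply i).comp continuous_subtype_val) _
  have hUo : IsOpen U := by
    have hrw : U = ⋂ i, (fun z : genConfig k n N => (⟨z.1 i, z.2.1 i⟩ : N)) ⁻¹' (t i).baseSet := by
      ext z
      simp only [hU, Set.mem_setOf_eq, Set.mem_iInter, Set.mem_preimage]
    rw [hrw]
    exact isOpen_iInter_of_finite fun i => ((t i).open_baseSet).preimage (hgc i)
  have hmem_src : ∀ (x : genConfig k n M), Q x ∈ U → ∀ i,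
      (⟨x.1 i, x.2.1 i⟩ : M) ∈ (t i).source := by
    intro x hx i
    exact (t i).mem_source.2 (hx i)
  have Pw : ∀ (z : genConfig k n N) (v : ∀ i, ↥(P ⁻¹' {pt i})), z ∈ U → ∀ i : Fin n,
      P ((t i).toOpenPartialHomeomorph.symm (⟨z.1 i, z.2.1 i⟩, v i)) = ⟨z.1 i, z.2.1 i⟩ :=
    fun z v hz i => (t i).proj_symm_apply ((t i).mem_target.2 (hz i))
  have memM : ∀ (z : genConfig k n N) (v : ∀ i, ↥(P ⁻¹' {pt i})), z ∈ U →
      (fun i => (((t i).toOpenPartialHomeomorph.symm (⟨z.1 i, z.2.1 i⟩, v i) : M) : V))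
        ∈ genConfig k n M :=
    fun z v hz => h2 z.1 z.2 _ (fun i => congrArg Subtype.val (Pw z v hz i))
  have memM0 : ∀ v : ∀ i, ↥(P ⁻¹' {pt i}), (fun i => ((v i : M) : V)) ∈ genConfig k n M :=
    fun v => h2 y hy (fun i => (v i : M))
      (fun i => congrArg Subtype.val (Set.mem_singleton_iff.1 (v i).2))
  set inv : genConfig k n N × (∀ i, ↥(P ⁻¹' {pt i})) → genConfig k n M := fun p =>
    if hz : p.1 ∈ U then ⟨_, memM p.1 p.2 hz⟩ else ⟨_, memM0 p.2⟩ with hinv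
  have hQinv : ∀ p : genConfig k n N × (∀ i, ↥(P ⁻¹' {pt i})), p.1 ∈ U → Q (inv p) = p.1 := by
    intro p hz
    simp only [hinv]
    rw [dif_pos hz]
    exact Subtype.ext (funext fun i => congrArg Subtype.val (Pw p.1 p.2 hz i))
  refine ⟨{ toFun := fun x => (Q x, fun i => ((t i) ⟨x.1 i, x.2.1 i⟩).2)
            invFun := inv
            source := Q ⁻¹' U
            target := U ×ˢ Set.univ
            map_source' := fun x hx => ⟨hx, Set.mem_univ _⟩
            map_target' := ?_
            left_inv' := ?_
            right_inv' := ?_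
            open_source := hUo.preimage hQc
            open_target := hUo.prod isOpen_univ
            continuousOn_toFun := ?_
            continuousOn_invFun := ?_
            baseSet := U
            open_baseSet := hUo
            source_eq := rfl
            target_eq := rfl
            proj_toFun := fun x hx => rfl }, fun i => ht i⟩
  · -- map_target'
    intro p hp
    show Q (inv p) ∈ U
    rw [hQinv p hp.1]
    exact hp.1
  · -- left_inv'
    intro x hx
    have hz : Q x ∈ U := hx
    simp only [hinv]
    rw [dif_pos hz]
    exact Subtype.ext (funext fun i =>
      congrArg Subtype.val ((t i).symm_apply_mk_proj (hmem_src x hx i)))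
  · -- right_inv'
    intro p hp
    have hip : inv p = ⟨_, memM p.1 p.2 hp.1⟩ := by simp only [hinv]; exact dif_pos hp.1
    refine Prod.ext (hQinv p hp.1) ?_
    funext i
    rw [hip]
    exact congrArg Prod.snd ((t i).apply_symm_apply ((t i).mem_target.2 (hp.1 i)))
  · -- continuousOn_toFun
    refine ContinuousOn.prodMk hQc.continuousOn (continuousOn_pi.2 fun i => ?_)
    have hm : Continuous (fun x : genConfig k n M => (⟨x.1 i, x.2.1 i⟩ : M)) :=
      Continuous.subtype_mk ((continuous_apply i).comp continuous_subtype_val) _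
    exact ContinuousOn.snd ((t i).continuousOn_toFun.comp hm.continuousOn
      (fun x hx => hmem_src x hx i))
  · -- continuousOn_invFun
    refine (Topology.IsInducing.subtypeVal.continuousOn_iff).2 ?_
    have hc : ContinuousOn (fun p : genConfig k n N × (∀ i, ↥(P ⁻¹' {pt i})) =>
        fun i => (((t i).toOpenPartialHomeomorph.symm (⟨p.1.1 i, p.1.2.1 i⟩, p.2 i) : M) : V))
        (U ×ˢ Set.univ) := by
      refine continuousOn_pi.2 fun i => ?_
      have hmap : Continuous (fun p : genConfig k n N × (∀ i, ↥(P ⁻¹' {pt i})) =>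
          ((⟨p.1.1 i, p.1.2.1 i⟩ : N), p.2 i)) :=
        ((hgc i).comp continuous_fst).prodMk ((continuous_apply i).comp continuous_snd)
      have hmt : Set.MapsTo (fun p : genConfig k n N × (∀ i, ↥(P ⁻¹' {pt i})) =>
          ((⟨p.1.1 i, p.1.2.1 i⟩ : N), p.2 i)) (U ×ˢ Set.univ) (t i).target :=
        fun p hp => (t i).mem_target.2 (hp.1 i)
      exact continuous_subtype_val.comp_continuousOn
        ((t i).continuousOn_invFun.comp hmap.continuousOn hmt)
    refine hc.congr ?_
    intro p hp
    simp only [hinv, Function.comp_apply]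
    rw [dif_pos hp.1]
end
end

section
/- Let k ≤ n and m ≥ 1 be positive integers, and let P : S^m → ℝP^m be the quotient map identifying antipodal points. Then the induced map P̃ : W_{k,n}(S^m) → W_{k,n}(ℝP^m), P̃(x_1,...,x_n) = (P(x_1),...,P(x_n)), is a covering map, and every fiber of P̃ has exactly 2^n elements. -/
open scoped LinearAlgebra.Projectivization

noncomputable section

instance projTopology {K V : Type*} [DivisionRing K] [AddCommGroup V] [Module K V]
    [TopologicalSpace V] : TopologicalSpace (ℙ K V) :=
  inferInstanceAs (TopologicalSpace (Quotient _))

/-- The generalized configuration space `W_{k,n}(ℙ V)` of `n`-tuples of points of projective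
space such that any `k` of the entries are linearly independent. -/
def genConfigP (K V : Type*) [DivisionRing K] [AddCommGroup V] [Module K V] (k n : ℕ) :
    Set (Fin n → ℙ K V) :=
  {p | ∀ s : Finset (Fin n), s.card = k → Projectivization.Independent (fun i : s => p i.val)}

lemma mem_sphere_ne_zero {m : ℕ} {v : EuclideanSpace ℝ (Fin (m + 1))}
    (h : v ∈ Metric.sphere (0 : EuclideanSpace ℝ (Fin (m + 1))) 1) : v ≠ 0 := by
  intro h0
  rw [h0, Metric.mem_sphere, dist_self] at h
  norm_num at h

lemma mk_mem_genConfigP {m k n : ℕ} {x : Fin n → EuclideanSpace ℝ (Fin (m + 1))}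
    (hx : x ∈ genConfig k n (Metric.sphere (0 : EuclideanSpace ℝ (Fin (m + 1))) 1)) :
    (fun i => Projectivization.mk ℝ (x i) (mem_sphere_ne_zero (hx.1 i))) ∈
      genConfigP ℝ (EuclideanSpace ℝ (Fin (m + 1))) k n :=
  fun s hs => Projectivization.Independent.mk _ _ (hx.2 s hs)


open scoped RealInnerProductSpace

namespace GCAux

abbrev Vm (m : ℕ) := EuclideanSpace ℝ (Fin (m + 1))

variable {m : ℕ}

lemma isOpenQuotientMap_mk' :
    IsOpenQuotientMap (Projectivization.mk' ℝ : {v : Vm m // v ≠ 0} → ℙ ℝ (Vm m)) := by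
  refine ⟨fun q => ⟨⟨q.rep, q.rep_nonzero⟩, q.mk_rep⟩, continuous_quot_mk, ?_⟩
  intro S hS
  have hq : Topology.IsQuotientMap (Quot.mk _ : {v : Vm m // v ≠ 0} → ℙ ℝ (Vm m)) := isQuotientMap_quot_mk
  apply hq.isOpen_preimage.mp
  have : (Quot.mk _ : {v : Vm m // v ≠ 0} → ℙ ℝ (Vm m)) ⁻¹' (Projectivization.mk' ℝ '' S) =
      ⋃ c : ℝˣ, (fun w : {v : Vm m // v ≠ 0} =>
        (⟨(c : ℝ) • w.val, smul_ne_zero c.ne_zero w.prop⟩ : {v : Vm m // v ≠ 0})) ⁻¹' S := by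
    ext w
    simp only [Set.mem_preimage, Set.mem_image, Set.mem_iUnion]
    constructor
    · rintro ⟨u, hu, huw⟩
      have : Projectivization.mk ℝ u.val u.prop = Projectivization.mk ℝ w.val w.prop := huw
      rw [Projectivization.mk_eq_mk_iff] at this
      obtain ⟨a, ha⟩ := this
      refine ⟨a, ?_⟩
      have : (⟨(a : ℝ) • w.val, smul_ne_zero a.ne_zero w.prop⟩ : {v : Vm m // v ≠ 0}) = u :=
        Subtype.ext (by rw [← ha]; rfl)
      rwa [this]
    · rintro ⟨c, hc⟩
      refine ⟨_, hc, ?_⟩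
      show Projectivization.mk ℝ _ _ = Projectivization.mk ℝ w.val w.prop
      rw [Projectivization.mk_eq_mk_iff]
      exact ⟨c, rfl⟩
  erw [this]
  exact isOpen_iUnion fun c => hS.preimage ((continuous_const.fun_smul continuous_subtype_val).subtype_mk _)


/-- sign of a boolean as a real number -/
def sgn (b : Bool) : ℝ := if b then 1 else -1

lemma abs_sgn (b : Bool) : |sgn b| = 1 := by cases b <;> norm_num [sgn]

lemma sgn_ne_zero (b : Bool) : sgn b ≠ 0 := by cases b <;> norm_num [sgn]

/-- the continuous (where nonzero) choice of unit representative with positive inner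
product against `v` -/
def chart (v : Vm m) : ℙ ℝ (Vm m) → Vm m :=
  Projectivization.lift
    (fun w => (⟪v, w.val⟫ / |⟪v, w.val⟫| / ‖w.val‖) • w.val)
    (by
      rintro ⟨a, ha⟩ ⟨b, hb⟩ t (rfl : a = t • b)
      have ht : t ≠ 0 := fun h => ha (by simp [h])
      have hb' : ‖b‖ ≠ 0 := norm_ne_zero_iff.mpr hb
      simp only [real_inner_smul_right, norm_smul, Real.norm_eq_abs, abs_mul]
      rcases eq_or_ne (⟪v, b⟫) 0 with h | h
      · simp [h]
      · rw [smul_smul]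
        congr 1
        have habs : |t| ≠ 0 := abs_ne_zero.mpr ht
        have habs2 : |⟪v, b⟫| ≠ 0 := abs_ne_zero.mpr h
        field_simp
        ring_nf
        rw [sq_abs])

lemma chart_mk (v w : Vm m) (hw : w ≠ 0) :
    chart v (Projectivization.mk ℝ w hw) = (⟪v, w⟫ / |⟪v, w⟫| / ‖w‖) • w := rfl

/-- square of normalized inner product against `v`, descended to projective space -/
def ip (v : Vm m) : ℙ ℝ (Vm m) → ℝ :=
  Projectivization.lift (fun w => ⟪v, w.val⟫ ^ 2 / ‖w.val‖ ^ 2)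
    (by
      rintro ⟨a, ha⟩ ⟨b, hb⟩ t (rfl : a = t • b)
      have ht : t ≠ 0 := fun h => ha (by simp [h])
      have hb' : ‖b‖ ≠ 0 := norm_ne_zero_iff.mpr hb
      simp only [real_inner_smul_right, norm_smul, Real.norm_eq_abs, mul_pow]
      rw [sq_abs]
      field_simp)

lemma ip_mk (v w : Vm m) (hw : w ≠ 0) :
    ip v (Projectivization.mk ℝ w hw) = ⟪v, w⟫ ^ 2 / ‖w‖ ^ 2 := rfl

lemma ip_ne_zero_iff (v w : Vm m) (hw : w ≠ 0) :
    ip v (Projectivization.mk ℝ w hw) ≠ 0 ↔ ⟪v, w⟫ ≠ 0 := by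
  have hb' : ‖w‖ ≠ 0 := norm_ne_zero_iff.mpr hw
  rw [ip_mk]
  constructor
  · intro h h0; exact h (by simp [h0])
  · intro h
    exact div_ne_zero (pow_ne_zero _ h) (pow_ne_zero _ hb')

lemma continuous_ip (v : Vm m) : Continuous (ip v) := by
  rw [← isOpenQuotientMap_mk'.continuous_comp_iff]
  have : ip v ∘ (Projectivization.mk' ℝ) =
      fun w : {v : Vm m // v ≠ 0} => ⟪v, w.val⟫ ^ 2 / ‖w.val‖ ^ 2 := rfl
  rw [this]
  refine Continuous.div ?_ ?_ ?_
  · exact ((continuous_const.inner continuous_subtype_val)).pow 2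
  · exact (continuous_subtype_val.norm).pow 2
  · intro w
    exact pow_ne_zero _ (norm_ne_zero_iff.mpr w.prop)

lemma continuousAt_chart {v : Vm m} {q : ℙ ℝ (Vm m)} (h : ip v q ≠ 0) :
    ContinuousAt (chart v) q := by
  induction q using Projectivization.ind with
  | h w hw =>
    rw [ip_ne_zero_iff v w hw] at h
    have : ContinuousAt (chart v ∘ Projectivization.mk' ℝ) ⟨w, hw⟩ := by
      have he : chart v ∘ (Projectivization.mk' ℝ) =
          fun w : {v : Vm m // v ≠ 0} =>
            (⟪v, w.val⟫ / |⟪v, w.val⟫| / ‖w.val‖) • w.val := rfl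
      rw [he]
      have h1 : ContinuousAt (fun w : {v : Vm m // v ≠ 0} => ⟪v, w.val⟫)
          ⟨w, hw⟩ := (continuous_const.inner continuous_subtype_val).continuousAt
      refine ContinuousAt.smul (ContinuousAt.div (ContinuousAt.div h1 h1.abs ?_)
        continuous_subtype_val.norm.continuousAt ?_) continuous_subtype_val.continuousAt
      · exact abs_ne_zero.mpr h
      · exact norm_ne_zero_iff.mpr hw
    exact (isOpenQuotientMap_mk'.continuousAt_comp_iff).mp this


lemma mk_smul_of_ne_zero {a : ℝ} (ha : a ≠ 0) {w : Vm m} (hw : w ≠ 0) :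
    Projectivization.mk ℝ (a • w) (smul_ne_zero ha hw) = Projectivization.mk ℝ w hw := by
  rw [Projectivization.mk_eq_mk_iff]
  exact ⟨Units.mk0 a ha, rfl⟩

lemma norm_chart (v w : Vm m) (hw : w ≠ 0) (h : ⟪v, w⟫ ≠ 0) :
    ‖chart v (Projectivization.mk ℝ w hw)‖ = 1 := by
  have hb : ‖w‖ ≠ 0 := norm_ne_zero_iff.mpr hw
  have habs : |⟪v, w⟫| ≠ 0 := abs_ne_zero.mpr h
  rw [chart_mk, norm_smul, Real.norm_eq_abs, abs_div, abs_div, abs_abs, abs_norm]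
  field_simp

lemma chart_ne_zero (v w : Vm m) (hw : w ≠ 0) (h : ⟪v, w⟫ ≠ 0) :
    chart v (Projectivization.mk ℝ w hw) ≠ 0 := by
  intro h0
  have := norm_chart v w hw h
  rw [h0] at this
  simp at this

lemma mk_chart (v w : Vm m) (hw : w ≠ 0) (h : ⟪v, w⟫ ≠ 0)
    (h' : chart v (Projectivization.mk ℝ w hw) ≠ 0) :
    Projectivization.mk ℝ (chart v (Projectivization.mk ℝ w hw)) h' =
      Projectivization.mk ℝ w hw := by
  have hcoef : ⟪v, w⟫ / |⟪v, w⟫| / ‖w‖ ≠ 0 :=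
    div_ne_zero (div_ne_zero h (abs_ne_zero.mpr h)) (norm_ne_zero_iff.mpr hw)
  rw [Projectivization.mk_eq_mk_iff]
  refine ⟨Units.mk0 _ hcoef, ?_⟩
  rw [chart_mk]
  rfl

lemma inner_chart_pos (v w : Vm m) (hw : w ≠ 0) (h : ⟪v, w⟫ ≠ 0) :
    0 < ⟪v, chart v (Projectivization.mk ℝ w hw)⟫ := by
  have hb : (0 : ℝ) < ‖w‖ := norm_pos_iff.mpr hw
  rw [chart_mk, real_inner_smul_right]
  rcases h.lt_or_gt with hc | hc
  · have h2 : ⟪v, w⟫ / |⟪v, w⟫| = -1 := by rw [abs_of_neg hc, div_neg, div_self hc.ne]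
    rw [h2]
    have : (-1 : ℝ) / ‖w‖ < 0 := div_neg_of_neg_of_pos (by norm_num) hb
    exact mul_pos_of_neg_of_neg this hc
  · have h2 : ⟪v, w⟫ / |⟪v, w⟫| = 1 := by rw [abs_of_pos hc, div_self hc.ne']
    rw [h2]
    exact mul_pos (div_pos one_pos hb) hc

lemma chart_mk_unit (v x : Vm m) (hx : ‖x‖ = 1) (h0 : x ≠ 0) :
    chart v (Projectivization.mk ℝ x h0) = (⟪v, x⟫ / |⟪v, x⟫|) • x := by
  rw [chart_mk, hx, div_one]

lemma sgn_decide_smul (c : ℝ) (hc : c ≠ 0) (x : Vm m) :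
    sgn (decide (0 < c)) • (c / |c|) • x = x := by
  rcases hc.lt_or_gt with h | h
  · have h1 : decide (0 < c) = false := by simp [not_lt.mpr h.le]
    have h2 : c / |c| = -1 := by rw [abs_of_neg h, div_neg, div_self h.ne]
    rw [h1, h2, smul_smul]
    norm_num [sgn]
  · have h1 : decide (0 < c) = true := by simp [h]
    have h2 : c / |c| = 1 := by rw [abs_of_pos h, div_self h.ne']
    rw [h1, h2, smul_smul]
    norm_num [sgn]

/-- unit-norm representative of a projective point -/
def unitRep (q : ℙ ℝ (Vm m)) : Vm m := ‖q.rep‖⁻¹ • q.rep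

lemma unitRep_ne_zero (q : ℙ ℝ (Vm m)) : unitRep q ≠ 0 :=
  smul_ne_zero (inv_ne_zero (norm_ne_zero_iff.mpr q.rep_nonzero)) q.rep_nonzero

lemma norm_unitRep (q : ℙ ℝ (Vm m)) : ‖unitRep q‖ = 1 := by
  rw [unitRep, norm_smul, norm_inv, norm_norm]
  exact inv_mul_cancel₀ (norm_ne_zero_iff.mpr q.rep_nonzero)

lemma mk_unitRep (q : ℙ ℝ (Vm m)) :
    Projectivization.mk ℝ (unitRep q) (unitRep_ne_zero q) = q :=
  (mk_smul_of_ne_zero (inv_ne_zero (norm_ne_zero_iff.mpr q.rep_nonzero))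
    q.rep_nonzero).trans q.mk_rep

lemma linearIndependent_of_independent_mk {ι : Type*} {x : ι → Vm m} (hx : ∀ i, x i ≠ 0)
    (h : Projectivization.Independent fun i => Projectivization.mk ℝ (x i) (hx i)) :
    LinearIndependent ℝ x := by
  rw [Projectivization.independent_iff] at h
  choose a ha using fun i => Projectivization.exists_smul_eq_mk_rep ℝ (x i) (hx i)
  have hxa : x = (fun i => (a i)⁻¹) •
      (Projectivization.rep ∘ fun i => Projectivization.mk ℝ (x i) (hx i)) := by
    funext i
    rw [Pi.smul_apply', Function.comp_apply, ← ha i, inv_smul_smul]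
  rw [hxa]
  exact h.units_smul fun i => (a i)⁻¹

lemma norm_chart' (v : Vm m) (p : ℙ ℝ (Vm m)) (h : ip v p ≠ 0) : ‖chart v p‖ = 1 := by
  induction p using Projectivization.ind with
  | h w hw => exact norm_chart v w hw ((ip_ne_zero_iff v w hw).mp h)

lemma chart_ne_zero' (v : Vm m) (p : ℙ ℝ (Vm m)) (h : ip v p ≠ 0) : chart v p ≠ 0 := by
  induction p using Projectivization.ind with
  | h w hw => exact chart_ne_zero v w hw ((ip_ne_zero_iff v w hw).mp h)

lemma mk_chart' (v : Vm m) (p : ℙ ℝ (Vm m)) (h : ip v p ≠ 0) (h' : chart v p ≠ 0) :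
    Projectivization.mk ℝ (chart v p) h' = p := by
  induction p using Projectivization.ind with
  | h w hw => exact mk_chart v w hw ((ip_ne_zero_iff v w hw).mp h) h'

lemma inner_chart_pos' (v : Vm m) (p : ℙ ℝ (Vm m)) (h : ip v p ≠ 0) :
    0 < ⟪v, chart v p⟫ := by
  induction p using Projectivization.ind with
  | h w hw => exact inner_chart_pos v w hw ((ip_ne_zero_iff v w hw).mp h)

end GCAux

namespace GCAux

variable {m k n : ℕ}

abbrev Sph (m : ℕ) : Set (Vm m) := Metric.sphere (0 : Vm m) 1

abbrev covMap (m k n : ℕ) (x : genConfig k n (Sph m)) : genConfigP ℝ (Vm m) k n :=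
  ⟨fun i => Projectivization.mk ℝ (x.val i) (mem_sphere_ne_zero (x.prop.1 i)),
    mk_mem_genConfigP x.prop⟩

lemma mem_genConfig_of_lift {x : Fin n → Vm m} (hnorm : ∀ i, ‖x i‖ = 1)
    (q : genConfigP ℝ (Vm m) k n)
    (hmk : ∀ i (h : x i ≠ 0), Projectivization.mk ℝ (x i) h = q.val i) :
    x ∈ genConfig k n (Sph m) := by
  have hx0 : ∀ i, x i ≠ 0 := by
    intro i h
    have := hnorm i
    rw [h] at this
    simp at this
  refine ⟨fun i => by rw [mem_sphere_zero_iff_norm]; exact hnorm i, fun s hs => ?_⟩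
  refine linearIndependent_of_independent_mk (fun i : s => hx0 i.val) ?_
  have he : (fun i : s => Projectivization.mk ℝ (x i.val) (hx0 i.val)) =
      fun i : s => q.val i.val := funext fun i => hmk i.val _
  rw [he]
  exact q.prop s hs

lemma continuous_covMap : Continuous (covMap m k n) := by
  refine Continuous.subtype_mk (continuous_pi fun i => ?_) _
  exact isOpenQuotientMap_mk'.continuous.comp
    (((continuous_apply i).comp continuous_subtype_val).subtype_mk _)

/-- unit representatives of the base point -/
def uvec (y : genConfigP ℝ (Vm m) k n) (i : Fin n) : Vm m := unitRep (y.val i)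

lemma norm_uvec (y : genConfigP ℝ (Vm m) k n) (i : Fin n) : ‖uvec y i‖ = 1 := norm_unitRep _

lemma inner_uvec_self (y : genConfigP ℝ (Vm m) k n) (i : Fin n) :
    ⟪uvec y i, uvec y i⟫ = 1 := by
  rw [real_inner_self_eq_norm_sq, norm_uvec]
  norm_num

/-- the base set of the trivialization at `y` -/
def base (y : genConfigP ℝ (Vm m) k n) : Set (genConfigP ℝ (Vm m) k n) :=
  {q | ∀ i, ip (uvec y i) (q.val i) ≠ 0}

lemma isOpen_base (y : genConfigP ℝ (Vm m) k n) : IsOpen (base y) := by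
  have he : base y = ⋂ i, (fun q : genConfigP ℝ (Vm m) k n =>
      ip (uvec y i) (q.val i)) ⁻¹' {(0 : ℝ)}ᶜ := by
    ext q
    simp [base]
  rw [he]
  exact isOpen_iInter_of_finite fun i => isOpen_compl_singleton.preimage
    ((continuous_ip _).comp ((continuous_apply i).comp continuous_subtype_val))

lemma mem_base_self (y : genConfigP ℝ (Vm m) k n) : y ∈ base y := by
  intro i
  rw [show y.val i = Projectivization.mk ℝ (unitRep (y.val i)) (unitRep_ne_zero _) from
    (mk_unitRep _).symm, ip_ne_zero_iff]
  rw [show uvec y i = unitRep (y.val i) from rfl, real_inner_self_eq_norm_sq, norm_unitRep]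
  norm_num

lemma mem_base_iff (y : genConfigP ℝ (Vm m) k n) (x : genConfig k n (Sph m)) :
    covMap m k n x ∈ base y ↔ ∀ i, ⟪uvec y i, x.val i⟫ ≠ 0 := by
  constructor <;> intro h i <;> have := h i
  · exact (ip_ne_zero_iff _ _ _).mp this
  · exact (ip_ne_zero_iff _ _ _).mpr this

lemma mem_of_signs (y : genConfigP ℝ (Vm m) k n) (q : genConfigP ℝ (Vm m) k n)
    (hq : q ∈ base y) (ε : Fin n → Bool) :
    (fun i => sgn (ε i) • chart (uvec y i) (q.val i)) ∈ genConfig k n (Sph m) := by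
  refine mem_genConfig_of_lift (fun i => ?_) q (fun i h => ?_)
  · rw [norm_smul, Real.norm_eq_abs, abs_sgn, one_mul, norm_chart' _ _ (hq i)]
  · exact (mk_smul_of_ne_zero (sgn_ne_zero (ε i)) (chart_ne_zero' _ _ (hq i))).trans
      (mk_chart' _ _ (hq i) _)

/-- a basepoint in the fiber over `y`, used as junk value -/
def basept (y : genConfigP ℝ (Vm m) k n) : genConfig k n (Sph m) :=
  ⟨fun i => uvec y i,
    mem_genConfig_of_lift (fun i => norm_uvec y i) y (fun i h => mk_unitRep (y.val i))⟩

lemma covMap_signs (y : genConfigP ℝ (Vm m) k n) (q : genConfigP ℝ (Vm m) k n)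
    (hq : q ∈ base y) (ε : Fin n → Bool) :
    covMap m k n ⟨fun i => sgn (ε i) • chart (uvec y i) (q.val i), mem_of_signs y q hq ε⟩
      = q := by
  apply Subtype.ext
  funext i
  exact (mk_smul_of_ne_zero (sgn_ne_zero (ε i)) (chart_ne_zero' _ _ (hq i))).trans
    (mk_chart' _ _ (hq i) _)

lemma decide_sgn_mul (b : Bool) {c : ℝ} (hc : 0 < c) : decide (0 < sgn b * c) = b := by
  cases b
  · have : sgn false * c < 0 := by
      rw [show sgn false = -1 from rfl]
      nlinarith
    simp [not_lt.mpr this.le]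
  · have : 0 < sgn true * c := by
      rw [show sgn true = 1 from rfl]
      nlinarith
    simp [this]

attribute [local instance] Classical.propDecidable

/-- The trivialization of `covMap` over the base set at `y`. -/
def triv (y : genConfigP ℝ (Vm m) k n) :
    Bundle.Trivialization (Fin n → Bool) (covMap m k n) where
  toFun x := (covMap m k n x, fun i => decide (0 < ⟪uvec y i, x.val i⟫))
  invFun p :=
    if h : p.1 ∈ base y then
      ⟨fun i => sgn (p.2 i) • chart (uvec y i) (p.1.val i), mem_of_signs y p.1 h p.2⟩
    else basept y
  source := covMap m k n ⁻¹' base y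
  target := base y ×ˢ Set.univ
  map_source' := fun x hx => ⟨hx, Set.mem_univ _⟩
  map_target' := by
    rintro ⟨q, ε⟩ ⟨hq, -⟩
    simp only [dif_pos hq, Set.mem_preimage]
    exact Set.mem_of_eq_of_mem (covMap_signs y q hq ε) hq
  left_inv' := by
    intro x hx
    have hx' : covMap m k n x ∈ base y := hx
    simp only [dif_pos hx']
    apply Subtype.ext
    funext i
    have hne : ⟪uvec y i, x.val i⟫ ≠ 0 := (mem_base_iff y x).mp hx' i
    show sgn (decide (0 < ⟪uvec y i, x.val i⟫)) •
      chart (uvec y i) (Projectivization.mk ℝ (x.val i) (mem_sphere_ne_zero (x.prop.1 i)))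
        = x.val i
    rw [chart_mk_unit _ _ (by rw [← mem_sphere_zero_iff_norm]; exact x.prop.1 i) _]
    exact sgn_decide_smul _ hne _
  right_inv' := by
    rintro ⟨q, ε⟩ ⟨hq, -⟩
    simp only [dif_pos hq]
    refine Prod.ext ?_ ?_
    · exact covMap_signs y q hq ε
    · show (fun i => decide (0 < ⟪uvec y i, sgn (ε i) • chart (uvec y i) (q.val i)⟫)) = ε
      funext i
      rw [real_inner_smul_right]
      exact decide_sgn_mul (ε i) (inner_chart_pos' _ _ (hq i))
  open_source := (isOpen_base y).preimage continuous_covMap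
  open_target := (isOpen_base y).prod isOpen_univ
  continuousOn_toFun := by
    intro x hx
    apply ContinuousAt.continuousWithinAt
    refine ContinuousAt.prodMk continuous_covMap.continuousAt (continuousAt_pi.mpr fun i => ?_)
    have hcont : Continuous fun z : genConfig k n (Sph m) => ⟪uvec y i, z.val i⟫ :=
      continuous_const.inner ((continuous_apply i).comp continuous_subtype_val)
    have hne : ⟪uvec y i, x.val i⟫ ≠ 0 := (mem_base_iff y x).mp hx i
    rcases hne.lt_or_gt with h | h
    · have hev : ∀ᶠ z : genConfig k n (Sph m) in nhds x, ⟪uvec y i, z.val i⟫ < 0 :=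
        (isOpen_lt hcont continuous_const).mem_nhds h
      refine continuousAt_const.congr_of_eventuallyEq (f := fun _ => false) ?_
      filter_upwards [hev] with z hz
      exact decide_eq_false (not_lt.mpr hz.le)
    · have hev : ∀ᶠ z : genConfig k n (Sph m) in nhds x, 0 < ⟪uvec y i, z.val i⟫ :=
        (isOpen_lt continuous_const hcont).mem_nhds h
      refine continuousAt_const.congr_of_eventuallyEq (f := fun _ => true) ?_
      filter_upwards [hev] with z hz
      exact decide_eq_true hz
  continuousOn_invFun := by
    rw [Topology.IsInducing.subtypeVal.continuousOn_iff]
    have hcongr : ∀ p ∈ base y ×ˢ (Set.univ : Set (Fin n → Bool)),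
        (Subtype.val ∘ fun p : genConfigP ℝ (Vm m) k n × (Fin n → Bool) =>
            if h : p.1 ∈ base y then
              (⟨fun i => sgn (p.2 i) • chart (uvec y i) (p.1.val i),
                mem_of_signs y p.1 h p.2⟩ : genConfig k n (Sph m))
            else basept y) p =
          (fun i => sgn (p.2 i) • chart (uvec y i) (p.1.val i)) := by
      rintro ⟨q, ε⟩ ⟨hq, -⟩
      simp only [Function.comp_apply, dif_pos hq]
    refine ContinuousOn.congr ?_ hcongr
    intro p hp
    apply ContinuousAt.continuousWithinAt
    refine continuousAt_pi.mpr fun i => ContinuousAt.fun_smul ?_ ?_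
    · exact ((continuous_of_discreteTopology (f := sgn)).comp
        ((continuous_apply i).comp continuous_snd)).continuousAt
    · exact ContinuousAt.comp (x := p)
        (f := fun p : genConfigP ℝ (Vm m) k n × (Fin n → Bool) => p.1.val i)
        (continuousAt_chart (hp.1 i))
        (Continuous.continuousAt
          ((continuous_apply i).comp (continuous_subtype_val.comp continuous_fst)))
  baseSet := base y
  open_baseSet := isOpen_base y
  source_eq := rfl
  target_eq := rfl
  proj_toFun := fun _ _ => rfl

lemma unit_decompose {y : ℙ ℝ (Vm m)} {x : Vm m} (hx : ‖x‖ = 1) (h0 : x ≠ 0)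
    (hmk : Projectivization.mk ℝ x h0 = y) :
    (⟪unitRep y, x⟫ = 1 ∨ ⟪unitRep y, x⟫ = -1) ∧ x = ⟪unitRep y, x⟫ • unitRep y := by
  have hmm : Projectivization.mk ℝ x h0
      = Projectivization.mk ℝ (unitRep y) (unitRep_ne_zero y) :=
    hmk.trans (mk_unitRep y).symm
  rw [Projectivization.mk_eq_mk_iff] at hmm
  obtain ⟨a, ha0⟩ := hmm
  have ha : (a : ℝ) • unitRep y = x := ha0
  have hnorm : |(a : ℝ)| = 1 := by
    have h2 := congrArg norm ha
    rw [norm_smul, norm_unitRep, hx, Real.norm_eq_abs, mul_one] at h2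
    exact h2
  have hinner : ⟪unitRep y, x⟫ = a := by
    rw [← ha, real_inner_smul_right, real_inner_self_eq_norm_sq, norm_unitRep]
    norm_num
  refine ⟨?_, ?_⟩
  · rw [hinner]
    exact (abs_eq (by norm_num)).mp hnorm
  · rw [hinner, ha]

/-- the fiber of `covMap` over `y` is parametrized by sign vectors -/
def fiberEquiv (y : genConfigP ℝ (Vm m) k n) :
    {x : genConfig k n (Sph m) // covMap m k n x = y} ≃ (Fin n → Bool) where
  toFun x i := decide (0 < ⟪uvec y i, x.val.val i⟫)
  invFun ε :=
    ⟨⟨fun i => sgn (ε i) • uvec y i,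
      mem_genConfig_of_lift
        (fun i => by rw [norm_smul, Real.norm_eq_abs, abs_sgn, one_mul, norm_uvec]) y
        (fun i h => (mk_smul_of_ne_zero (sgn_ne_zero (ε i)) (unitRep_ne_zero _)).trans
          (mk_unitRep _))⟩,
      Subtype.ext (funext fun i =>
        (mk_smul_of_ne_zero (sgn_ne_zero (ε i)) (unitRep_ne_zero _)).trans (mk_unitRep _))⟩
  left_inv := by
    rintro ⟨x, hx⟩
    apply Subtype.ext
    apply Subtype.ext
    funext i
    have hmki : Projectivization.mk ℝ (x.val i) (mem_sphere_ne_zero (x.prop.1 i)) = y.val i :=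
      congrFun (congrArg Subtype.val hx) i
    obtain ⟨hpm, hdec⟩ := unit_decompose
      (by rw [← mem_sphere_zero_iff_norm]; exact x.prop.1 i)
      (mem_sphere_ne_zero (x.prop.1 i)) hmki
    show sgn (decide (0 < ⟪uvec y i, x.val i⟫)) • uvec y i = x.val i
    have hueq : uvec y i = unitRep (y.val i) := rfl
    rcases hpm with h | h
    · rw [hueq, h, show sgn (decide ((0:ℝ) < 1)) = 1 by norm_num [sgn], one_smul]
      rw [hdec, h, one_smul]
    · rw [hueq, h, show sgn (decide ((0:ℝ) < -1)) = -1 by norm_num [sgn]]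
      rw [hdec, h]
  right_inv := by
    intro ε
    funext i
    show decide (0 < ⟪uvec y i, sgn (ε i) • uvec y i⟫) = ε i
    rw [real_inner_smul_right]
    exact decide_sgn_mul (ε i) (by rw [inner_uvec_self y i]; norm_num)

end GCAux


/-- the map `W_{k,n}(S^m) → W_{k,n}(ℝP^m)` induced by the antipodal quotient
`S^m → ℝP^m` is a covering map all of whose fibers have exactly `2^n` elements. -/
theorem isCoveringMap_genConfig_sphere_to_proj (m k n : ℕ) (hm : 1 ≤ m) (hk : 1 ≤ k)
    (hkn : k ≤ n) :
    IsCoveringMap (fun x : genConfig k n (Metric.sphere (0 : EuclideanSpace ℝ (Fin (m + 1))) 1) =>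
      (⟨fun i => Projectivization.mk ℝ (x.val i) (mem_sphere_ne_zero (x.prop.1 i)),
        mk_mem_genConfigP x.prop⟩ :
          genConfigP ℝ (EuclideanSpace ℝ (Fin (m + 1))) k n)) ∧
    ∀ y : genConfigP ℝ (EuclideanSpace ℝ (Fin (m + 1))) k n,
      Nat.card {x : genConfig k n (Metric.sphere (0 : EuclideanSpace ℝ (Fin (m + 1))) 1) //
        (⟨fun i => Projectivization.mk ℝ (x.val i) (mem_sphere_ne_zero (x.prop.1 i)),
          mk_mem_genConfigP x.prop⟩ :
            genConfigP ℝ (EuclideanSpace ℝ (Fin (m + 1))) k n) = y} = 2 ^ n := by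
  constructor
  · intro y
    exact IsEvenlyCovered.to_isEvenlyCovered_preimage
      (IsEvenlyCovered.of_trivialization (t := GCAux.triv y) (GCAux.mem_base_self y))
  · intro y
    have h1 := Nat.card_congr (GCAux.fiberEquiv y)
    rw [h1]
    simp [Nat.card_eq_fintype_card]
end
end

section
/- Let m ≥ 1 and let π : W_{m,m+1}(S^m) → W_{m,m}(S^m) be defined by π(p_1,...,p_m,p_{m+1}) = (p_1,...,p_m). Then π is a locally trivial fiber bundle with fiber F = S^m − Q_{m−1,m}(S^m)_{b_m}: for every q ∈ W_{m,m}(S^m) there exist an open neighborhood U of q and a homeomorphism h : π^{-1}(U) → U × F such that the composition of h with the projection U × F → U equals π on π^{-1}(U). -/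
noncomputable section

/-- `Q_{j,n}(M)_p`: the set of points `x ∈ M` such that for some `j`-element subset
`{i_1,...,i_j} ⊆ {1,...,n}` the vectors `x, p_{i_1}, ..., p_{i_j}` are linearly dependent. -/
def QSet {V : Type*} [AddCommGroup V] [Module ℝ V] (j n : ℕ) (M : Set V)
    (p : Fin n → V) : Set V :=
  {x ∈ M | ∃ s : Finset (Fin n), s.card = j ∧
    ¬ LinearIndependent ℝ (fun o : Option s => Option.elim o x (fun i => p i.val))}

lemma forget_mem {V : Type*} [AddCommGroup V] [Module ℝ V] {k n : ℕ} {M : Set V}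
    {x : Fin (n + 1) → V} (hx : x ∈ genConfig k (n + 1) M) :
    (fun i : Fin n => x i.castSucc) ∈ genConfig k n M := by
  refine ⟨fun i => hx.1 _, fun s hs => ?_⟩
  have h2 := hx.2 (s.map Fin.castSuccEmb) (by rwa [Finset.card_map])
  have h3 : (fun i : s => x (i.val.castSucc)) =
      (fun j : (s.map Fin.castSuccEmb) => x j.val) ∘
        (fun i : s => (⟨Fin.castSucc i.val, Finset.mem_map_of_mem _ i.2⟩ :
          (s.map Fin.castSuccEmb : Finset (Fin (n + 1))))) := rfl
  rw [h3]
  exact h2.comp _ fun a b hab => by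
    apply Subtype.ext
    exact Fin.castSucc_injective _ (congrArg Subtype.val hab)

/-- The projection `W_{k,n+1}(M) → W_{k,n}(M)` forgetting the last entry of a tuple. -/
def forgetLast {V : Type*} [AddCommGroup V] [Module ℝ V] [TopologicalSpace V] {k n : ℕ}
    {M : Set V} (x : genConfig k (n + 1) M) : genConfig k n M :=
  ⟨fun i => x.val i.castSucc, forget_mem x.prop⟩

/-! ### Auxiliary lemmas -/

lemma li_smul_iff {ι V : Type*} [AddCommGroup V] [Module ℝ V] {c : ι → ℝ} (hc : ∀ i, c i ≠ 0)
    (f : ι → V) : LinearIndependent ℝ (fun i => c i • f i) ↔ LinearIndependent ℝ f := by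
  constructor
  · intro h
    have := h.units_smul (fun i => (Units.mk0 (c i) (hc i))⁻¹)
    convert this using 1
    funext i
    show f i = _
    simp only [Pi.smul_apply']
    rw [Units.smul_def, Units.val_inv_eq_inv_val, Units.val_mk0, smul_smul,
      inv_mul_cancel₀ (hc i), one_smul]
  · intro h
    have := h.units_smul (fun i => Units.mk0 (c i) (hc i))
    convert this using 1
    funext i; rfl

lemma li_smul_equiv_iff {ι V : Type*} [AddCommGroup V] [Module ℝ V]
    (T : V ≃ₗ[ℝ] V) {c : ι → ℝ} (hc : ∀ i, c i ≠ 0) (f : ι → V) :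
    LinearIndependent ℝ (fun i => c i • T (f i)) ↔ LinearIndependent ℝ f := by
  rw [li_smul_iff hc]
  have : (fun i => T (f i)) = (T : V →ₗ[ℝ] V) ∘ f := rfl
  rw [this, LinearMap.linearIndependent_iff _ T.ker]

lemma combo {m : ℕ} (hm : 1 ≤ m) {V : Type*} [AddCommGroup V] [Module ℝ V]
    {v : Fin m → V} (hv : LinearIndependent ℝ v) (x : V) :
    (∀ s : Finset (Fin (m + 1)), s.card = m →
        LinearIndependent ℝ (fun i : s => (Fin.snoc v x : Fin (m + 1) → V) i.val)) ↔
    (∀ t : Finset (Fin m), t.card = m - 1 →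
        LinearIndependent ℝ (fun o : Option t => Option.elim o x fun i => v i.val)) := by
  constructor
  · intro hs t ht
    have hlast : Fin.last m ∉ t.map Fin.castSuccEmb := by
      simp only [Finset.mem_map]
      rintro ⟨i, -, hi⟩
      exact (Fin.castSucc_lt_last i).ne hi
    set s : Finset (Fin (m + 1)) := insert (Fin.last m) (t.map Fin.castSuccEmb) with hsdef
    have hcard : s.card = m := by
      rw [Finset.card_insert_of_notMem hlast, Finset.card_map, ht]
      omega
    have h := hs s hcard
    have hmemlast : Fin.last m ∈ s := Finset.mem_insert_self _ _
    have hmemc : ∀ i : t, Fin.castSucc i.val ∈ s := fun i =>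
      Finset.mem_insert_of_mem (Finset.mem_map_of_mem _ i.2)
    let g : Option t → s :=
      fun o => o.elim ⟨Fin.last m, hmemlast⟩ (fun i => ⟨Fin.castSucc i.val, hmemc i⟩)
    have hbij : Function.Bijective g := by
      constructor
      · rintro (_ | a) (_ | b) hab
        · rfl
        · exact absurd (congrArg Subtype.val hab) (Ne.symm ((Fin.castSucc_lt_last _).ne))
        · exact absurd (congrArg Subtype.val hab) ((Fin.castSucc_lt_last _).ne)
        · have := Fin.castSucc_injective _ (congrArg Subtype.val hab)
          rw [Subtype.ext this]
      · rintro ⟨j, hj⟩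
        rcases Finset.mem_insert.1 hj with h1 | h1
        · exact ⟨none, by simp [g, h1]⟩
        · obtain ⟨i, hi, rfl⟩ := Finset.mem_map.1 h1
          exact ⟨some ⟨i, hi⟩, rfl⟩
    have := (linearIndependent_equiv (Equiv.ofBijective g hbij)).2 h
    convert this using 1
    funext o
    rcases o with - | i
    · show x = (Fin.snoc v x : Fin (m + 1) → V) (Fin.last m)
      rw [Fin.snoc_last]
    · show v i.val = (Fin.snoc v x : Fin (m + 1) → V) (Fin.castSucc i.val)
      rw [Fin.snoc_castSucc]
  · intro ht s hs
    by_cases hl : Fin.last m ∈ s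
    · have hsub : s.erase (Fin.last m) ⊆ Finset.univ.map Fin.castSuccEmb := by
        intro j hj
        obtain ⟨i, rfl⟩ := Fin.exists_castSucc_eq.2 (Finset.ne_of_mem_erase hj)
        exact Finset.mem_map_of_mem _ (Finset.mem_univ i)
      obtain ⟨u, -, hu⟩ := Finset.subset_map_iff.1 hsub
      have hucard : u.card = m - 1 := by
        have := Finset.card_erase_of_mem hl
        rw [hu, Finset.card_map] at this
        omega
      have h := ht u hucard
      have hmemc : ∀ i : u, Fin.castSucc i.val ∈ s := by
        intro i
        have : Fin.castSucc i.val ∈ s.erase (Fin.last m) := by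
          rw [hu]; exact Finset.mem_map_of_mem _ i.2
        exact Finset.mem_of_mem_erase this
      let g : Option u → s := fun o => o.elim ⟨Fin.last m, hl⟩
        (fun i => ⟨Fin.castSucc i.val, hmemc i⟩)
      have hbij : Function.Bijective g := by
        constructor
        · rintro (_ | a) (_ | b) hab
          · rfl
          · exact absurd (congrArg Subtype.val hab) (Ne.symm ((Fin.castSucc_lt_last _).ne))
          · exact absurd (congrArg Subtype.val hab) ((Fin.castSucc_lt_last _).ne)
          · have := Fin.castSucc_injective _ (congrArg Subtype.val hab)
            rw [Subtype.ext this]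
        · rintro ⟨j, hj⟩
          by_cases hje : j = Fin.last m
          · exact ⟨none, by simp [g, hje]⟩
          · have : j ∈ u.map Fin.castSuccEmb := by
              rw [← hu]; exact Finset.mem_erase.2 ⟨hje, hj⟩
            obtain ⟨i, hi, rfl⟩ := Finset.mem_map.1 this
            exact ⟨some ⟨i, hi⟩, rfl⟩
      rw [← linearIndependent_equiv (Equiv.ofBijective g hbij)]
      convert h using 1
      funext o
      rcases o with - | i
      · show (Fin.snoc v x : Fin (m + 1) → V) (Fin.last m) = x
        rw [Fin.snoc_last]
      · show (Fin.snoc v x : Fin (m + 1) → V) (Fin.castSucc i.val) = v i.val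
        rw [Fin.snoc_castSucc]
    · have hne : ∀ j : s, (j : Fin (m + 1)) ≠ Fin.last m := fun j hj => hl (hj ▸ j.2)
      let g : s → Fin m := fun j => (j : Fin (m + 1)).castPred (hne j)
      have hginj : Function.Injective g := by
        intro a b hab
        apply Subtype.ext
        have := congrArg Fin.castSucc hab
        rwa [Fin.castSucc_castPred, Fin.castSucc_castPred] at this
      have : (fun i : s => (Fin.snoc v x : Fin (m + 1) → V) i.val) = v ∘ g := by
        funext j
        show (Fin.snoc v x : Fin (m + 1) → V) j.val = v (g j)
        conv_lhs => rw [← Fin.castSucc_castPred j.val (hne j)]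
        rw [Fin.snoc_castSucc]
      rw [this]
      exact hv.comp g hginj

/-! ### Setup for the sphere -/

abbrev Em (m : ℕ) := EuclideanSpace ℝ (Fin (m + 1))
abbrev sph (m : ℕ) : Set (Em m) := Metric.sphere 0 1
abbrev GCm (m : ℕ) := genConfig m m (sph m)
abbrev bb (m : ℕ) : Fin m → Em m := fun i : Fin m => EuclideanSpace.single i.castSucc 1

variable {m : ℕ}

lemma li_val (q' : GCm m) : LinearIndependent ℝ q'.val :=
  (linearIndependent_equiv' (Equiv.subtypeUnivEquiv (fun i => Finset.mem_univ i)) rfl).1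
    (q'.2.2 Finset.univ (by simp))

/-- The family obtained by appending `w` to a configuration. -/
def famf (w : Em m) (q' : GCm m) : Fin (m + 1) → Em m := Fin.snoc q'.val w

lemma cont_famf (w : Em m) : Continuous (famf (m := m) w) := by
  apply continuous_pi
  intro j
  induction j using Fin.lastCases with
  | last =>
      have : (fun q' : GCm m => famf w q' (Fin.last m)) = fun _ => w := by
        funext q'; exact Fin.snoc_last _ _
      rw [this]; exact continuous_const
  | cast i =>
      have : (fun q' : GCm m => famf w q' i.castSucc) = fun q' : GCm m => q'.val i := by
        funext q'; exact Fin.snoc_castSucc _ _ _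
      rw [this]
      exact (continuous_apply i).comp continuous_subtype_val

/-- Reference basis. -/
def eBm (m : ℕ) : Module.Basis (Fin (m + 1)) ℝ (Em m) :=
  (EuclideanSpace.basisFun (Fin (m + 1)) ℝ).toBasis

/-- The trivializing open set. -/
def UU (w : Em m) : Set (GCm m) := {q' | (eBm m).det (famf w q') ≠ 0}

lemma isOpen_UU (w : Em m) : IsOpen (UU (m := m) w) := by
  have hdet : Continuous fun q' : GCm m => (eBm m).det (famf w q') := by
    have hrw : (fun q' : GCm m => (eBm m).det (famf w q'))
        = fun q' : GCm m => Matrix.det (Matrix.of fun i j => (famf w q' j) i) := by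
      funext q'
      rw [eBm, Module.Basis.det_apply]
      congr 1
    rw [hrw]
    exact Continuous.matrix_det (continuous_matrix fun i j =>
      ((continuous_apply i).comp (PiLp.continuous_ofLp 2 _)).comp ((continuous_apply j).comp (cont_famf w)))
  exact isOpen_compl_singleton.preimage hdet

lemma mem_UU_iff (w : Em m) (q' : GCm m) :
    q' ∈ UU w ↔ LinearIndependent ℝ (famf w q') := by
  constructor
  · intro h
    exact ((Module.Basis.is_basis_iff_det (eBm m)).2 (isUnit_iff_ne_zero.2 h)).1
  · intro h
    have hspan : Submodule.span ℝ (Set.range (famf w q')) = ⊤ :=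
      h.span_eq_top_of_card_eq_finrank (by simp)
    exact ((Module.Basis.is_basis_iff_det (eBm m)).1 ⟨h, hspan⟩).ne_zero

/-- The linear map sending the standard basis to the extended configuration. -/
def TTf (w : Em m) (q' : GCm m) : Em m →L[ℝ] Em m :=
  LinearMap.toContinuousLinearMap ((eBm m).constr ℝ (famf w q'))

lemma cont_TTf (w : Em m) : Continuous (TTf (m := m) w) := by
  have : TTf (m := m) w =
      (fun f : Fin (m + 1) → Em m => LinearMap.toContinuousLinearMap ((eBm m).constr ℝ f))
        ∘ famf w := rfl
  rw [this]
  exact (LinearMap.continuous_of_finiteDimensional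
    ((LinearMap.toContinuousLinearMap :
        (Em m →ₗ[ℝ] Em m) ≃ₗ[ℝ] (Em m →L[ℝ] Em m)).toLinearMap.comp
      (((eBm m).constr ℝ :
        (Fin (m + 1) → Em m) ≃ₗ[ℝ] (Em m →ₗ[ℝ] Em m)).toLinearMap))).comp (cont_famf w)

lemma TTf_basis (w : Em m) (q' : GCm m) (i : Fin (m + 1)) :
    TTf w q' (eBm m i) = famf w q' i := by
  rw [TTf, LinearMap.coe_toContinuousLinearMap', Module.Basis.constr_basis]

lemma TTf_b (w : Em m) (q' : GCm m) (i : Fin m) :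
    TTf w q' (bb m i) = q'.val i := by
  have h1 : bb m i = eBm m i.castSucc := by
    rw [eBm, OrthonormalBasis.coe_toBasis, EuclideanSpace.basisFun_apply]
  rw [h1, TTf_basis]
  exact Fin.snoc_castSucc _ _ _

lemma exists_Te (w : Em m) (q' : GCm m) (hq' : q' ∈ UU w) :
    ∃ Te : Em m ≃ₗ[ℝ] Em m, ⇑(TTf w q') = ⇑Te ∧
      ⇑(Ring.inverse (TTf w q')) = ⇑Te.symm ∧ IsUnit (TTf w q') := by
  have hli : LinearIndependent ℝ (famf w q') := (mem_UU_iff w q').1 hq'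
  have hspan : Submodule.span ℝ (Set.range (famf w q')) = ⊤ :=
    hli.span_eq_top_of_card_eq_finrank (by simp)
  let B : Module.Basis (Fin (m + 1)) ℝ (Em m) := Module.Basis.mk hli hspan.ge
  let Te : Em m ≃ₗ[ℝ] Em m := (eBm m).equiv B (Equiv.refl _)
  have hfun : ⇑(TTf w q') = ⇑Te := by
    have h2 : ((TTf w q' : Em m →L[ℝ] Em m) : Em m →ₗ[ℝ] Em m) = Te.toLinearMap := by
      apply (eBm m).ext
      intro i
      show TTf w q' (eBm m i) = Te (eBm m i)
      rw [TTf_basis, Module.Basis.equiv_apply, Equiv.refl_apply]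
      exact (Module.Basis.mk_apply hli hspan.ge i).symm
    exact congrArg (fun f : Em m →ₗ[ℝ] Em m => ⇑f) h2
  have hTeinv : TTf w q' * LinearMap.toContinuousLinearMap (Te.symm : Em m →ₗ[ℝ] Em m) = 1 := by
    refine ContinuousLinearMap.ext fun x => ?_
    rw [ContinuousLinearMap.mul_apply, ContinuousLinearMap.one_apply,
      LinearMap.coe_toContinuousLinearMap', hfun]
    exact Te.apply_symm_apply x
  have hTeinv' : LinearMap.toContinuousLinearMap (Te.symm : Em m →ₗ[ℝ] Em m) * TTf w q' = 1 := by
    refine ContinuousLinearMap.ext fun x => ?_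
    rw [ContinuousLinearMap.mul_apply, ContinuousLinearMap.one_apply,
      LinearMap.coe_toContinuousLinearMap', hfun]
    exact Te.symm_apply_apply x
  let u : (Em m →L[ℝ] Em m)ˣ :=
    ⟨TTf w q', LinearMap.toContinuousLinearMap (Te.symm : Em m →ₗ[ℝ] Em m), hTeinv, hTeinv'⟩
  refine ⟨Te, hfun, ?_, ⟨u, rfl⟩⟩
  have : Ring.inverse (TTf w q') = ↑u⁻¹ := Ring.inverse_unit u
  rw [this]
  show ⇑(LinearMap.toContinuousLinearMap (Te.symm : Em m →ₗ[ℝ] Em m)) = ⇑Te.symm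
  rw [LinearMap.coe_toContinuousLinearMap']
  rfl

lemma transfer (w : Em m) (q' : GCm m) (Te : Em m ≃ₗ[ℝ] Em m) (hTe : ⇑(TTf w q') = ⇑Te)
    (y : Em m) (c : ℝ) (hc : c ≠ 0) (t : Finset (Fin m)) :
    LinearIndependent ℝ
        (fun o : Option t => Option.elim o (c • TTf w q' y) (fun i => q'.val i.val)) ↔
      LinearIndependent ℝ (fun o : Option t => Option.elim o y (fun i => bb m i.val)) := by
  have hco : ∀ o : Option t, (Option.elim o c fun _ => (1 : ℝ)) ≠ 0 := by
    rintro (_ | i) <;> simp [hc]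
  have hfe : (fun o : Option t => Option.elim o (c • TTf w q' y) (fun i => q'.val i.val))
      = fun o : Option t =>
          (Option.elim o c fun _ => (1 : ℝ)) • Te (Option.elim o y (fun i => bb m i.val)) := by
    funext o
    rcases o with - | i
    · show c • TTf w q' y = c • Te y
      rw [congrFun hTe y]
    · show q'.val i.val = (1 : ℝ) • Te (bb m i.val)
      rw [one_smul, ← congrFun hTe (bb m i.val), TTf_b]
  rw [hfe, li_smul_equiv_iff Te hco]

lemma forward_mem (hm : 1 ≤ m) (w : Em m) (x : genConfig m (m + 1) (sph m))
    (hx : forgetLast x ∈ UU w) :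
    ‖Ring.inverse (TTf w (forgetLast x)) (x.val (Fin.last m))‖⁻¹ •
        Ring.inverse (TTf w (forgetLast x)) (x.val (Fin.last m)) ∈
      sph m \ QSet (m - 1) m (sph m) (bb m) := by
  obtain ⟨Te, hTe, hTinv, -⟩ := exists_Te w (forgetLast x) hx
  set q' : GCm m := forgetLast x with hq'
  set xl : Em m := x.val (Fin.last m) with hxldef
  have hxl : ‖xl‖ = 1 := mem_sphere_zero_iff_norm.1 (x.2.1 (Fin.last m))
  have hxl0 : xl ≠ 0 := fun h => by simp [h] at hxl
  set z : Em m := Ring.inverse (TTf w q') xl with hzdef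
  have hz : z = Te.symm xl := congrFun hTinv xl
  have hz0 : z ≠ 0 := by
    rw [hz]
    exact fun h => hxl0 (by simpa using Te.symm.map_eq_zero_iff.1 h)
  have hnz : ‖z‖ ≠ 0 := norm_ne_zero_iff.2 hz0
  set y : Em m := ‖z‖⁻¹ • z with hydef
  have hysph : y ∈ sph m := mem_sphere_zero_iff_norm.2
    (by rw [hydef, norm_smul, norm_inv, norm_norm, inv_mul_cancel₀ hnz])
  have hkey : ‖z‖ • TTf w q' y = xl := by
    rw [hydef, congrFun hTe, map_smul, hz, Te.apply_symm_apply,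
      smul_inv_smul₀ (hz ▸ hnz : ‖Te.symm xl‖ ≠ 0)]
  have hxsnoc : x.val = Fin.snoc q'.val xl := by
    funext j
    induction j using Fin.lastCases with
    | last => rw [Fin.snoc_last]
    | cast i => rw [Fin.snoc_castSucc]; rfl
  have hP : ∀ t : Finset (Fin m), t.card = m - 1 →
      LinearIndependent ℝ (fun o : Option t => Option.elim o xl fun i => q'.val i.val) := by
    have hs := x.2.2
    rw [hxsnoc] at hs
    exact (combo hm (li_val q') xl).1 hs
  refine ⟨hysph, ?_⟩
  rintro ⟨-, t, ht, hn⟩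
  refine hn ((transfer w q' Te hTe y ‖z‖ hnz t).1 ?_)
  rw [hkey]
  exact hP t ht

lemma backward_mem (hm : 1 ≤ m) (w : Em m) (q' : GCm m) (hq' : q' ∈ UU w) (y : Em m)
    (hy : y ∈ sph m \ QSet (m - 1) m (sph m) (bb m)) :
    (Fin.snoc q'.val (‖TTf w q' y‖⁻¹ • TTf w q' y) : Fin (m + 1) → Em m) ∈
      genConfig m (m + 1) (sph m) := by
  obtain ⟨Te, hTe, -, -⟩ := exists_Te w q' hq'
  have hynorm : ‖y‖ = 1 := mem_sphere_zero_iff_norm.1 hy.1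
  have hy0 : y ≠ 0 := fun h => by simp [h] at hynorm
  have hTy0 : TTf w q' y ≠ 0 := by
    rw [congrFun hTe]
    exact fun h => hy0 (by simpa using Te.map_eq_zero_iff.1 h)
  have hnTy : ‖TTf w q' y‖ ≠ 0 := norm_ne_zero_iff.2 hTy0
  have hc : (‖TTf w q' y‖⁻¹ : ℝ) ≠ 0 := inv_ne_zero hnTy
  have hP : ∀ t : Finset (Fin m), t.card = m - 1 →
      LinearIndependent ℝ (fun o : Option t => Option.elim o y fun i => bb m i.val) := by
    intro t ht
    by_contra hn
    exact hy.2 ⟨hy.1, t, ht, hn⟩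
  constructor
  · intro j
    induction j using Fin.lastCases with
    | last =>
        rw [Fin.snoc_last]
        show _ ∈ Metric.sphere _ _
        rw [mem_sphere_zero_iff_norm, norm_smul, norm_inv, norm_norm, inv_mul_cancel₀ hnTy]
    | cast i =>
        rw [Fin.snoc_castSucc]
        exact q'.2.1 i
  · exact (combo hm (li_val q') (‖TTf w q' y‖⁻¹ • TTf w q' y)).2
      (fun t ht => (transfer w q' Te hTe y _ hc t).2 (hP t ht))

lemma rt1 (w : Em m) (q' : GCm m) (hq' : q' ∈ UU w) (xl : Em m) (hxl : ‖xl‖ = 1) :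
    ‖TTf w q' (‖Ring.inverse (TTf w q') xl‖⁻¹ • Ring.inverse (TTf w q') xl)‖⁻¹ •
        TTf w q' (‖Ring.inverse (TTf w q') xl‖⁻¹ • Ring.inverse (TTf w q') xl) = xl := by
  obtain ⟨Te, hTe, hTinv, -⟩ := exists_Te w q' hq'
  have hxl0 : xl ≠ 0 := fun h => by simp [h] at hxl
  set z : Em m := Ring.inverse (TTf w q') xl with hzdef
  have hz : z = Te.symm xl := congrFun hTinv xl
  have hz0 : z ≠ 0 := by
    rw [hz]
    exact fun h => hxl0 (by simpa using Te.symm.map_eq_zero_iff.1 h)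
  have hnz : ‖z‖ ≠ 0 := norm_ne_zero_iff.2 hz0
  have h1 : TTf w q' (‖z‖⁻¹ • z) = ‖z‖⁻¹ • xl := by
    rw [congrFun hTe, map_smul, hz, Te.apply_symm_apply]
  rw [h1, norm_smul, norm_inv, norm_norm, hxl, mul_one, inv_inv, smul_inv_smul₀ hnz]

lemma rt2 (w : Em m) (q' : GCm m) (hq' : q' ∈ UU w) (y : Em m) (hy : ‖y‖ = 1) :
    ‖Ring.inverse (TTf w q') (‖TTf w q' y‖⁻¹ • TTf w q' y)‖⁻¹ •
        Ring.inverse (TTf w q') (‖TTf w q' y‖⁻¹ • TTf w q' y) = y := by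
  obtain ⟨Te, hTe, hTinv, -⟩ := exists_Te w q' hq'
  have hy0 : y ≠ 0 := fun h => by simp [h] at hy
  have hTy0 : TTf w q' y ≠ 0 := by
    rw [congrFun hTe]
    exact fun h => hy0 (by simpa using Te.map_eq_zero_iff.1 h)
  have hnTy : ‖TTf w q' y‖ ≠ 0 := norm_ne_zero_iff.2 hTy0
  have h1 : Ring.inverse (TTf w q') (‖TTf w q' y‖⁻¹ • TTf w q' y) = ‖TTf w q' y‖⁻¹ • y := by
    rw [congrFun hTinv, map_smul, congrFun hTe, Te.symm_apply_apply]
  rw [h1, norm_smul, norm_inv, norm_norm, hy, mul_one, inv_inv, smul_inv_smul₀ hnTy]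

/-- for `m ≥ 1` the projection `π : W_{m,m+1}(S^m) → W_{m,m}(S^m)` forgetting the
last entry is a locally trivial fiber bundle with fiber `S^m − Q_{m−1,m}(S^m)_{b_m}`, where
`b_m = (e_1,...,e_m)`. -/
theorem forgetLast_isFiberBundle_sphere_m (m : ℕ) (hm : 1 ≤ m)
    (q : genConfig m m (Metric.sphere (0 : EuclideanSpace ℝ (Fin (m + 1))) 1)) :
    ∃ U : Set (genConfig m m (Metric.sphere (0 : EuclideanSpace ℝ (Fin (m + 1))) 1)),
      IsOpen U ∧ q ∈ U ∧
      ∃ h : (forgetLast ⁻¹' U) ≃ₜ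
          U × ((Metric.sphere (0 : EuclideanSpace ℝ (Fin (m + 1))) 1) \
            QSet (m - 1) m (Metric.sphere (0 : EuclideanSpace ℝ (Fin (m + 1))) 1)
              (fun i : Fin m => EuclideanSpace.single i.castSucc 1) :
                Set (EuclideanSpace ℝ (Fin (m + 1)))),
        ∀ x, ((h x).1 : genConfig m m (Metric.sphere (0 : EuclideanSpace ℝ (Fin (m + 1))) 1)) =
          forgetLast x.val := by
  obtain ⟨w, hw⟩ := exists_linearIndependent_snoc_of_lt_finrank (li_val q)
    (by rw [finrank_euclideanSpace_fin]; omega)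
  have hforget : ∀ (t : Fin (m + 1) → Em m) (ht : t ∈ genConfig m (m + 1) (sph m))
      (q' : GCm m), (∀ i : Fin m, t i.castSucc = q'.val i) →
      forgetLast ⟨t, ht⟩ = q' := by
    intro t ht q' h
    apply Subtype.ext
    funext i
    exact h i
  refine ⟨UU w, isOpen_UU w, (mem_UU_iff w q).2 hw, ?_⟩
  have hGmem : ∀ (p : ↥(UU (m := m) w) × ↥(sph m \ QSet (m - 1) m (sph m) (bb m))),
      (⟨Fin.snoc p.1.1.1 (‖TTf w p.1.1 p.2.1‖⁻¹ • TTf w p.1.1 p.2.1),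
        backward_mem hm w p.1.1 p.1.2 p.2.1 p.2.2⟩ : ↥(genConfig m (m + 1) (sph m))) ∈
        forgetLast ⁻¹' UU w := by
    intro p
    have : forgetLast (⟨Fin.snoc p.1.1.1 (‖TTf w p.1.1 p.2.1‖⁻¹ • TTf w p.1.1 p.2.1),
        backward_mem hm w p.1.1 p.1.2 p.2.1 p.2.2⟩ : ↥(genConfig m (m + 1) (sph m))) = p.1.1 :=
      hforget _ _ p.1.1 (fun i => Fin.snoc_castSucc _ _ i)
    rw [Set.mem_preimage]
    rw [this]
    exact p.1.2
  refine ⟨{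
    toFun := fun x => (⟨forgetLast x.1, x.2⟩,
      ⟨‖Ring.inverse (TTf w (forgetLast x.1)) (x.1.1 (Fin.last m))‖⁻¹ •
          Ring.inverse (TTf w (forgetLast x.1)) (x.1.1 (Fin.last m)),
        forward_mem hm w x.1 x.2⟩)
    invFun := fun p => ⟨⟨Fin.snoc p.1.1.1 (‖TTf w p.1.1 p.2.1‖⁻¹ • TTf w p.1.1 p.2.1),
      backward_mem hm w p.1.1 p.1.2 p.2.1 p.2.2⟩, hGmem p⟩
    left_inv := ?_
    right_inv := ?_
    continuous_toFun := ?_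
    continuous_invFun := ?_ }, fun x => rfl⟩
  · -- left inverse
    intro x
    apply Subtype.ext
    apply Subtype.ext
    funext j
    show (Fin.snoc (forgetLast x.1).val _ : Fin (m + 1) → Em m) j = x.1.1 j
    induction j using Fin.lastCases with
    | last =>
        rw [Fin.snoc_last]
        exact rt1 w (forgetLast x.1) x.2 _
          (mem_sphere_zero_iff_norm.1 (x.1.2.1 (Fin.last m)))
    | cast i => rw [Fin.snoc_castSucc]; rfl
  · -- right inverse
    intro p
    have h1 : forgetLast (⟨Fin.snoc p.1.1.1 (‖TTf w p.1.1 p.2.1‖⁻¹ • TTf w p.1.1 p.2.1),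
        backward_mem hm w p.1.1 p.1.2 p.2.1 p.2.2⟩ : ↥(genConfig m (m + 1) (sph m))) = p.1.1 :=
      hforget _ _ p.1.1 (fun i => Fin.snoc_castSucc _ _ i)
    apply Prod.ext
    · exact Subtype.ext h1
    · apply Subtype.ext
      show ‖Ring.inverse (TTf w (forgetLast _))
            ((Fin.snoc p.1.1.1 (‖TTf w p.1.1 p.2.1‖⁻¹ • TTf w p.1.1 p.2.1) : Fin (m + 1) → Em m)
              (Fin.last m))‖⁻¹ •
          Ring.inverse (TTf w (forgetLast _))
            ((Fin.snoc p.1.1.1 (‖TTf w p.1.1 p.2.1‖⁻¹ • TTf w p.1.1 p.2.1) : Fin (m + 1) → Em m)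
              (Fin.last m)) = p.2.1
      rw [h1, Fin.snoc_last]
      exact rt2 w p.1.1 p.1.2 p.2.1 (mem_sphere_zero_iff_norm.1 p.2.2.1)
  · -- continuity of toFun
    have hπ : Continuous fun x : ↥(forgetLast ⁻¹' UU (m := m) w) => forgetLast x.1 := by
      show Continuous fun x : ↥(forgetLast ⁻¹' UU (m := m) w) =>
        (⟨fun i => x.1.1 i.castSucc, forget_mem x.1.2⟩ : ↥(GCm m))
      have h0 : Continuous fun x : ↥(forgetLast ⁻¹' UU (m := m) w) =>
          (x.1.1 : Fin (m + 1) → Em m) := continuous_subtype_val.comp continuous_subtype_val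
      exact Continuous.subtype_mk
        (continuous_pi fun i => (continuous_apply (Fin.castSucc i)).comp h0) _
    refine Continuous.prodMk (Continuous.subtype_mk hπ _) (Continuous.subtype_mk ?_ _)
    rw [continuous_iff_continuousAt]
    intro x₀
    obtain ⟨Te, hTe, hTinv, hU⟩ := exists_Te w (forgetLast x₀.1) x₀.2
    have hlastc : Continuous fun x : ↥(forgetLast ⁻¹' UU (m := m) w) => x.1.1 (Fin.last m) :=
      (continuous_apply (Fin.last m)).comp (continuous_subtype_val.comp continuous_subtype_val)
    have hinvc : ContinuousAt (fun x : ↥(forgetLast ⁻¹' UU (m := m) w) =>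
        Ring.inverse (TTf w (forgetLast x.1))) x₀ := by
      have h1 : ContinuousAt Ring.inverse (TTf w (forgetLast x₀.1)) := by
        have := NormedRing.inverse_continuousAt hU.unit
        rwa [IsUnit.unit_spec] at this
      have hcomp : Continuous fun x : ↥(forgetLast ⁻¹' UU (m := m) w) =>
          TTf w (forgetLast x.1) := (cont_TTf w).comp hπ
      exact ContinuousAt.comp (g := Ring.inverse)
        (f := fun x : ↥(forgetLast ⁻¹' UU (m := m) w) => TTf w (forgetLast x.1)) (x := x₀) h1
        hcomp.continuousAt
    have hz : ContinuousAt (fun x : ↥(forgetLast ⁻¹' UU (m := m) w) =>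
        Ring.inverse (TTf w (forgetLast x.1)) (x.1.1 (Fin.last m))) x₀ :=
      hinvc.clm_apply hlastc.continuousAt
    have hz0 : Ring.inverse (TTf w (forgetLast x₀.1)) (x₀.1.1 (Fin.last m)) ≠ 0 := by
      rw [hTinv]
      intro h
      have h2 := Te.symm.map_eq_zero_iff.1 h
      have hxl : ‖x₀.1.1 (Fin.last m)‖ = 1 := mem_sphere_zero_iff_norm.1 (x₀.1.2.1 _)
      rw [h2] at hxl
      simp at hxl
    exact (hz.norm.inv₀ (norm_ne_zero_iff.2 hz0)).smul hz
  · -- continuity of invFun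
    have hTyc : Continuous fun p : ↥(UU (m := m) w) × ↥(sph m \ QSet (m - 1) m (sph m) (bb m)) =>
        TTf w p.1.1 p.2.1 :=
      isBoundedBilinearMap_apply.continuous.comp
        (((cont_TTf w).comp (continuous_subtype_val.comp continuous_fst)).prodMk
          (continuous_subtype_val.comp continuous_snd))
    have hTy0 : ∀ p : ↥(UU (m := m) w) × ↥(sph m \ QSet (m - 1) m (sph m) (bb m)),
        TTf w p.1.1 p.2.1 ≠ 0 := by
      intro p
      obtain ⟨Te, hTe, -, -⟩ := exists_Te w p.1.1 p.1.2
      rw [hTe]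
      intro h
      have h2 := Te.map_eq_zero_iff.1 h
      have hy : ‖p.2.1‖ = 1 := mem_sphere_zero_iff_norm.1 p.2.2.1
      rw [h2] at hy
      simp at hy
    have hnx : Continuous fun p : ↥(UU (m := m) w) × ↥(sph m \ QSet (m - 1) m (sph m) (bb m)) =>
        ‖TTf w p.1.1 p.2.1‖⁻¹ • TTf w p.1.1 p.2.1 :=
      ((hTyc.norm).inv₀ (fun p => norm_ne_zero_iff.2 (hTy0 p))).smul hTyc
    refine Continuous.subtype_mk (Continuous.subtype_mk ?_ _) _
    apply continuous_pi
    intro j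
    induction j using Fin.lastCases with
    | last =>
        have : (fun p : ↥(UU (m := m) w) × ↥(sph m \ QSet (m - 1) m (sph m) (bb m)) =>
            (Fin.snoc p.1.1.1 (‖TTf w p.1.1 p.2.1‖⁻¹ • TTf w p.1.1 p.2.1) :
              Fin (m + 1) → Em m) (Fin.last m)) =
            fun p => ‖TTf w p.1.1 p.2.1‖⁻¹ • TTf w p.1.1 p.2.1 := by
          funext p; exact Fin.snoc_last _ _
        rw [this]
        exact hnx
    | cast i =>
        have : (fun p : ↥(UU (m := m) w) × ↥(sph m \ QSet (m - 1) m (sph m) (bb m)) =>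
            (Fin.snoc p.1.1.1 (‖TTf w p.1.1 p.2.1‖⁻¹ • TTf w p.1.1 p.2.1) :
              Fin (m + 1) → Em m) i.castSucc) = fun p => p.1.1.1 i := by
          funext p; exact Fin.snoc_castSucc _ _ _
        rw [this]
        exact (continuous_apply i).comp
          (continuous_subtype_val.comp (continuous_subtype_val.comp continuous_fst))
end
end

section
/- Let m ≥ 1 and let π : W_{m+1,m+2}(S^m) → W_{m+1,m+1}(S^m) be defined by π(p_1,...,p_{m+1},p_{m+2}) = (p_1,...,p_{m+1}). Then π is a locally trivial fiber bundle with fiber F = S^m − Q_{m,m+1}(S^m)_{b_{m+1}}: for every q ∈ W_{m+1,m+1}(S^m) there exist an open neighborhood U of q and a homeomorphism h : π^{-1}(U) → U × F whose composition with the projection U × F → U equals π on π^{-1}(U). -/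
noncomputable section

namespace FBAux

open Matrix

variable {n : ℕ}

abbrev Euc (n : ℕ) := EuclideanSpace ℝ (Fin n)

/-- Matrix whose columns are the given vectors. -/
def matOf (p : Fin n → Euc n) : Matrix (Fin n) (Fin n) ℝ :=
  Matrix.of fun i j => p j i

def mv (M : Matrix (Fin n) (Fin n) ℝ) (x : Euc n) : Euc n :=
  WithLp.toLp 2 (M *ᵥ WithLp.ofLp x)

infixr:73 " *ᵥₑ " => FBAux.mv

lemma mv_zero (M : Matrix (Fin n) (Fin n) ℝ) : M *ᵥₑ (0 : Euc n) = 0 := by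
  simp [mv]

lemma isUnit_matOf {p : Fin n → Euc n} (hp : LinearIndependent ℝ p) :
    IsUnit (matOf p) := by
  rw [← Matrix.linearIndependent_cols_iff_isUnit]
  exact hp.map' (WithLp.linearEquiv 2 ℝ (Fin n → ℝ)).toLinearMap
    (WithLp.linearEquiv 2 ℝ (Fin n → ℝ)).ker

lemma matOf_mulVec_single (p : Fin n → Euc n) (j : Fin n) :
    (matOf p) *ᵥₑ (EuclideanSpace.single j (1:ℝ) : Euc n) = p j := by
  ext i
  simp [mv, matOf, Matrix.mulVec, dotProduct, EuclideanSpace.single_apply]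

lemma mulVec_nonsing_inv_mulVec {M : Matrix (Fin n) (Fin n) ℝ} (hM : IsUnit M)
    (x : Euc n) : M *ᵥₑ (M⁻¹ *ᵥₑ x) = x := by
  simp only [mv, WithLp.ofLp_toLp, Matrix.mulVec_mulVec,
    Matrix.mul_nonsing_inv _ ((Matrix.isUnit_iff_isUnit_det _).mp hM),
    Matrix.one_mulVec, WithLp.toLp_ofLp]

lemma nonsing_inv_mulVec_mulVec {M : Matrix (Fin n) (Fin n) ℝ} (hM : IsUnit M)
    (x : Euc n) : M⁻¹ *ᵥₑ (M *ᵥₑ x) = x := by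
  simp only [mv, WithLp.ofLp_toLp, Matrix.mulVec_mulVec,
    Matrix.nonsing_inv_mul _ ((Matrix.isUnit_iff_isUnit_det _).mp hM),
    Matrix.one_mulVec, WithLp.toLp_ofLp]

def mulVecLinE (M : Matrix (Fin n) (Fin n) ℝ) : Euc n →ₗ[ℝ] Euc n where
  toFun x := M *ᵥₑ x
  map_add' x y := by simp [mv, Matrix.mulVec_add]
  map_smul' c x := by simp [mv, Matrix.mulVec_smul]

lemma indep_mulVec_iff {ι : Type*} {M : Matrix (Fin n) (Fin n) ℝ} (hM : IsUnit M)
    (v : ι → Euc n) :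
    LinearIndependent ℝ (fun i => (M *ᵥₑ (v i) : Euc n)) ↔ LinearIndependent ℝ v := by
  have hinj : Function.Injective (mulVecLinE (n := n) M) := by
    intro a b hab
    have h2 : M⁻¹ *ᵥₑ (M *ᵥₑ a) = M⁻¹ *ᵥₑ (M *ᵥₑ b) :=
      congrArg (fun z : Euc n => (M⁻¹ *ᵥₑ z : Euc n)) hab
    simpa [mulVecLinE, nonsing_inv_mulVec_mulVec hM] using h2
  exact LinearMap.linearIndependent_iff (mulVecLinE M) (LinearMap.ker_eq_bot.mpr hinj)

lemma indep_smul_iff {ι V : Type*} [AddCommGroup V] [Module ℝ V]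
    (c : ι → ℝ) (hc : ∀ i, c i ≠ 0) (v : ι → V) :
    LinearIndependent ℝ (fun i => c i • v i) ↔ LinearIndependent ℝ v := by
  constructor
  · intro h
    have h2 := h.units_smul fun i => (Units.mk0 (c i) (hc i))⁻¹
    have hfe : ((fun i => (Units.mk0 (c i) (hc i))⁻¹) • fun i => c i • v i) = v := by
      funext i
      simp [Pi.smul_apply', Units.smul_def, smul_smul, inv_mul_cancel₀ (hc _)]
    rwa [hfe] at h2
  · intro h
    have h2 := h.units_smul fun i => Units.mk0 (c i) (hc i)
    have hfe : ((fun i => Units.mk0 (c i) (hc i)) • v) = fun i => c i • v i := by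
      funext i
      simp [Pi.smul_apply', Units.smul_def]
    rwa [hfe] at h2

lemma optionElim_indep_mulVec {ι : Type*} {M : Matrix (Fin n) (Fin n) ℝ} (hM : IsUnit M)
    (x : Euc n) (v : ι → Euc n) :
    LinearIndependent ℝ (fun o : Option ι =>
        Option.elim o ((M *ᵥₑ x : Euc n)) (fun i => (M *ᵥₑ v i : Euc n))) ↔
      LinearIndependent ℝ (fun o : Option ι => Option.elim o x v) := by
  have hfe : (fun o : Option ι =>
      Option.elim o ((M *ᵥₑ x : Euc n)) (fun i => (M *ᵥₑ v i : Euc n))) =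
      fun o : Option ι => (M *ᵥₑ ((fun o : Option ι => Option.elim o x v) o) : Euc n) :=
    funext fun o => by cases o <;> rfl
  rw [hfe]
  exact indep_mulVec_iff hM _

lemma optionElim_indep_smul {ι V : Type*} [AddCommGroup V] [Module ℝ V]
    {c : ℝ} (hc : c ≠ 0) (x : V) (v : ι → V) :
    LinearIndependent ℝ (fun o : Option ι => Option.elim o (c • x) v) ↔
      LinearIndependent ℝ (fun o : Option ι => Option.elim o x v) := by
  have hfe : (fun o : Option ι =>
      (Option.elim o c fun _ => (1:ℝ)) • Option.elim o x v) =
      fun o : Option ι => Option.elim o (c • x) v :=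
    funext fun o => by cases o <;> simp
  rw [← hfe]
  exact indep_smul_iff _ (fun o => by cases o <;> simp [hc]) _

def nz (v : Euc n) : Euc n := ‖v‖⁻¹ • v

lemma norm_nz {v : Euc n} (h : v ≠ 0) : ‖nz v‖ = 1 := norm_smul_inv_norm h

lemma nz_of_norm_one {v : Euc n} (h : ‖v‖ = 1) : nz v = v := by simp [nz, h]

lemma nz_smul {a : ℝ} (ha : 0 < a) (v : Euc n) : nz (a • v) = nz v := by
  have h1 : ‖a • v‖⁻¹ = a⁻¹ * ‖v‖⁻¹ := by
    rw [norm_smul, Real.norm_eq_abs, abs_of_pos ha, mul_inv]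
  rw [nz, nz, h1, smul_smul, mul_assoc, mul_comm _ a, ← mul_assoc,
    inv_mul_cancel₀ ha.ne', one_mul]


lemma genConfig_indep {V : Type*} [AddCommGroup V] [Module ℝ V] {k : ℕ} {M : Set V}
    {p : Fin k → V} (hp : p ∈ genConfig k k M) : LinearIndependent ℝ p := by
  have h := hp.2 Finset.univ (by simp)
  exact (linearIndependent_equiv
    (Equiv.subtypeUnivEquiv fun x => Finset.mem_univ x)).mp h

variable {m : ℕ}

abbrev Sph (m : ℕ) : Set (Euc (m+1)) := Metric.sphere 0 1

/-- The key extraction: in `W_{m+1,m+2}`, the last point together with any `m`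
of the first `m+1` points is linearly independent. -/
lemma w2_optIndep {x : Fin (m+2) → Euc (m+1)}
    (hx : x ∈ genConfig (m+1) (m+2) (Sph m))
    (s : Finset (Fin (m+1))) (hs : s.card = m) :
    LinearIndependent ℝ (fun o : Option s =>
      Option.elim o (x (Fin.last (m+1))) (fun i => x i.val.castSucc)) := by
  classical
  set t : Finset (Fin (m+2)) := insert (Fin.last (m+1)) (s.map Fin.castSuccEmb) with ht
  have hlast : Fin.last (m+1) ∉ s.map Fin.castSuccEmb := by
    simp only [Finset.mem_map]
    rintro ⟨i, -, hi⟩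
    exact (Fin.castSucc_lt_last i).ne hi
  have htc : t.card = m + 1 := by
    rw [ht, Finset.card_insert_of_notMem hlast, Finset.card_map, hs]
  have h := hx.2 t htc
  let g : Option s → {i // i ∈ t} := fun o =>
    Option.elim o ⟨Fin.last (m+1), Finset.mem_insert_self _ _⟩
      (fun i => ⟨i.val.castSucc,
        Finset.mem_insert_of_mem (Finset.mem_map_of_mem _ i.2)⟩)
  have hginj : Function.Injective g := by
    rintro (_|a) (_|b) hab
    · rfl
    · exact absurd (congrArg Subtype.val hab).symm (Fin.castSucc_lt_last _).ne
    · exact absurd (congrArg Subtype.val hab) (Fin.castSucc_lt_last _).ne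
    · exact congrArg some (Subtype.ext
        (Fin.castSucc_injective _ (congrArg Subtype.val hab)))
  have hfe : ((fun i : t => x i.val) ∘ g) = fun o : Option s =>
      Option.elim o (x (Fin.last (m+1))) (fun i => x i.val.castSucc) :=
    funext fun o => by cases o <;> rfl
  exact hfe ▸ h.comp g hginj

lemma fib_optIndep {f : Euc (m+1)}
    (hf : f ∈ Sph m \ QSet m (m+1) (Sph m) (fun i => EuclideanSpace.single i 1))
    (s : Finset (Fin (m+1))) (hs : s.card = m) :
    LinearIndependent ℝ (fun o : Option s =>
      Option.elim o f (fun i => (EuclideanSpace.single i.val 1 : Euc (m+1)))) := by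
  by_contra hn
  exact hf.2 ⟨hf.1, s, hs, hn⟩
lemma fwd_mem {x : Fin (m+2) → Euc (m+1)}
    (hx : x ∈ genConfig (m+1) (m+2) (Sph m)) :
    nz ((matOf fun i => x i.castSucc)⁻¹ *ᵥₑ x (Fin.last (m+1))) ∈
      Sph m \ QSet m (m+1) (Sph m) (fun i => EuclideanSpace.single i 1) := by
  have hq : LinearIndependent ℝ (fun i => x (Fin.castSucc i)) :=
    genConfig_indep (forget_mem hx)
  have hM : IsUnit (matOf fun i => x i.castSucc) := isUnit_matOf hq
  set M := matOf fun i => x i.castSucc with hMdef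
  set y := x (Fin.last (m+1)) with hydef
  have hy : ‖y‖ = 1 := by
    have := hx.1 (Fin.last (m+1))
    rwa [mem_sphere_zero_iff_norm] at this
  set w : Euc (m+1) := M⁻¹ *ᵥₑ y with hwdef
  have hw : M *ᵥₑ w = y := mulVec_nonsing_inv_mulVec hM y
  have hwne : w ≠ 0 := by
    intro h0
    rw [h0] at hw
    rw [show (M *ᵥₑ (0 : Euc (m+1)) : Euc (m+1)) = 0 from mv_zero M] at hw
    rw [← hw] at hy
    simp at hy
  constructor
  · rw [mem_sphere_zero_iff_norm]
    exact norm_nz hwne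
  · rintro ⟨-, s, hs, hnli⟩
    apply hnli
    have h1 := w2_optIndep hx s hs
    have hfe : (fun o : Option s => Option.elim o ((M *ᵥₑ w : Euc (m+1)))
        (fun i : s => (M *ᵥₑ (EuclideanSpace.single i.val 1 : Euc (m+1)) : Euc (m+1)))) =
        fun o : Option s => Option.elim o y (fun i : s => x i.val.castSucc) := by
      funext o
      cases o with
      | none => exact hw
      | some i => exact matOf_mulVec_single (fun i => x i.castSucc) i.val
    rw [← hfe] at h1
    have h2 := (optionElim_indep_mulVec hM w
      (fun i : s => (EuclideanSpace.single i.val 1 : Euc (m+1)))).mp h1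
    have h3 := (optionElim_indep_smul
      (inv_ne_zero (norm_ne_zero_iff.mpr hwne)) w
      (fun i : s => (EuclideanSpace.single i.val 1 : Euc (m+1)))).mpr h2
    exact h3
lemma bwd_mem {p : Fin (m+1) → Euc (m+1)}
    (hp : p ∈ genConfig (m+1) (m+1) (Sph m)) {f : Euc (m+1)}
    (hf : f ∈ Sph m \ QSet m (m+1) (Sph m) (fun i => EuclideanSpace.single i 1)) :
    Fin.snoc p (nz ((matOf p) *ᵥₑ f)) ∈ genConfig (m+1) (m+2) (Sph m) := by
  classical
  have hq : LinearIndependent ℝ p := genConfig_indep hp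
  have hM : IsUnit (matOf p) := isUnit_matOf hq
  set M := matOf p with hMdef
  have hfn : ‖f‖ = 1 := by
    have := hf.1
    rwa [mem_sphere_zero_iff_norm] at this
  have hfne : f ≠ 0 := by
    intro h0; rw [h0] at hfn; simp at hfn
  set u : Euc (m+1) := M *ᵥₑ f with hudef
  have hu2 : M⁻¹ *ᵥₑ u = f := nonsing_inv_mulVec_mulVec hM f
  have hune : u ≠ 0 := by
    intro h0
    rw [h0] at hu2
    rw [show (M⁻¹ *ᵥₑ (0 : Euc (m+1)) : Euc (m+1)) = 0 from mv_zero _] at hu2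
    exact hfne hu2.symm
  set y : Euc (m+1) := nz u with hydef
  have hyn : ‖y‖ = 1 := norm_nz hune
  constructor
  · intro i
    refine Fin.lastCases ?_ ?_ i
    · rw [Fin.snoc_last, mem_sphere_zero_iff_norm]
      exact hyn
    · intro j
      rw [Fin.snoc_castSucc]
      exact hp.1 j
  · intro t ht
    by_cases hl : Fin.last (m+1) ∈ t
    · -- t contains the last index
      set s : Finset (Fin (m+1)) := Finset.univ.filter (fun i => i.castSucc ∈ t) with hsdef
      have hmap : s.map Fin.castSuccEmb = t.erase (Fin.last (m+1)) := by
        ext j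
        simp only [Finset.mem_map, Finset.mem_filter, Finset.mem_univ, true_and,
          Finset.mem_erase, hsdef]
        constructor
        · rintro ⟨i, hi, rfl⟩
          exact ⟨(Fin.castSucc_lt_last i).ne, hi⟩
        · rintro ⟨hne, hj⟩
          exact ⟨j.castPred hne, by rwa [Fin.castSucc_castPred],
            Fin.castSucc_castPred j hne⟩
      have hscard : s.card = m := by
        have h1 : (s.map Fin.castSuccEmb).card = (t.erase (Fin.last (m+1))).card := by
          rw [hmap]
        rw [Finset.card_map, Finset.card_erase_of_mem hl, ht] at h1
        simpa using h1
      -- independence of (y, p over s)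
      have h1 := fib_optIndep hf s hscard
      have h2 := (optionElim_indep_mulVec hM f
        (fun i : s => (EuclideanSpace.single i.val 1 : Euc (m+1)))).mpr h1
      have hfe : (fun o : Option s => Option.elim o ((M *ᵥₑ f : Euc (m+1)))
          (fun i : s => (M *ᵥₑ (EuclideanSpace.single i.val 1 : Euc (m+1)) : Euc (m+1)))) =
          fun o : Option s => Option.elim o u (fun i : s => p i.val) := by
        funext o
        cases o with
        | none => rfl
        | some i => exact matOf_mulVec_single p i.val
      rw [hfe] at h2
      have h3 := (optionElim_indep_smul (inv_ne_zero (norm_ne_zero_iff.mpr hune)) u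
        (fun i : s => p i.val)).mpr h2
      -- h3 : LI (elim (‖u‖⁻¹ • u) (p ·)) = LI (elim y (p ·))
      let g : {j // j ∈ t} → Option s := fun j =>
        if h : (j : Fin (m+2)) = Fin.last (m+1) then none
        else some ⟨(j : Fin (m+2)).castPred h, by
          simp only [hsdef, Finset.mem_filter, Finset.mem_univ, true_and,
            Fin.castSucc_castPred]
          exact j.2⟩
      have hgg : ∀ j : {j // j ∈ t},
          Option.elim (g j) (Fin.last (m+1)) (fun i => Fin.castSucc i.val) = j.val := by
        rintro ⟨a, ha⟩
        by_cases h : a = Fin.last (m+1)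
        · simp only [g, dif_pos h, Option.elim]
          exact h.symm
        · simp only [g, dif_neg h, Option.elim]
          exact Fin.castSucc_castPred a h
      have hginj : Function.Injective g := by
        intro a b hab
        exact Subtype.ext ((hgg a).symm.trans
          ((congrArg (fun o => Option.elim o (Fin.last (m+1))
            (fun i => Fin.castSucc i.val)) hab).trans (hgg b)))
      have hfe2 : ((fun o : Option s => Option.elim o (‖u‖⁻¹ • u)
          (fun i : s => p i.val)) ∘ g) = fun j : t => (Fin.snoc p (nz u) : Fin (m+2) → Euc (m+1)) j.val := by
        funext j
        by_cases h : (j : Fin (m+2)) = Fin.last (m+1)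
        · simp only [Function.comp_apply, g, dif_pos h, Option.elim]
          rw [show (j : Fin (m+2)) = Fin.last (m+1) from h, Fin.snoc_last]
          rfl
        · simp only [Function.comp_apply, g, dif_neg h, Option.elim]
          conv_rhs => rw [← Fin.castSucc_castPred (j : Fin (m+2)) h, Fin.snoc_castSucc]
      exact hfe2 ▸ h3.comp g hginj
    · -- t avoids the last index
      set s : Finset (Fin (m+1)) := Finset.univ.filter (fun i => i.castSucc ∈ t) with hsdef
      have hscard : s.card = m + 1 := by
        have hmap : s.map Fin.castSuccEmb = t := by
          ext j
          simp only [Finset.mem_map, Finset.mem_filter, Finset.mem_univ, true_and, hsdef]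
          constructor
          · rintro ⟨i, hi, rfl⟩; exact hi
          · intro hj
            have hne : j ≠ Fin.last (m+1) := fun h0 => hl (h0 ▸ hj)
            exact ⟨j.castPred hne, by rwa [Fin.castSucc_castPred],
              Fin.castSucc_castPred j hne⟩
        rw [← Finset.card_map Fin.castSuccEmb, hmap, ht]
      have h1 := hp.2 s hscard
      let g : {j // j ∈ t} → {i // i ∈ s} := fun j =>
        ⟨(j : Fin (m+2)).castPred (fun h0 => hl (h0 ▸ j.2)), by
          simp only [hsdef, Finset.mem_filter, Finset.mem_univ, true_and,
            Fin.castSucc_castPred]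
          exact j.2⟩
      have hgg : ∀ j : {j // j ∈ t}, Fin.castSucc (g j).val = j.val := by
        rintro ⟨a, ha⟩
        exact Fin.castSucc_castPred a (fun h0 => hl (h0 ▸ ha))
      have hginj : Function.Injective g := by
        intro a b hab
        exact Subtype.ext ((hgg a).symm.trans
          ((congrArg (fun i : {i // i ∈ s} => Fin.castSucc i.val) hab).trans (hgg b)))
      have hfe : ((fun i : s => p i.val) ∘ g) =
          fun j : t => (Fin.snoc p (nz u) : Fin (m+2) → Euc (m+1)) j.val := by
        funext j
        simp only [Function.comp_apply, g]
        conv_rhs => rw [← Fin.castSucc_castPred (j : Fin (m+2))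
          (fun h0 => hl (h0 ▸ j.2)), Fin.snoc_castSucc]
      exact hfe ▸ h1.comp g hginj
lemma nz_apply (v : Euc n) (i : Fin n) : nz v i = ‖v‖⁻¹ * v i := rfl

lemma smul_apply_E (c : ℝ) (v : Euc n) (i : Fin n) : (c • v) i = c * v i := rfl

lemma mulVec_nz {M : Matrix (Fin n) (Fin n) ℝ} {w y : Euc n}
    (hwy : M *ᵥₑ w = y) : (M *ᵥₑ (nz w) : Euc n) = ‖w‖⁻¹ • y := by
  ext i
  have h1 : (M *ᵥₑ (nz w)) i = ∑ j, M i j * (‖w‖⁻¹ * w j) := by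
    simp [mv, Matrix.mulVec, dotProduct, nz_apply]
  have h2 : (‖w‖⁻¹ • y : Euc n) i = ‖w‖⁻¹ * ∑ j, M i j * w j := by
    rw [smul_apply_E, ← hwy]
    simp [mv, Matrix.mulVec, dotProduct]
  rw [h1, h2, Finset.mul_sum]
  exact Finset.sum_congr rfl fun j _ => by ring

lemma nz_mulVec_nz {M : Matrix (Fin n) (Fin n) ℝ} {w y : Euc n}
    (hwy : M *ᵥₑ w = y) (hwne : w ≠ 0) (hy : ‖y‖ = 1) :
    nz (M *ᵥₑ (nz w)) = y := by
  rw [mulVec_nz hwy, nz_smul (inv_pos.mpr (norm_pos_iff.mpr hwne)) _, nz_of_norm_one hy]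

lemma w_ne_zero {x : Fin (m+2) → Euc (m+1)}
    (hx : x ∈ genConfig (m+1) (m+2) (Sph m)) :
    ((matOf fun i => x i.castSucc)⁻¹ *ᵥₑ x (Fin.last (m+1)) : Euc (m+1)) ≠ 0 := by
  have hq : LinearIndependent ℝ (fun i => x (Fin.castSucc i)) :=
    genConfig_indep (forget_mem hx)
  have hM : IsUnit (matOf fun i => x i.castSucc) := isUnit_matOf hq
  have hy : ‖x (Fin.last (m+1))‖ = 1 := by
    have := hx.1 (Fin.last (m+1)); rwa [mem_sphere_zero_iff_norm] at this
  intro h0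
  have hw := mulVec_nonsing_inv_mulVec hM (x (Fin.last (m+1)))
  rw [h0] at hw
  rw [show ((matOf fun i => x i.castSucc) *ᵥₑ (0 : Euc (m+1)) : Euc (m+1)) = 0 from
    mv_zero _] at hw
  rw [← hw] at hy
  simp at hy

lemma u_ne_zero {p : Fin (m+1) → Euc (m+1)}
    (hp : p ∈ genConfig (m+1) (m+1) (Sph m)) {f : Euc (m+1)} (hfn : ‖f‖ = 1) :
    ((matOf p) *ᵥₑ f : Euc (m+1)) ≠ 0 := by
  have hM : IsUnit (matOf p) := isUnit_matOf (genConfig_indep hp)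
  intro h0
  have hu2 := nonsing_inv_mulVec_mulVec hM f
  rw [h0] at hu2
  rw [show ((matOf p)⁻¹ *ᵥₑ (0 : Euc (m+1)) : Euc (m+1)) = 0 from
    mv_zero _] at hu2
  rw [← hu2] at hfn
  simp at hfn

lemma left_inv_eq {x : Fin (m+2) → Euc (m+1)}
    (hx : x ∈ genConfig (m+1) (m+2) (Sph m)) :
    (Fin.snoc (fun i => x i.castSucc)
      (nz ((matOf fun i => x i.castSucc) *ᵥₑ
        nz ((matOf fun i => x i.castSucc)⁻¹ *ᵥₑ x (Fin.last (m+1))))) :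
          Fin (m+2) → Euc (m+1)) = x := by
  have hq : LinearIndependent ℝ (fun i => x (Fin.castSucc i)) :=
    genConfig_indep (forget_mem hx)
  have hM : IsUnit (matOf fun i => x i.castSucc) := isUnit_matOf hq
  have hy : ‖x (Fin.last (m+1))‖ = 1 := by
    have := hx.1 (Fin.last (m+1)); rwa [mem_sphere_zero_iff_norm] at this
  funext i
  refine Fin.lastCases ?_ ?_ i
  · rw [Fin.snoc_last]
    exact nz_mulVec_nz (mulVec_nonsing_inv_mulVec hM (x (Fin.last (m+1))))
      (w_ne_zero hx) hy
  · intro j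
    rw [Fin.snoc_castSucc]

lemma right_inv_eq {p : Fin (m+1) → Euc (m+1)}
    (hp : p ∈ genConfig (m+1) (m+1) (Sph m)) {f : Euc (m+1)} (hfn : ‖f‖ = 1) :
    nz ((matOf p)⁻¹ *ᵥₑ nz ((matOf p) *ᵥₑ f)) = f := by
  have hM : IsUnit (matOf p) := isUnit_matOf (genConfig_indep hp)
  exact nz_mulVec_nz (nonsing_inv_mulVec_mulVec hM f) (u_ne_zero hp hfn) hfn

lemma continuous_forgetLast {V : Type*} [AddCommGroup V] [Module ℝ V] [TopologicalSpace V]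
    {k n : ℕ} {M : Set V} :
    Continuous (forgetLast (V := V) (k := k) (n := n) (M := M)) := by
  unfold forgetLast
  apply Continuous.subtype_mk
  apply continuous_pi
  intro i
  exact (continuous_apply (Fin.castSucc i)).comp continuous_subtype_val

lemma cont_fwd_val : Continuous fun x : ↥(genConfig (m+1) (m+2) (Sph m)) =>
    nz ((matOf fun i => x.val i.castSucc)⁻¹ *ᵥₑ x.val (Fin.last (m+1))) := by
  have contM : Continuous fun x : ↥(genConfig (m+1) (m+2) (Sph m)) =>
      matOf (fun i => x.val i.castSucc) := by
    apply continuous_matrix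
    intro i j
    exact (EuclideanSpace.proj i).continuous.comp
      ((continuous_apply (Fin.castSucc j)).comp continuous_subtype_val)
  have hdet : Continuous fun x : ↥(genConfig (m+1) (m+2) (Sph m)) =>
      ((matOf fun i => x.val i.castSucc).det)⁻¹ := by
    rw [continuous_iff_continuousAt]
    intro x
    refine contM.matrix_det.continuousAt.inv₀ ?_
    exact ((Matrix.isUnit_iff_isUnit_det _).mp
      (isUnit_matOf (genConfig_indep (forget_mem x.2)))).ne_zero
  have hinv : Continuous fun x : ↥(genConfig (m+1) (m+2) (Sph m)) =>
      (matOf fun i => x.val i.castSucc)⁻¹ := by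
    have he : (fun x : ↥(genConfig (m+1) (m+2) (Sph m)) =>
        (matOf fun i => x.val i.castSucc)⁻¹) =
        fun x => ((matOf fun i => x.val i.castSucc).det)⁻¹ •
          (matOf fun i => x.val i.castSucc).adjugate := by
      funext x
      rw [Matrix.inv_def, Ring.inverse_eq_inv']
    rw [he]
    exact hdet.smul contM.matrix_adjugate
  have conty : Continuous fun x : ↥(genConfig (m+1) (m+2) (Sph m)) =>
      WithLp.ofLp (x.val (Fin.last (m+1))) :=
    (PiLp.continuous_ofLp 2 fun _ : Fin (m+1) => ℝ).comp
      ((continuous_apply _).comp continuous_subtype_val)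
  have contw : Continuous fun x : ↥(genConfig (m+1) (m+2) (Sph m)) =>
      ((matOf fun i => x.val i.castSucc)⁻¹ *ᵥₑ x.val (Fin.last (m+1))) :=
    (PiLp.continuous_toLp 2 fun _ : Fin (m+1) => ℝ).comp
      (hinv.matrix_mulVec conty)
  have hn : Continuous fun x : ↥(genConfig (m+1) (m+2) (Sph m)) =>
      (‖((matOf fun i => x.val i.castSucc)⁻¹ *ᵥₑ x.val (Fin.last (m+1)))‖)⁻¹ := by
    rw [continuous_iff_continuousAt]
    intro x
    exact contw.norm.continuousAt.inv₀ (norm_ne_zero_iff.mpr (w_ne_zero x.2))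
  exact hn.smul contw

lemma cont_bwd_val : Continuous fun z :
    ↥(genConfig (m+1) (m+1) (Sph m)) ×
      ↥(Sph m \ QSet m (m+1) (Sph m) (fun i => EuclideanSpace.single i 1)) =>
    (Fin.snoc z.1.val (nz ((matOf z.1.val) *ᵥₑ z.2.val)) : Fin (m+2) → Euc (m+1)) := by
  have contp : Continuous fun z :
      ↥(genConfig (m+1) (m+1) (Sph m)) ×
        ↥(Sph m \ QSet m (m+1) (Sph m) (fun i => EuclideanSpace.single i 1)) =>
      z.1.val := continuous_subtype_val.comp continuous_fst
  have contM : Continuous fun z :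
      ↥(genConfig (m+1) (m+1) (Sph m)) ×
        ↥(Sph m \ QSet m (m+1) (Sph m) (fun i => EuclideanSpace.single i 1)) =>
      matOf z.1.val := by
    apply continuous_matrix
    intro i j
    exact (EuclideanSpace.proj i).continuous.comp ((continuous_apply j).comp contp)
  have contf : Continuous fun z :
      ↥(genConfig (m+1) (m+1) (Sph m)) ×
        ↥(Sph m \ QSet m (m+1) (Sph m) (fun i => EuclideanSpace.single i 1)) =>
      WithLp.ofLp z.2.val :=
    (PiLp.continuous_ofLp 2 fun _ : Fin (m+1) => ℝ).comp
      (continuous_subtype_val.comp continuous_snd)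
  have contu : Continuous fun z :
      ↥(genConfig (m+1) (m+1) (Sph m)) ×
        ↥(Sph m \ QSet m (m+1) (Sph m) (fun i => EuclideanSpace.single i 1)) =>
      ((matOf z.1.val) *ᵥₑ z.2.val) :=
    (PiLp.continuous_toLp 2 fun _ : Fin (m+1) => ℝ).comp
      (contM.matrix_mulVec contf)
  have hn : Continuous fun z :
      ↥(genConfig (m+1) (m+1) (Sph m)) ×
        ↥(Sph m \ QSet m (m+1) (Sph m) (fun i => EuclideanSpace.single i 1)) =>
      (‖((matOf z.1.val) *ᵥₑ z.2.val)‖)⁻¹ := by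
    rw [continuous_iff_continuousAt]
    intro z
    refine contu.norm.continuousAt.inv₀ (norm_ne_zero_iff.mpr ?_)
    exact u_ne_zero z.1.2 (by
      have := z.2.2.1; rwa [mem_sphere_zero_iff_norm] at this)
  have conty : Continuous fun z :
      ↥(genConfig (m+1) (m+1) (Sph m)) ×
        ↥(Sph m \ QSet m (m+1) (Sph m) (fun i => EuclideanSpace.single i 1)) =>
      nz ((matOf z.1.val) *ᵥₑ z.2.val) := hn.smul contu
  apply continuous_pi
  intro i
  refine Fin.lastCases ?_ ?_ i
  · simp only [Fin.snoc_last]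
    exact conty
  · intro j
    simp only [Fin.snoc_castSucc]
    exact (continuous_apply j).comp contp
end FBAux

/-- for `m ≥ 1` the projection `π : W_{m+1,m+2}(S^m) → W_{m+1,m+1}(S^m)`
forgetting the last entry is a locally trivial fiber bundle with fiber
`S^m − Q_{m,m+1}(S^m)_{b_{m+1}}`, where `b_{m+1} = (e_1,...,e_{m+1})`. -/
theorem forgetLast_isFiberBundle_sphere_m_add_one (m : ℕ) (hm : 1 ≤ m)
    (q : genConfig (m + 1) (m + 1) (Metric.sphere (0 : EuclideanSpace ℝ (Fin (m + 1))) 1)) :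
    ∃ U : Set (genConfig (m + 1) (m + 1)
        (Metric.sphere (0 : EuclideanSpace ℝ (Fin (m + 1))) 1)),
      IsOpen U ∧ q ∈ U ∧
      ∃ h : (forgetLast ⁻¹' U) ≃ₜ
          U × ((Metric.sphere (0 : EuclideanSpace ℝ (Fin (m + 1))) 1) \
            QSet m (m + 1) (Metric.sphere (0 : EuclideanSpace ℝ (Fin (m + 1))) 1)
              (fun i : Fin (m + 1) => EuclideanSpace.single i 1) :
                Set (EuclideanSpace ℝ (Fin (m + 1)))),
        ∀ x, ((h x).1 : genConfig (m + 1) (m + 1)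
            (Metric.sphere (0 : EuclideanSpace ℝ (Fin (m + 1))) 1)) =
          forgetLast x.val := by
  classical
  refine ⟨Set.univ, isOpen_univ, Set.mem_univ q, ?_⟩
  refine ⟨⟨⟨fun x => (⟨forgetLast x.val, Set.mem_univ _⟩,
      ⟨FBAux.nz ((FBAux.matOf fun i => x.val.val i.castSucc)⁻¹ *ᵥₑ
        (x.val.val (Fin.last (m+1)))), FBAux.fwd_mem x.val.2⟩),
      fun z => ⟨⟨Fin.snoc z.1.val.val (FBAux.nz ((FBAux.matOf z.1.val.val) *ᵥₑ z.2.val)),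
        FBAux.bwd_mem z.1.val.2 z.2.2⟩, Set.mem_univ _⟩, ?_, ?_⟩, ?_, ?_⟩, ?_⟩
  · -- left inverse
    intro x
    apply Subtype.ext
    apply Subtype.ext
    exact FBAux.left_inv_eq x.val.2
  · -- right inverse
    rintro ⟨p, f⟩
    have hfn : ‖f.val‖ = 1 := by
      have := f.2.1; rwa [mem_sphere_zero_iff_norm] at this
    refine Prod.ext ?_ ?_
    · apply Subtype.ext
      apply Subtype.ext
      funext i
      show (Fin.snoc p.val.val (FBAux.nz ((FBAux.matOf p.val.val) *ᵥₑ f.val)) :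
        Fin (m+2) → FBAux.Euc (m+1)) i.castSucc = p.val.val i
      simp
    · apply Subtype.ext
      show FBAux.nz ((FBAux.matOf fun i =>
          (Fin.snoc p.val.val (FBAux.nz ((FBAux.matOf p.val.val) *ᵥₑ f.val)) :
            Fin (m+2) → FBAux.Euc (m+1)) i.castSucc)⁻¹ *ᵥₑ
          ((Fin.snoc p.val.val (FBAux.nz ((FBAux.matOf p.val.val) *ᵥₑ f.val)) :
            Fin (m+2) → FBAux.Euc (m+1)) (Fin.last (m+1)))) = f.val
      have e1 : (fun i : Fin (m+1) =>
          (Fin.snoc p.val.val (FBAux.nz ((FBAux.matOf p.val.val) *ᵥₑ f.val)) :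
            Fin (m+2) → FBAux.Euc (m+1)) i.castSucc) = p.val.val :=
        funext fun i => by simp
      have e2 : (Fin.snoc p.val.val (FBAux.nz ((FBAux.matOf p.val.val) *ᵥₑ f.val)) :
          Fin (m+2) → FBAux.Euc (m+1)) (Fin.last (m+1)) =
          FBAux.nz ((FBAux.matOf p.val.val) *ᵥₑ f.val) := by simp
      rw [e1, e2]
      exact FBAux.right_inv_eq p.val.2 hfn
  · -- continuity of toFun
    exact (Continuous.subtype_mk (FBAux.continuous_forgetLast.comp continuous_subtype_val)
      _).prodMk (Continuous.subtype_mk (FBAux.cont_fwd_val.comp continuous_subtype_val) _)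
  · -- continuity of invFun
    exact Continuous.subtype_mk (Continuous.subtype_mk (FBAux.cont_bwd_val.comp
      ((continuous_subtype_val.comp continuous_fst).prodMk continuous_snd)) _) _
  · intro x
    rfl
end
end

section
/- Let m ≥ 1 and let k = m or k = m+1. Then the map f : W_{k,k}(S^m) → W_{k,k+1}(S^m) given by f(p_1,...,p_k) = (p_1,...,p_k, (p_1+...+p_k)/‖p_1+...+p_k‖) is well defined (in particular p_1+...+p_k ≠ 0 and every k of the k+1 resulting vectors are linearly independent), continuous, and satisfies π ∘ f = id, where π : W_{k,k+1}(S^m) → W_{k,k}(S^m) forgets the last coordinate. Hence the projection π admits a cross-section. -/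
noncomputable section

lemma aux_replace {V : Type*} [AddCommGroup V] [Module ℝ V] {k : ℕ} {p : Fin k → V}
    (hp : LinearIndependent ℝ p) {c : ℝ} (hc : c ≠ 0) (j0 : Fin k) :
    LinearIndependent ℝ (fun i => if i = j0 then c • ∑ j, p j else p i) := by
  rw [Fintype.linearIndependent_iff] at hp ⊢
  intro g hg
  set h : Fin k → ℝ := fun j => g j0 * c + (if j = j0 then 0 else g j) with hh
  have key : ∀ j, h j = 0 := by
    apply hp
    rw [← hg]
    have step : ∀ j : Fin k, h j • p j = (g j0 * c) • p j + (if j = j0 then (0:V) else g j • p j) := by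
      intro j
      by_cases hj : j = j0
      · subst hj; simp [hh]
      · simp [hh, hj, add_smul]
    simp_rw [step, Finset.sum_add_distrib]
    have e1 : ∑ j, (g j0 * c) • p j = g j0 • (c • ∑ j, p j) := by
      rw [smul_smul, Finset.smul_sum]
    have e2 : ∀ j : Fin k, g j • (if j = j0 then c • ∑ i, p i else p j)
        = (if j = j0 then g j0 • (c • ∑ i, p i) else g j • p j) := by
      intro j; by_cases hj : j = j0
      · subst hj; simp
      · simp [hj]
    simp_rw [e2, e1]
    rw [Fintype.sum_eq_add_sum_compl j0 (fun x => if x = j0 then (0:V) else g x • p x),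
      Fintype.sum_eq_add_sum_compl j0 (fun x => if x = j0 then g j0 • (c • ∑ i, p i) else g x • p x)]
    simp only [if_true]
    rw [zero_add]
    congr 1
    apply Finset.sum_congr rfl
    intro x hx
    have hx' : x ≠ j0 := by simpa [Finset.mem_compl] using hx
    simp [hx']
  have hgj0 : g j0 = 0 := by
    have := key j0
    simp [hh] at this
    rcases this with h | h
    · exact h
    · exact absurd h hc
  intro i
  by_cases hi : i = j0
  · rwa [hi]
  · have := key i
    simp [hh, hi, hgj0] at this
    exact this

lemma aux_snoc {V : Type*} [AddCommGroup V] [Module ℝ V] {k : ℕ} {p : Fin k → V}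
    (hp : LinearIndependent ℝ p) {c : ℝ} (hc : c ≠ 0)
    (s : Finset (Fin (k + 1))) (hs : s.card = k) :
    LinearIndependent ℝ (fun i : s => (Fin.snoc p (c • ∑ j, p j) : Fin (k+1) → V) i.val) := by
  have hcompl : sᶜ.card = 1 := by
    rw [Finset.card_compl, hs]; simp
  obtain ⟨j, hj⟩ := Finset.card_eq_one.mp hcompl
  have hsj : s = Finset.univ.erase j := by
    rw [← Finset.compl_singleton, ← hj, compl_compl]
  subst hsj
  have hcard : Fintype.card (Finset.univ.erase j : Finset (Fin (k+1))) = k := by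
    simp [Fintype.card_coe]
  rcases Fin.eq_castSucc_or_eq_last j with ⟨j0, rfl⟩ | rfl
  · -- j = castSucc j0
    have hmem : ∀ i : Fin k, (if i = j0 then Fin.last k else i.castSucc) ∈
        Finset.univ.erase j0.castSucc := by
      intro i
      rw [Finset.mem_erase]
      refine ⟨?_, Finset.mem_univ _⟩
      by_cases hi : i = j0
      · simp only [hi, if_pos rfl]
        exact (Fin.castSucc_lt_last j0).ne'
      · simp only [hi, if_neg hi]
        exact fun h => hi (Fin.castSucc_injective _ h)
    set F : Fin k → (Finset.univ.erase (Fin.castSucc j0) : Finset (Fin (k+1))) :=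
      fun i => ⟨if i = j0 then Fin.last k else i.castSucc, hmem i⟩ with hF
    have hinj : Function.Injective F := by
      intro a b hab
      have h := congrArg Subtype.val hab
      simp only [hF] at h
      by_cases ha : a = j0 <;> by_cases hb : b = j0
      · rw [ha, hb]
      · rw [if_pos ha, if_neg hb] at h
        exact absurd h.symm (Fin.castSucc_lt_last b).ne
      · rw [if_neg ha, if_pos hb] at h
        exact absurd h (Fin.castSucc_lt_last a).ne
      · rw [if_neg ha, if_neg hb] at h
        exact Fin.castSucc_injective _ h
    have hbij : Function.Bijective F :=
      (Fintype.bijective_iff_injective_and_card F).mpr ⟨hinj, by rw [Fintype.card_fin, hcard]⟩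
    refine (linearIndependent_equiv' (Equiv.ofBijective F hbij)
      (g := fun i => if i = j0 then c • ∑ j, p j else p i) ?_).mp (aux_replace hp hc j0)
    funext i
    simp only [Function.comp_apply, Equiv.ofBijective_apply, hF]
    by_cases hi : i = j0
    · simp [hi]
    · simp [hi, Fin.snoc_castSucc]
  · -- j = last
    have hmem : ∀ i : Fin k, i.castSucc ∈ Finset.univ.erase (Fin.last k) := by
      intro i
      rw [Finset.mem_erase]
      exact ⟨(Fin.castSucc_lt_last i).ne, Finset.mem_univ _⟩
    set F : Fin k → (Finset.univ.erase (Fin.last k) : Finset (Fin (k+1))) :=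
      fun i => ⟨i.castSucc, hmem i⟩ with hF
    have hinj : Function.Injective F := fun a b hab =>
      Fin.castSucc_injective _ (congrArg Subtype.val hab)
    have hbij : Function.Bijective F :=
      (Fintype.bijective_iff_injective_and_card F).mpr ⟨hinj, by rw [Fintype.card_fin, hcard]⟩
    refine (linearIndependent_equiv' (Equiv.ofBijective F hbij) (g := p) ?_).mp hp
    funext i
    simp [hF, Fin.snoc_castSucc]

lemma aux_li_of_mem {V : Type*} [AddCommGroup V] [Module ℝ V] {k : ℕ} {M : Set V}
    {p : Fin k → V} (hp : p ∈ genConfig k k M) :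
    LinearIndependent ℝ p := by
  have h := hp.2 Finset.univ (by simp)
  exact (linearIndependent_equiv' (Equiv.subtypeUnivEquiv Finset.mem_univ)
    (f := p) (g := fun i : (Finset.univ : Finset (Fin k)) => p i.val) rfl).mp h

lemma aux_sum_ne {V : Type*} [AddCommGroup V] [Module ℝ V] {k : ℕ} (hk1 : 1 ≤ k)
    {p : Fin k → V} (hp : LinearIndependent ℝ p) : (∑ i, p i) ≠ 0 := by
  intro h0
  have := Fintype.linearIndependent_iff.mp hp (fun _ => 1) (by simpa using h0) ⟨0, hk1⟩
  exact one_ne_zero this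

/-- for `k = m` or `k = m+1`, the map
`f(p_1,...,p_k) = (p_1,...,p_k, (p_1+...+p_k)/‖p_1+...+p_k‖)` is a well-defined continuous
cross-section of the projection `π : W_{k,k+1}(S^m) → W_{k,k}(S^m)` forgetting the
last entry; in particular `p_1 + ... + p_k ≠ 0` on `W_{k,k}(S^m)` and `π ∘ f = id`. -/
theorem genConfig_sphere_crossSection (m k : ℕ) (hm : 1 ≤ m) (hk : k = m ∨ k = m + 1) :
    (∀ p : genConfig k k (Metric.sphere (0 : EuclideanSpace ℝ (Fin (m + 1))) 1),
      (∑ i, p.val i) ≠ 0) ∧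
    ∃ f : C((genConfig k k (Metric.sphere (0 : EuclideanSpace ℝ (Fin (m + 1))) 1)),
        (genConfig k (k + 1) (Metric.sphere (0 : EuclideanSpace ℝ (Fin (m + 1))) 1))),
      (∀ p, ∀ i : Fin k, (f p).val i.castSucc = p.val i) ∧
      (∀ p, (f p).val (Fin.last k) = ‖∑ i, p.val i‖⁻¹ • ∑ i, p.val i) ∧
      (∀ p, forgetLast (f p) = p) := by
  have hk1 : 1 ≤ k := by rcases hk with rfl | rfl <;> omega
  set V := EuclideanSpace ℝ (Fin (m + 1))
  set M : Set V := Metric.sphere (0 : V) 1 with hM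
  have hsum : ∀ p : genConfig k k M, (∑ i, p.val i) ≠ 0 :=
    fun p => aux_sum_ne hk1 (aux_li_of_mem p.prop)
  refine ⟨hsum, ?_⟩
  set S : genConfig k k M → V := fun p => ∑ i, p.val i with hS
  set F : genConfig k k M → (Fin (k + 1) → V) :=
    fun p => Fin.snoc p.val (‖S p‖⁻¹ • S p) with hF
  have hnorm : ∀ p, ‖S p‖ ≠ 0 := fun p => norm_ne_zero_iff.mpr (hsum p)
  have hmem : ∀ p, F p ∈ genConfig k (k + 1) M := by
    intro p
    constructor
    · intro i
      induction i using Fin.lastCases with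
      | last =>
        simp only [hF, Fin.snoc_last, hM, mem_sphere_iff_norm, sub_zero, norm_smul,
          norm_inv, norm_norm]
        rw [mem_sphere_zero_iff_norm, norm_smul, norm_inv, norm_norm]
        exact inv_mul_cancel₀ (hnorm p)
      | cast i =>
        simp only [hF, Fin.snoc_castSucc]
        exact p.prop.1 i
    · intro s hs
      exact aux_snoc (aux_li_of_mem p.prop) (inv_ne_zero (hnorm p)) s hs
  have hScont : Continuous S := by
    apply continuous_finset_sum
    exact fun i _ => (continuous_apply i).comp continuous_subtype_val
  have hFcont : Continuous F := by
    apply continuous_pi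
    intro i
    induction i using Fin.lastCases with
    | last =>
      simp only [hF, Fin.snoc_last]
      exact ((hScont.norm.inv₀ hnorm).smul hScont)
    | cast i =>
      have heq : (fun p : genConfig k k M => F p i.castSucc) = fun p => p.val i := by
        funext p; simp [hF, Fin.snoc_castSucc]
      rw [heq]
      exact (continuous_apply i).comp continuous_subtype_val
  refine ⟨⟨fun p => ⟨F p, hmem p⟩, hFcont.subtype_mk _⟩, ?_, ?_, ?_⟩
  · intro p i
    simp [hF, Fin.snoc_castSucc]
  · intro p
    simp [hF, Fin.snoc_last, hS]
  · intro p
    apply Subtype.ext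
    funext i
    simp [forgetLast, hF, Fin.snoc_castSucc]
end
end

section
/- Let m ≥ 1 and let k = m or k = m+1. Then the map π : W_{k,k+1}(ℝ^{m+1}) → W_{k,k}(ℝ^{m+1}) defined by π(p_1,...,p_k,p_{k+1}) = (p_1,...,p_k) is a locally trivial fiber bundle with fiber ℝ^{m+1} − Q_{k−1,k}(ℝ^{m+1})_{b_k} (i.e., every point of the base has an open neighborhood U admitting a homeomorphism π^{-1}(U) ≅ U × (ℝ^{m+1} − Q_{k−1,k}(ℝ^{m+1})_{b_k}) over U), and this fiber bundle admits a cross-section. -/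
noncomputable section

open Matrix Finset

/-- Completion of `p` by `w` outside the first `k` slots. -/
def gvec (k m : ℕ) (p : Fin k → EuclideanSpace ℝ (Fin (m+1)))
    (w : Fin (m+1) → EuclideanSpace ℝ (Fin (m+1))) (i : Fin (m+1)) :
    EuclideanSpace ℝ (Fin (m+1)) :=
  if h : (i : ℕ) < k then p ⟨i, h⟩ else w i

/-- The matrix whose columns are `gvec`. -/
def matOf (k m : ℕ) (p : Fin k → EuclideanSpace ℝ (Fin (m+1)))
    (w : Fin (m+1) → EuclideanSpace ℝ (Fin (m+1))) :
    Matrix (Fin (m+1)) (Fin (m+1)) ℝ :=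
  fun j i => gvec k m p w i j

lemma matOf_mulVec_single (k m : ℕ) (p : Fin k → EuclideanSpace ℝ (Fin (m+1)))
    (w : Fin (m+1) → EuclideanSpace ℝ (Fin (m+1))) (i : Fin (m+1)) :
    matOf k m p w *ᵥ Pi.single i 1 = gvec k m p w i := by
  rw [Matrix.mulVec_single]
  funext j
  simp [matOf]

lemma euc_single_eq {n : ℕ} (i : Fin n) :
    ((EuclideanSpace.single i (1:ℝ)) : Fin n → ℝ) = Pi.single i 1 := by
  funext j
  simp [EuclideanSpace.single_apply, Pi.single_apply, eq_comm]

lemma eq_erase_of_card {α : Type*} [Fintype α] [DecidableEq α] (s : Finset α)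
    (hs : s.card + 1 = Fintype.card α) : ∃ t, s = Finset.univ.erase t := by
  have h1 : sᶜ.card = 1 := by rw [Finset.card_compl]; omega
  obtain ⟨t, ht⟩ := Finset.card_eq_one.mp h1
  exact ⟨t, by rw [← compl_compl s, ht, Finset.compl_singleton]⟩

lemma li_of_mem {V : Type*} [AddCommGroup V] [Module ℝ V] {k : ℕ} {M : Set V}
    {p : Fin k → V} (h : p ∈ genConfig k k M) : LinearIndependent ℝ p := by
  have h2 := h.2 Finset.univ (by simp)
  exact (linearIndependent_equiv (Equiv.subtypeUnivEquiv Finset.mem_univ)).mp h2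

/-- `mulVec` by a matrix with nonzero determinant, as a linear equivalence of
Euclidean space. -/
def mulVecEquiv {n : ℕ} (A : Matrix (Fin n) (Fin n) ℝ) (hA : A.det ≠ 0) :
    EuclideanSpace ℝ (Fin n) ≃ₗ[ℝ] EuclideanSpace ℝ (Fin n) :=
  LinearEquiv.ofLinear
    { toFun := fun v => (WithLp.toLp 2 (A.mulVec v) : EuclideanSpace ℝ (Fin n))
      map_add' := fun x y => by simp [Matrix.mulVec_add]
      map_smul' := fun c x => by simp [Matrix.mulVec_smul] }
    { toFun := fun v => (WithLp.toLp 2 (A⁻¹.mulVec v) : EuclideanSpace ℝ (Fin n))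
      map_add' := fun x y => by simp [Matrix.mulVec_add]
      map_smul' := fun c x => by simp [Matrix.mulVec_smul] }
    (by
      apply LinearMap.ext; intro v
      show WithLp.toLp 2 (A *ᵥ A⁻¹ *ᵥ v.ofLp) = v
      rw [Matrix.mulVec_mulVec, Matrix.mul_nonsing_inv _ (isUnit_iff_ne_zero.mpr hA),
        Matrix.one_mulVec, WithLp.toLp_ofLp])
    (by
      apply LinearMap.ext; intro v
      show WithLp.toLp 2 (A⁻¹ *ᵥ A *ᵥ v.ofLp) = v
      rw [Matrix.mulVec_mulVec, Matrix.nonsing_inv_mul _ (isUnit_iff_ne_zero.mpr hA),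
        Matrix.one_mulVec, WithLp.toLp_ofLp])

@[simp] lemma mulVecEquiv_apply {n : ℕ} (A : Matrix (Fin n) (Fin n) ℝ) (hA : A.det ≠ 0)
    (v : EuclideanSpace ℝ (Fin n)) : mulVecEquiv A hA v = WithLp.toLp 2 (A.mulVec v) := rfl

/-- Index equivalence used for the fiber identification. -/
def optEquiv (k : ℕ) (j : Fin k) :
    Option {i : Fin k // i ∈ Finset.univ.erase j} ≃
      {i : Fin (k+1) // i ∈ Finset.univ.erase j.castSucc} where
  toFun o := o.elim
    ⟨Fin.last k, by
      simp only [Finset.mem_erase, Finset.mem_univ, and_true]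
      intro h
      have := congrArg Fin.val h
      simp only [Fin.val_last, Fin.coe_castSucc] at this
      omega⟩
    (fun i => ⟨i.1.castSucc, by
      simp only [Finset.mem_erase, Finset.mem_univ, and_true]
      intro h
      exact absurd (Fin.castSucc_injective _ h)
        (Finset.mem_erase.mp i.2).1⟩)
  invFun i := if h : (i.1 : ℕ) < k then
      some ⟨⟨i.1, h⟩, by
        simp only [Finset.mem_erase, Finset.mem_univ, and_true]
        intro he
        apply (Finset.mem_erase.mp i.2).1
        apply Fin.ext
        simpa using congrArg Fin.val he⟩
    else none
  left_inv o := by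
    cases o with
    | none => simp
    | some i =>
      have h : ((i.1 : Fin k).castSucc : ℕ) < k := by simpa using i.1.isLt
      exact (dif_pos h).trans (congrArg some (Subtype.ext (Fin.ext rfl)))
  right_inv i := by
    by_cases h : (i.1 : ℕ) < k
    · simp only [dif_pos h, Option.elim]
      apply Subtype.ext; apply Fin.ext; rfl
    · simp only [dif_neg h, Option.elim]
      apply Subtype.ext; apply Fin.ext
      have := i.1.isLt
      simp only [Fin.val_last]
      omega

/-- Index equivalence for the `t = last` case. -/
def lastEquiv (k : ℕ) : Fin k ≃ {i : Fin (k+1) // i ∈ Finset.univ.erase (Fin.last k)} where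
  toFun i := ⟨i.castSucc, by
    simp only [Finset.mem_erase, Finset.mem_univ, and_true]
    intro h; have := congrArg Fin.val h; simp at this; omega⟩
  invFun i := ⟨i.1, by
    have h1 := i.1.isLt
    have h2 : i.1 ≠ Fin.last k := (Finset.mem_erase.mp i.2).1
    have : (i.1 : ℕ) ≠ k := fun hc => h2 (Fin.ext (by simpa using hc))
    omega⟩
  left_inv i := by apply Fin.ext; rfl
  right_inv i := by apply Subtype.ext; apply Fin.ext; rfl

lemma memW_iff {k m : ℕ} (x : Fin (k+1) → EuclideanSpace ℝ (Fin (m+1))) :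
    x ∈ genConfig k (k+1) (Set.univ : Set (EuclideanSpace ℝ (Fin (m+1)))) ↔
      ∀ t : Fin (k+1), LinearIndependent ℝ
        (fun i : (Finset.univ.erase t : Finset (Fin (k+1))) => x i.val) := by
  constructor
  · intro h t
    exact h.2 (Finset.univ.erase t) (by simp [Finset.card_erase_of_mem])
  · intro h
    refine ⟨fun i => Set.mem_univ _, fun s hs => ?_⟩
    obtain ⟨t, ht⟩ := eq_erase_of_card s (by simp [hs])
    subst ht
    exact h t

lemma memQ_iff {k m : ℕ} (hk1 : 1 ≤ k) (b : Fin k → EuclideanSpace ℝ (Fin (m+1)))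
    (y : EuclideanSpace ℝ (Fin (m+1))) :
    y ∈ (Set.univ : Set (EuclideanSpace ℝ (Fin (m+1)))) \
        QSet (k-1) k Set.univ b ↔
      ∀ j : Fin k, LinearIndependent ℝ
        (fun o : Option (Finset.univ.erase j : Finset (Fin k)) =>
          Option.elim o y (fun i => b i.val)) := by
  simp only [Set.mem_diff, Set.mem_univ, true_and, QSet, Set.mem_setOf_eq, not_and,
    not_exists]
  constructor
  · intro h j
    exact not_not.mp (h (Finset.univ.erase j) (by simp [Finset.card_erase_of_mem]))
  · intro h s hs
    rw [not_not]
    obtain ⟨j, hj⟩ := eq_erase_of_card s (by simp at hs ⊢; omega)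
    subst hj
    exact h j

lemma matOf_mulVec_b {k m : ℕ} (hkn : k ≤ m + 1)
    (p : Fin k → EuclideanSpace ℝ (Fin (m+1)))
    (w : Fin (m+1) → EuclideanSpace ℝ (Fin (m+1))) (i : Fin k) :
    matOf k m p w *ᵥ (EuclideanSpace.single (Fin.castLE hkn i) (1:ℝ)) = p i := by
  rw [euc_single_eq, matOf_mulVec_single]
  have h : ((Fin.castLE hkn i : Fin (m+1)) : ℕ) < k := i.isLt
  rw [gvec, dif_pos h]
  congr 1

lemma key_iff {k m : ℕ} (hkn : k ≤ m + 1)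
    (x : Fin (k+1) → EuclideanSpace ℝ (Fin (m+1)))
    (w : Fin (m+1) → EuclideanSpace ℝ (Fin (m+1)))
    (hdet : (matOf k m (fun i => x i.castSucc) w).det ≠ 0) (j : Fin k) :
    LinearIndependent ℝ
      (fun i : (Finset.univ.erase j.castSucc : Finset (Fin (k+1))) => x i.val) ↔
    LinearIndependent ℝ
      (fun o : Option (Finset.univ.erase j : Finset (Fin k)) =>
        Option.elim o
          (WithLp.toLp 2 ((matOf k m (fun i => x i.castSucc) w)⁻¹ *ᵥ x (Fin.last k)) :
            EuclideanSpace ℝ (Fin (m+1)))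
          (fun i => EuclideanSpace.single (Fin.castLE hkn i.val) (1:ℝ))) := by
  set A := matOf k m (fun i => x i.castSucc) w with hA
  rw [← linearIndependent_equiv (optEquiv k j)]
  have hfam : (fun i : (Finset.univ.erase j.castSucc : Finset (Fin (k+1))) => x i.val) ∘
      (optEquiv k j) =
      ⇑(mulVecEquiv A hdet).toLinearMap ∘
        (fun o : Option (Finset.univ.erase j : Finset (Fin k)) =>
          Option.elim o
            ((WithLp.toLp 2 (A⁻¹ *ᵥ x (Fin.last k)) : EuclideanSpace ℝ (Fin (m+1))))
            (fun i => EuclideanSpace.single (Fin.castLE hkn i.val) (1:ℝ))) := by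
    funext o
    cases o with
    | none =>
      show x (Fin.last k) = WithLp.toLp 2 (A *ᵥ A⁻¹ *ᵥ x (Fin.last k))
      rw [Matrix.mulVec_mulVec, Matrix.mul_nonsing_inv _ (isUnit_iff_ne_zero.mpr hdet),
        Matrix.one_mulVec, WithLp.toLp_ofLp]
    | some i =>
      show x ((i.1 : Fin k).castSucc) =
        WithLp.toLp 2 (A *ᵥ (EuclideanSpace.single (Fin.castLE hkn i.val) (1:ℝ)))
      rw [hA, matOf_mulVec_b hkn, WithLp.toLp_ofLp]
  rw [hfam]
  exact LinearMap.linearIndependent_iff (mulVecEquiv A hdet).toLinearMap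
    (LinearMap.ker_eq_bot.mpr (mulVecEquiv A hdet).injective)

lemma last_iff {k m : ℕ} (x : Fin (k+1) → EuclideanSpace ℝ (Fin (m+1))) :
    LinearIndependent ℝ
      (fun i : (Finset.univ.erase (Fin.last k) : Finset (Fin (k+1))) => x i.val) ↔
    LinearIndependent ℝ (fun i : Fin k => x i.castSucc) := by
  rw [← linearIndependent_equiv (lastEquiv k)]
  rfl

/-- Membership in the total space is equivalent to the transformed last vector avoiding
`QSet`. -/
lemma fiber_iff {k m : ℕ} (hkn : k ≤ m + 1) (hk1 : 1 ≤ k)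
    (x : Fin (k+1) → EuclideanSpace ℝ (Fin (m+1)))
    (w : Fin (m+1) → EuclideanSpace ℝ (Fin (m+1)))
    (hp : LinearIndependent ℝ (fun i : Fin k => x i.castSucc))
    (hdet : (matOf k m (fun i => x i.castSucc) w).det ≠ 0) :
    x ∈ genConfig k (k+1) (Set.univ : Set (EuclideanSpace ℝ (Fin (m+1)))) ↔
    (WithLp.toLp 2 ((matOf k m (fun i => x i.castSucc) w)⁻¹ *ᵥ x (Fin.last k)) :
        EuclideanSpace ℝ (Fin (m+1))) ∈
      (Set.univ : Set (EuclideanSpace ℝ (Fin (m+1)))) \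
        QSet (k-1) k Set.univ
          (fun i : Fin k => EuclideanSpace.single (Fin.castLE hkn i) (1:ℝ)) := by
  rw [memW_iff, memQ_iff hk1]
  constructor
  · intro h j
    exact (key_iff hkn x w hdet j).mp (h j.castSucc)
  · intro h t
    rcases Fin.lastCases (n := k)
      (motive := fun t => t = Fin.last k ∨ ∃ j : Fin k, t = j.castSucc)
      (Or.inl rfl) (fun j => Or.inr ⟨j, rfl⟩) t with ht | ⟨j, ht⟩
    · subst ht
      exact (last_iff x).mpr hp
    · subst ht
      exact (key_iff hkn x w hdet j).mpr (h j)

lemma det_ne_zero_of_li {m : ℕ} (g : Fin (m+1) → EuclideanSpace ℝ (Fin (m+1)))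
    (hg : LinearIndependent ℝ g) :
    (Matrix.of fun j i => g i j : Matrix (Fin (m+1)) (Fin (m+1)) ℝ).det ≠ 0 := by
  have hcard : Fintype.card (Fin (m+1)) =
      Module.finrank ℝ (EuclideanSpace ℝ (Fin (m+1))) := by
    simp [finrank_euclideanSpace]
  let bb := basisOfLinearIndependentOfCardEqFinrank hg hcard
  let φ := WithLp.linearEquiv 2 ℝ (Fin (m+1) → ℝ)
  let E : Module.Basis (Fin (m+1)) ℝ (EuclideanSpace ℝ (Fin (m+1))) :=
    (Pi.basisFun ℝ (Fin (m+1))).map φ.symm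
  have hdet : IsUnit (E.det ⇑bb) := E.isUnit_det bb
  have hmat : E.toMatrix ⇑bb = Matrix.of fun j i => g i j := by
    funext i jj
    rw [Module.Basis.toMatrix_apply, show ⇑bb = g from
      coe_basisOfLinearIndependentOfCardEqFinrank hg hcard]
    simp only [E, Module.Basis.map_repr, LinearEquiv.trans_apply, Pi.basisFun_repr]
    rfl
  rw [← hmat, ← Module.Basis.det_apply]
  exact hdet.ne_zero

lemma span_range_comp {V : Type*} [AddCommGroup V] [Module ℝ V] (C : Submodule ℝ V)
    {n : ℕ} (cB : Module.Basis (Fin n) ℝ C) :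
    Submodule.span ℝ (Set.range (⇑C.subtype ∘ ⇑cB)) = C := by
  rw [Set.range_comp, Submodule.span_image, cB.span_eq, Submodule.map_top,
    Submodule.range_subtype]

lemma exists_w {k m : ℕ} (hkn : k ≤ m + 1) (p : Fin k → EuclideanSpace ℝ (Fin (m+1)))
    (hp : LinearIndependent ℝ p) :
    ∃ w : Fin (m+1) → EuclideanSpace ℝ (Fin (m+1)), (matOf k m p w).det ≠ 0 := by
  classical
  set S := Submodule.span ℝ (Set.range p) with hS
  obtain ⟨C, hC⟩ := Submodule.exists_isCompl S
  have hrank : Module.finrank ℝ (EuclideanSpace ℝ (Fin (m+1))) = m + 1 := by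
    simp [finrank_euclideanSpace]
  have hfS : Module.finrank ℝ S = k := by
    rw [hS, finrank_span_eq_card hp, Fintype.card_fin]
  have hfC : Module.finrank ℝ C = (m + 1) - k := by
    have := Submodule.finrank_add_eq_of_isCompl hC
    omega
  let cB : Module.Basis (Fin ((m+1) - k)) ℝ C := (Module.finBasis ℝ C).reindex (finCongr hfC)
  refine ⟨fun i => if h : (i : ℕ) < k then 0 else
    (cB ⟨(i : ℕ) - k, by omega⟩ : EuclideanSpace ℝ (Fin (m+1))), ?_⟩
  set w : Fin (m+1) → EuclideanSpace ℝ (Fin (m+1)) := fun i => if h : (i : ℕ) < k then 0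
    else (cB ⟨(i : ℕ) - k, by omega⟩ : EuclideanSpace ℝ (Fin (m+1))) with hw
  have hg : LinearIndependent ℝ (gvec k m p w) := by
    have hfam : (gvec k m p w) ∘ ((finCongr (by omega : k + ((m+1) - k) = m + 1)) ∘
        finSumFinEquiv) = Sum.elim p (fun j => (cB j : EuclideanSpace ℝ (Fin (m+1)))) := by
      funext o
      cases o with
      | inl i =>
        show gvec k m p w ⟨(i : ℕ), by omega⟩ = p i
        rw [gvec, dif_pos (show ((⟨(i:ℕ), by omega⟩ : Fin (m+1)) : ℕ) < k from i.isLt)]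
      | inr jj =>
        show gvec k m p w ⟨k + (jj : ℕ), by omega⟩ = (cB jj : EuclideanSpace ℝ (Fin (m+1)))
        rw [gvec, dif_neg (by simp)]
        rw [hw]
        simp only
        rw [dif_neg (by simp)]
        have hj : (⟨k + (jj:ℕ) - k, by omega⟩ : Fin ((m+1) - k)) = jj := Fin.ext (by simp)
        rw [hj]
    have he : LinearIndependent ℝ
        ((gvec k m p w) ∘ ((finCongr (by omega : k + ((m+1) - k) = m + 1)) ∘
          finSumFinEquiv)) := by
      rw [hfam]
      apply LinearIndependent.sum_type hp
        (cB.linearIndependent.map' C.subtype C.ker_subtype)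
      rw [span_range_comp C cB, ← hS]
      exact hC.disjoint
    exact (linearIndependent_equiv
      (finSumFinEquiv.trans (finCongr (by omega : k + ((m+1) - k) = m + 1)))).mp he
  exact det_ne_zero_of_li (gvec k m p w) hg

lemma li_option_sum {k : ℕ} {V : Type*} [AddCommGroup V] [Module ℝ V]
    (p : Fin k → V) (hp : LinearIndependent ℝ p) (j : Fin k) :
    LinearIndependent ℝ
      (fun o : Option (Finset.univ.erase j : Finset (Fin k)) =>
        Option.elim o (∑ i, p i) (fun i => p i.val)) := by
  classical
  rw [Fintype.linearIndependent_iff]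
  intro g hg
  set F : Fin k → V := fun i =>
    (if h : i ∈ Finset.univ.erase j then g (some ⟨i, h⟩) else 0) • p i with hF
  set c : Fin k → ℝ := fun i =>
    g none + (if h : i ∈ Finset.univ.erase j then g (some ⟨i, h⟩) else 0) with hc
  have hsum : ∑ i, c i • p i = 0 := by
    have e1 : ∑ i, c i • p i = g none • ∑ i, p i + ∑ i, F i := by
      rw [Finset.smul_sum, ← Finset.sum_add_distrib]
      congr 1
      funext i
      simp only [hc, hF, add_smul]
    have e2 : ∑ i, F i = ∑ i : (Finset.univ.erase j : Finset (Fin k)),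
        g (some i) • p i.val := by
      rw [← Finset.sum_erase_add Finset.univ F (Finset.mem_univ j),
        show F j = 0 from by simp [hF], add_zero,
        ← Finset.sum_coe_sort (Finset.univ.erase j) F]
      congr 1
      funext i
      simp only [hF]
      rw [dif_pos i.2, Subtype.eta]
    have e3 : g none • (∑ i, p i) + (∑ i : (Finset.univ.erase j : Finset (Fin k)),
        g (some i) • p i.val) =
        ∑ o : Option (Finset.univ.erase j : Finset (Fin k)),
          g o • Option.elim o (∑ i, p i) (fun i => p i.val) :=
      (Fintype.sum_option (fun o : Option (Finset.univ.erase j : Finset (Fin k)) =>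
        g o • Option.elim o (∑ i, p i) (fun i => p i.val))).symm
    rw [e1, e2, e3]
    exact hg
  have hall := Fintype.linearIndependent_iff.mp hp c hsum
  have hnone : g none = 0 := by
    have := hall j
    simp only [hc] at this
    simpa using this
  intro o
  cases o with
  | none => exact hnone
  | some i =>
    have := hall i.1
    simp only [hc] at this
    rw [dif_pos i.2, hnone, zero_add, Subtype.eta] at this
    exact this

lemma snoc_sum_mem {k m : ℕ} (p : Fin k → EuclideanSpace ℝ (Fin (m+1)))
    (hp : LinearIndependent ℝ p) :
    (Fin.snoc p (∑ i, p i) : Fin (k+1) → EuclideanSpace ℝ (Fin (m+1))) ∈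
      genConfig k (k+1) (Set.univ : Set (EuclideanSpace ℝ (Fin (m+1)))) := by
  rw [memW_iff]
  intro t
  rcases Fin.lastCases (n := k)
    (motive := fun t => t = Fin.last k ∨ ∃ j : Fin k, t = j.castSucc)
    (Or.inl rfl) (fun j => Or.inr ⟨j, rfl⟩) t with ht | ⟨j, ht⟩
  · subst ht
    rw [last_iff]
    have : (fun i : Fin k =>
        (Fin.snoc p (∑ i, p i) : Fin (k+1) → EuclideanSpace ℝ (Fin (m+1))) i.castSucc) = p :=
      funext fun i => Fin.snoc_castSucc _ _ i
    rw [this]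
    exact hp
  · subst ht
    rw [← linearIndependent_equiv (optEquiv k j)]
    have hfam : (fun i : (Finset.univ.erase j.castSucc : Finset (Fin (k+1))) =>
        (Fin.snoc p (∑ i, p i) : Fin (k+1) → EuclideanSpace ℝ (Fin (m+1))) i.val) ∘
          (optEquiv k j) =
        (fun o : Option (Finset.univ.erase j : Finset (Fin k)) =>
          Option.elim o (∑ i, p i) (fun i => p i.val)) := by
      funext o
      cases o with
      | none =>
        show (Fin.snoc p (∑ i, p i) : Fin (k+1) → EuclideanSpace ℝ (Fin (m+1)))
          (Fin.last k) = (∑ i, p i)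
        exact Fin.snoc_last _ _
      | some i =>
        show (Fin.snoc p (∑ i, p i) : Fin (k+1) → EuclideanSpace ℝ (Fin (m+1)))
          ((i.1 : Fin k).castSucc) = p i.1
        exact Fin.snoc_castSucc _ _ _
    rw [hfam]
    exact li_option_sum p hp j

section ContinuityAux

variable {X : Type*} [TopologicalSpace X] {n : ℕ}

lemma continuous_euc {f : X → (Fin n → ℝ)} (h : Continuous f) :
    Continuous (fun x => (WithLp.toLp 2 (f x) : EuclideanSpace ℝ (Fin n))) :=
  (PiLp.continuousLinearEquiv 2 ℝ (fun _ : Fin n => ℝ)).symm.continuous.comp h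

lemma continuous_euc' {f : X → EuclideanSpace ℝ (Fin n)} (h : Continuous f) :
    Continuous (fun x => (f x : Fin n → ℝ)) :=
  (PiLp.continuousLinearEquiv 2 ℝ (fun _ : Fin n => ℝ)).continuous.comp h

lemma continuous_euc_apply {f : X → EuclideanSpace ℝ (Fin n)} (h : Continuous f)
    (j : Fin n) : Continuous (fun x => f x j) :=
  (continuous_apply j).comp (continuous_euc' h)

lemma continuous_matOf {k m : ℕ} (w : Fin (m+1) → EuclideanSpace ℝ (Fin (m+1))) :
    Continuous (fun p : Fin k → EuclideanSpace ℝ (Fin (m+1)) => matOf k m p w) := by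
  apply continuous_matrix
  intro j i
  show Continuous fun p => gvec k m p w i j
  by_cases h : (i : ℕ) < k
  · simp only [gvec, dif_pos h]
    exact continuous_euc_apply (continuous_apply (⟨(i:ℕ), h⟩ : Fin k)) j
  · simp only [gvec, dif_neg h]
    exact continuous_const

lemma continuous_matInv {k m : ℕ} (w : Fin (m+1) → EuclideanSpace ℝ (Fin (m+1)))
    {P : X → Fin k → EuclideanSpace ℝ (Fin (m+1))} (hP : Continuous P)
    (hne : ∀ x, (matOf k m (P x) w).det ≠ 0) :
    Continuous (fun x => (matOf k m (P x) w)⁻¹) := by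
  have hA : Continuous fun x => matOf k m (P x) w := (continuous_matOf w).comp hP
  have heq : (fun x => (matOf k m (P x) w)⁻¹) =
      fun x => ((matOf k m (P x) w).det)⁻¹ • (matOf k m (P x) w).adjugate := by
    funext x
    rw [Matrix.inv_def, Ring.inverse_eq_inv]
  rw [heq]
  exact (hA.matrix_det.inv₀ hne).smul hA.matrix_adjugate

end ContinuityAux

/-- The trivializing neighborhood. -/
def Uset (k m : ℕ) (w : Fin (m+1) → EuclideanSpace ℝ (Fin (m+1))) :
    Set (genConfig k k (Set.univ : Set (EuclideanSpace ℝ (Fin (m+1))))) :=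
  {r | (matOf k m r.val w).det ≠ 0}

/-- The model fiber. -/
def fiberSet (k m : ℕ) (hkn : k ≤ m + 1) : Set (EuclideanSpace ℝ (Fin (m+1))) :=
  (Set.univ : Set (EuclideanSpace ℝ (Fin (m+1)))) \
    QSet (k-1) k Set.univ
      (fun i : Fin k => EuclideanSpace.single (Fin.castLE hkn i) 1)

/-- Forward map of the trivialization. -/
def trivFwd (k m : ℕ) (hk1 : 1 ≤ k) (hkn : k ≤ m + 1)
    (w : Fin (m+1) → EuclideanSpace ℝ (Fin (m+1)))
    (x : ↥(forgetLast ⁻¹' Uset k m w)) :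
    ↥(Uset k m w) × ↥(fiberSet k m hkn) :=
  (⟨forgetLast x.val, x.prop⟩,
   ⟨(WithLp.toLp 2 ((matOf k m (fun i => x.val.val i.castSucc) w)⁻¹ *ᵥ x.val.val (Fin.last k)) :
      EuclideanSpace ℝ (Fin (m+1))),
    (fiber_iff hkn hk1 x.val.val w (li_of_mem (forget_mem x.val.prop)) x.prop).mp
      x.val.prop⟩)

lemma trivInv_mem {k m : ℕ} (hk1 : 1 ≤ k) (hkn : k ≤ m + 1)
    (w : Fin (m+1) → EuclideanSpace ℝ (Fin (m+1)))
    (p : Fin k → EuclideanSpace ℝ (Fin (m+1)))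
    (hpW : p ∈ genConfig k k (Set.univ : Set (EuclideanSpace ℝ (Fin (m+1)))))
    (hdet : (matOf k m p w).det ≠ 0)
    (y : EuclideanSpace ℝ (Fin (m+1))) (hy : y ∈ fiberSet k m hkn) :
    (Fin.snoc p (WithLp.toLp 2 ((matOf k m p w) *ᵥ y) : EuclideanSpace ℝ (Fin (m+1))) :
        Fin (k+1) → EuclideanSpace ℝ (Fin (m+1))) ∈
      genConfig k (k+1) (Set.univ : Set (EuclideanSpace ℝ (Fin (m+1)))) := by
  set x : Fin (k+1) → EuclideanSpace ℝ (Fin (m+1)) :=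
    Fin.snoc p (WithLp.toLp 2 ((matOf k m p w) *ᵥ y) : EuclideanSpace ℝ (Fin (m+1))) with hx
  have hinit : (fun i : Fin k => x i.castSucc) = p :=
    funext fun i => Fin.snoc_castSucc _ _ i
  refine (fiber_iff hkn hk1 x w ?_ ?_).mpr ?_
  · rw [hinit]; exact li_of_mem hpW
  · rw [hinit]; exact hdet
  · rw [hinit]
    have hlast : x (Fin.last k) =
        (WithLp.toLp 2 ((matOf k m p w) *ᵥ y) : EuclideanSpace ℝ (Fin (m+1))) := Fin.snoc_last _ _
    rw [hlast]
    have h2 : (WithLp.toLp 2 ((matOf k m p w)⁻¹ *ᵥ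
        (WithLp.toLp 2 ((matOf k m p w) *ᵥ y) : EuclideanSpace ℝ (Fin (m+1)))) :
        EuclideanSpace ℝ (Fin (m+1))) = y := by
      rw [WithLp.ofLp_toLp, Matrix.mulVec_mulVec,
        Matrix.nonsing_inv_mul _ (isUnit_iff_ne_zero.mpr hdet),
        Matrix.one_mulVec, WithLp.toLp_ofLp]
    rw [h2]
    exact hy

lemma trivInv_mem2 {k m : ℕ}
    (w : Fin (m+1) → EuclideanSpace ℝ (Fin (m+1)))
    (p : Fin k → EuclideanSpace ℝ (Fin (m+1)))
    (v : EuclideanSpace ℝ (Fin (m+1))) (hdet : (matOf k m p w).det ≠ 0)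
    (z : genConfig k (k+1) (Set.univ : Set (EuclideanSpace ℝ (Fin (m+1)))))
    (hz : z.val = Fin.snoc p v) :
    forgetLast z ∈ Uset k m w := by
  show (matOf k m (fun i => z.val i.castSucc) w).det ≠ 0
  have h1 : (fun i : Fin k => z.val i.castSucc) = p := by
    funext i
    rw [hz]
    exact Fin.snoc_castSucc _ _ i
  rw [h1]
  exact hdet

/-- Inverse map of the trivialization. -/
def trivInv (k m : ℕ) (hk1 : 1 ≤ k) (hkn : k ≤ m + 1)
    (w : Fin (m+1) → EuclideanSpace ℝ (Fin (m+1)))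
    (y : ↥(Uset k m w) × ↥(fiberSet k m hkn)) :
    ↥(forgetLast ⁻¹' Uset k m w) :=
  ⟨⟨Fin.snoc y.1.val.val (WithLp.toLp 2 ((matOf k m y.1.val.val w) *ᵥ y.2.val) :
      EuclideanSpace ℝ (Fin (m+1))),
    trivInv_mem hk1 hkn w y.1.val.val y.1.val.prop y.1.prop y.2.val y.2.prop⟩,
   trivInv_mem2 w y.1.val.val _ y.1.prop _ rfl⟩

lemma triv_left_inv (k m : ℕ) (hk1 : 1 ≤ k) (hkn : k ≤ m + 1)
    (w : Fin (m+1) → EuclideanSpace ℝ (Fin (m+1)))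
    (x : ↥(forgetLast ⁻¹' Uset k m w)) :
    trivInv k m hk1 hkn w (trivFwd k m hk1 hkn w x) = x := by
  apply Subtype.ext
  apply Subtype.ext
  show Fin.snoc (fun i => x.val.val i.castSucc)
    (WithLp.toLp 2 ((matOf k m (fun i => x.val.val i.castSucc) w) *ᵥ
      ((matOf k m (fun i => x.val.val i.castSucc) w)⁻¹ *ᵥ x.val.val (Fin.last k))) :
      EuclideanSpace ℝ (Fin (m+1))) = x.val.val
  have hdet : (matOf k m (fun i => x.val.val i.castSucc) w).det ≠ 0 := x.prop
  have h1 : (WithLp.toLp 2 ((matOf k m (fun i => x.val.val i.castSucc) w) *ᵥ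
      ((matOf k m (fun i => x.val.val i.castSucc) w)⁻¹ *ᵥ x.val.val (Fin.last k))) :
      EuclideanSpace ℝ (Fin (m+1))) = x.val.val (Fin.last k) := by
    rw [Matrix.mulVec_mulVec, Matrix.mul_nonsing_inv _ (isUnit_iff_ne_zero.mpr hdet),
      Matrix.one_mulVec, WithLp.toLp_ofLp]
  rw [h1]
  exact Fin.snoc_init_self x.val.val

lemma triv_right_inv (k m : ℕ) (hk1 : 1 ≤ k) (hkn : k ≤ m + 1)
    (w : Fin (m+1) → EuclideanSpace ℝ (Fin (m+1)))
    (y : ↥(Uset k m w) × ↥(fiberSet k m hkn)) :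
    trivFwd k m hk1 hkn w (trivInv k m hk1 hkn w y) = y := by
  have hdet : (matOf k m y.1.val.val w).det ≠ 0 := y.1.prop
  have hinit : (fun i : Fin k =>
      (Fin.snoc y.1.val.val (WithLp.toLp 2 ((matOf k m y.1.val.val w) *ᵥ y.2.val) :
        EuclideanSpace ℝ (Fin (m+1))) : Fin (k+1) → EuclideanSpace ℝ (Fin (m+1)))
        i.castSucc) = y.1.val.val :=
    funext fun i => Fin.snoc_castSucc _ _ i
  have h1 : (trivFwd k m hk1 hkn w (trivInv k m hk1 hkn w y)).1 = y.1 := by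
    apply Subtype.ext
    apply Subtype.ext
    exact hinit
  have h2 : (trivFwd k m hk1 hkn w (trivInv k m hk1 hkn w y)).2 = y.2 := by
    apply Subtype.ext
    show (WithLp.toLp 2 ((matOf k m (fun i =>
        (Fin.snoc y.1.val.val (WithLp.toLp 2 ((matOf k m y.1.val.val w) *ᵥ y.2.val) :
          EuclideanSpace ℝ (Fin (m+1))) : Fin (k+1) → EuclideanSpace ℝ (Fin (m+1)))
          i.castSucc) w)⁻¹ *ᵥ
        (Fin.snoc y.1.val.val (WithLp.toLp 2 ((matOf k m y.1.val.val w) *ᵥ y.2.val) :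
          EuclideanSpace ℝ (Fin (m+1))) : Fin (k+1) → EuclideanSpace ℝ (Fin (m+1)))
          (Fin.last k)) : EuclideanSpace ℝ (Fin (m+1))) = y.2.val
    rw [hinit]
    have hlast : (Fin.snoc y.1.val.val (WithLp.toLp 2 ((matOf k m y.1.val.val w) *ᵥ y.2.val) :
        EuclideanSpace ℝ (Fin (m+1))) : Fin (k+1) → EuclideanSpace ℝ (Fin (m+1)))
        (Fin.last k) = (WithLp.toLp 2 ((matOf k m y.1.val.val w) *ᵥ y.2.val) :
        EuclideanSpace ℝ (Fin (m+1))) := Fin.snoc_last _ _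
    rw [hlast, WithLp.ofLp_toLp, Matrix.mulVec_mulVec,
      Matrix.nonsing_inv_mul _ (isUnit_iff_ne_zero.mpr hdet), Matrix.one_mulVec,
      WithLp.toLp_ofLp]
  exact Prod.ext h1 h2

lemma continuous_trivFwd (k m : ℕ) (hk1 : 1 ≤ k) (hkn : k ≤ m + 1)
    (w : Fin (m+1) → EuclideanSpace ℝ (Fin (m+1))) :
    Continuous (trivFwd k m hk1 hkn w) := by
  have hval : Continuous fun x : ↥(forgetLast ⁻¹' Uset k m w) => x.val.val :=
    continuous_subtype_val.comp continuous_subtype_val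
  have hP : Continuous fun x : ↥(forgetLast ⁻¹' Uset k m w) =>
      (fun i : Fin k => x.val.val i.castSucc) :=
    continuous_pi fun i => (continuous_apply i.castSucc).comp hval
  apply Continuous.prodMk
  · apply Continuous.subtype_mk
    apply Continuous.subtype_mk
    exact hP
  · apply Continuous.subtype_mk
    apply continuous_euc
    apply Continuous.matrix_mulVec
    · exact continuous_matInv w hP fun x => x.prop
    · exact continuous_euc' ((continuous_apply (Fin.last k)).comp hval)

lemma continuous_trivInv (k m : ℕ) (hk1 : 1 ≤ k) (hkn : k ≤ m + 1)
    (w : Fin (m+1) → EuclideanSpace ℝ (Fin (m+1))) :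
    Continuous (trivInv k m hk1 hkn w) := by
  have hp : Continuous fun y : ↥(Uset k m w) × ↥(fiberSet k m hkn) => y.1.val.val :=
    continuous_subtype_val.comp (continuous_subtype_val.comp continuous_fst)
  have hy : Continuous fun y : ↥(Uset k m w) × ↥(fiberSet k m hkn) => y.2.val :=
    continuous_subtype_val.comp continuous_snd
  apply Continuous.subtype_mk
  apply Continuous.subtype_mk
  apply continuous_pi
  intro t
  rcases Fin.lastCases (n := k)
    (motive := fun t => t = Fin.last k ∨ ∃ j : Fin k, t = j.castSucc)
    (Or.inl rfl) (fun j => Or.inr ⟨j, rfl⟩) t with ht | ⟨j, ht⟩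
  · subst ht
    simp only [Fin.snoc_last]
    apply continuous_euc
    exact Continuous.matrix_mulVec ((continuous_matOf w).comp hp) (continuous_euc' hy)
  · subst ht
    simp only [Fin.snoc_castSucc]
    exact (continuous_apply j).comp hp

/-- for `k = m` or `k = m+1`, the projection
`π : W_{k,k+1}(ℝ^{m+1}) → W_{k,k}(ℝ^{m+1})` forgetting the last entry is a locally trivial
fiber bundle with fiber `ℝ^{m+1} − Q_{k−1,k}(ℝ^{m+1})_{b_k}`, where `b_k = (e_1,...,e_k)`,
and this fiber bundle admits a cross-section. -/
theorem forgetLast_isFiberBundle_euclidean (m k : ℕ) (hm : 1 ≤ m) (hk : k = m ∨ k = m + 1) :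
    (∀ q : genConfig k k (Set.univ : Set (EuclideanSpace ℝ (Fin (m + 1)))),
      ∃ U : Set (genConfig k k (Set.univ : Set (EuclideanSpace ℝ (Fin (m + 1))))),
        IsOpen U ∧ q ∈ U ∧
        ∃ h : (forgetLast ⁻¹' U) ≃ₜ
            U × ((Set.univ : Set (EuclideanSpace ℝ (Fin (m + 1)))) \
              QSet (k - 1) k (Set.univ : Set (EuclideanSpace ℝ (Fin (m + 1))))
                (fun i : Fin k =>
                  EuclideanSpace.single (Fin.castLE (show k ≤ m + 1 by omega) i) 1) :
                  Set (EuclideanSpace ℝ (Fin (m + 1)))),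
          ∀ x, ((h x).1 : genConfig k k (Set.univ : Set (EuclideanSpace ℝ (Fin (m + 1))))) =
            forgetLast x.val) ∧
    ∃ f : C((genConfig k k (Set.univ : Set (EuclideanSpace ℝ (Fin (m + 1))))),
        (genConfig k (k + 1) (Set.univ : Set (EuclideanSpace ℝ (Fin (m + 1)))))),
      Continuous f ∧ ∀ p, forgetLast (f p) = p := by
  have hk1 : 1 ≤ k := by omega
  have hkn : k ≤ m + 1 := by omega
  constructor
  · intro q
    obtain ⟨w, hw⟩ := exists_w hkn q.val (li_of_mem q.prop)
    refine ⟨Uset k m w, ?_, hw, ?_⟩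
    · have hcont : Continuous fun r :
          genConfig k k (Set.univ : Set (EuclideanSpace ℝ (Fin (m+1)))) =>
          (matOf k m r.val w).det :=
        Continuous.matrix_det ((continuous_matOf w).comp continuous_subtype_val)
      exact isOpen_compl_singleton.preimage hcont
    · exact ⟨⟨⟨trivFwd k m hk1 hkn w, trivInv k m hk1 hkn w,
        triv_left_inv k m hk1 hkn w, triv_right_inv k m hk1 hkn w⟩,
        continuous_trivFwd k m hk1 hkn w, continuous_trivInv k m hk1 hkn w⟩,
        fun x => rfl⟩
  · have hg : Continuous fun p :
        genConfig k k (Set.univ : Set (EuclideanSpace ℝ (Fin (m+1)))) =>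
        (Fin.snoc p.val (∑ i, p.val i) : Fin (k+1) → EuclideanSpace ℝ (Fin (m+1))) := by
      apply continuous_pi
      intro t
      rcases Fin.lastCases (n := k)
        (motive := fun t => t = Fin.last k ∨ ∃ j : Fin k, t = j.castSucc)
        (Or.inl rfl) (fun j => Or.inr ⟨j, rfl⟩) t with ht | ⟨j, ht⟩
      · subst ht
        simp only [Fin.snoc_last]
        exact continuous_finset_sum _ fun i _ =>
          (continuous_apply i).comp continuous_subtype_val
      · subst ht
        simp only [Fin.snoc_castSucc]
        exact (continuous_apply j).comp continuous_subtype_val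
    refine ⟨⟨fun p => ⟨Fin.snoc p.val (∑ i, p.val i),
      snoc_sum_mem p.val (li_of_mem p.prop)⟩, hg.subtype_mk _⟩, (hg.subtype_mk _ : _), ?_⟩
    intro p
    apply Subtype.ext
    funext i
    show (Fin.snoc p.val (∑ i, p.val i) : Fin (k+1) → EuclideanSpace ℝ (Fin (m+1)))
      i.castSucc = p.val i
    exact Fin.snoc_castSucc _ _ i
end
end
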